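/- arXiv:0802.1691 — 4 statements merged into one kernel-verified Lean document; each statement's English description precedes it below -/
import Mathlib

section
/- Let E₁, E₂, E₃ be finite-dimensional complex normed spaces and b : E₁ × E₂ → E₃ a bilinear map (so that the Leibniz rule holds for derivatives of products). Let f₁ ∈ C^∞(ℝ^d \ {0}; E₁), f₂ ∈ C^∞(ℝ^d \ {0}; E₂), and set f₃(ξ) = b(f₁(ξ), f₂(ξ)). Then for every integer n ≥ 0 and every ζ = ξ + iη with ξ ∈ ℝ^d \ {0}, η ∈ ℝ^d: b(f̃₁⁽ⁿ⁾(ζ), f̃₂⁽ⁿ⁾(ζ)) = f̃₃⁽ⁿ⁾(ζ) + ρ⁽ⁿ⁾(ξ,η), where ρ⁽ⁿ⁾(ξ,η) = ∑ (i^{|α+β|}/(α!β!)) b(∂_ξ^α f₁(ξ), ∂_ξ^β f₂(ξ)) η^{α+β}, the sum being over pairs of multi-indices α, β with |α| ≤ n, |β| ≤ n and n < |α+β| ≤ 2n. In particular, for ξ ranging in a compact subset K ⊂ ℝ^d \ {0} and |η| ≤ 1 there is a constant C with |ρ⁽ⁿ⁾(ξ,η)| ≤ C |η|^{n+1}. 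-/
/-- Partial derivative in the `i`-th coordinate direction. -/
noncomputable def pd {E : Type*} [NormedAddCommGroup E] [NormedSpace ℝ E] {m : ℕ}
    (i : Fin m) (f : EuclideanSpace ℝ (Fin m) → E) : EuclideanSpace ℝ (Fin m) → E :=
  fun x => fderiv ℝ f x (EuclideanSpace.single i 1)

/-- Iterated partial derivative `∂^α` associated with the multi-index `α`. -/
noncomputable def mpd {E : Type*} [NormedAddCommGroup E] [NormedSpace ℝ E] {m : ℕ}
    (α : Fin m → ℕ) (f : EuclideanSpace ℝ (Fin m) → E) : EuclideanSpace ℝ (Fin m) → E :=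
  (List.finRange m).foldr (fun i g => (pd i)^[α i] g) f

/-- The `n`-th order complex extension
`f̃⁽ⁿ⁾(ξ+iη) = ∑_{|α| ≤ n} (i^{|α|}/α!) ∂_ξ^α f(ξ) η^α`. -/
noncomputable def cext {E : Type*} [NormedAddCommGroup E] [NormedSpace ℂ E] {m : ℕ}
    (n : ℕ) (f : EuclideanSpace ℝ (Fin m) → E) (ξ η : EuclideanSpace ℝ (Fin m)) : E :=
  ∑ α ∈ Finset.univ.filter (fun α : Fin m → Fin (n + 1) => ∑ i, (α i : ℕ) ≤ n),
    ((Complex.I ^ (∑ i, (α i : ℕ)) * ∏ i, (η i : ℂ) ^ (α i : ℕ)) /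
        (∏ i, ((α i : ℕ).factorial : ℂ))) • mpd (fun i => (α i : ℕ)) f ξ

/-- The remainder `ρ⁽ⁿ⁾(ξ,η) = ∑_{|α|,|β| ≤ n, n < |α+β|} (i^{|α+β|}/(α!β!))
b(∂^α f₁(ξ), ∂^β f₂(ξ)) η^{α+β}`. -/
noncomputable def cextRho {E₁ E₂ E₃ : Type*}
    [NormedAddCommGroup E₁] [NormedSpace ℂ E₁] [NormedAddCommGroup E₂] [NormedSpace ℂ E₂]
    [NormedAddCommGroup E₃] [NormedSpace ℂ E₃] {m : ℕ}
    (b : E₁ →L[ℂ] E₂ →L[ℂ] E₃) (n : ℕ)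
    (f₁ : EuclideanSpace ℝ (Fin m) → E₁) (f₂ : EuclideanSpace ℝ (Fin m) → E₂)
    (ξ η : EuclideanSpace ℝ (Fin m)) : E₃ :=
  ∑ p ∈ Finset.univ.filter
      (fun p : (Fin m → Fin (n + 1)) × (Fin m → Fin (n + 1)) =>
        (∑ i, (p.1 i : ℕ)) ≤ n ∧ (∑ i, (p.2 i : ℕ)) ≤ n ∧
          n < (∑ i, (p.1 i : ℕ)) + ∑ i, (p.2 i : ℕ)),
    ((Complex.I ^ ((∑ i, (p.1 i : ℕ)) + ∑ i, (p.2 i : ℕ)) *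
        ∏ i, (η i : ℂ) ^ ((p.1 i : ℕ) + (p.2 i : ℕ))) /
      ((∏ i, ((p.1 i : ℕ).factorial : ℂ)) * ∏ i, ((p.2 i : ℕ).factorial : ℂ))) •
        b (mpd (fun i => (p.1 i : ℕ)) f₁ ξ) (mpd (fun i => (p.2 i : ℕ)) f₂ ξ)

open Finset

section Aux

variable {m : ℕ} {E E' : Type*} [NormedAddCommGroup E] [NormedSpace ℝ E]
  {U : Set (EuclideanSpace ℝ (Fin m))}

noncomputable def Dl (δ : Fin m → ℕ) (l : List (Fin m))
    (f : EuclideanSpace ℝ (Fin m) → E) : EuclideanSpace ℝ (Fin m) → E :=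
  l.foldr (fun i g => (pd i)^[δ i] g) f

theorem mpd_eq_Dl (δ : Fin m → ℕ) (f : EuclideanSpace ℝ (Fin m) → E) :
    mpd δ f = Dl δ (List.finRange m) f := rfl

theorem Dl_cons (δ : Fin m → ℕ) (i : Fin m) (l : List (Fin m)) (f : EuclideanSpace ℝ (Fin m) → E) :
    Dl δ (i :: l) f = (pd i)^[δ i] (Dl δ l f) := rfl

theorem pd_contDiffOn (hU : IsOpen U) {f : EuclideanSpace ℝ (Fin m) → E}
    (hf : ContDiffOn ℝ (⊤ : ℕ∞) f U) (i : Fin m) : ContDiffOn ℝ (⊤ : ℕ∞) (pd i f) U := by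
  have h1 : ContDiffOn ℝ (⊤ : ℕ∞) (fderiv ℝ f) U := hf.fderiv_of_isOpen hU (by simp)
  exact h1.clm_apply contDiffOn_const

theorem pd_iter_contDiffOn (hU : IsOpen U) {f : EuclideanSpace ℝ (Fin m) → E}
    (hf : ContDiffOn ℝ (⊤ : ℕ∞) f U) (i : Fin m) (k : ℕ) : ContDiffOn ℝ (⊤ : ℕ∞) ((pd i)^[k] f) U := by
  induction k with
  | zero => exact hf
  | succ k ih => rw [Function.iterate_succ_apply']; exact pd_contDiffOn hU ih i

theorem Dl_contDiffOn (hU : IsOpen U) {f : EuclideanSpace ℝ (Fin m) → E}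
    (hf : ContDiffOn ℝ (⊤ : ℕ∞) f U) (δ : Fin m → ℕ) :
    ∀ l : List (Fin m), ContDiffOn ℝ (⊤ : ℕ∞) (Dl δ l f) U := by
  intro l
  induction l with
  | nil => exact hf
  | cons i l ih => rw [Dl_cons]; exact pd_iter_contDiffOn hU ih i (δ i)

theorem mpd_contDiffOn (hU : IsOpen U) {f : EuclideanSpace ℝ (Fin m) → E}
    (hf : ContDiffOn ℝ (⊤ : ℕ∞) f U) (δ : Fin m → ℕ) : ContDiffOn ℝ (⊤ : ℕ∞) (mpd δ f) U :=
  Dl_contDiffOn hU hf δ _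

theorem pd_congrOn (hU : IsOpen U) {g₁ g₂ : EuclideanSpace ℝ (Fin m) → E}
    (h : Set.EqOn g₁ g₂ U) (i : Fin m) : Set.EqOn (pd i g₁) (pd i g₂) U := fun x hx => by
  unfold pd
  rw [Filter.EventuallyEq.fderiv_eq (h.eventuallyEq_of_mem (hU.mem_nhds hx))]

theorem pd_iter_congrOn (hU : IsOpen U) {g₁ g₂ : EuclideanSpace ℝ (Fin m) → E}
    (h : Set.EqOn g₁ g₂ U) (i : Fin m) (k : ℕ) :
    Set.EqOn ((pd i)^[k] g₁) ((pd i)^[k] g₂) U := by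
  induction k with
  | zero => exact h
  | succ k ih =>
    rw [Function.iterate_succ_apply', Function.iterate_succ_apply']
    exact pd_congrOn hU ih i

theorem Dl_congr_idx {δ₁ δ₂ : Fin m → ℕ} {f : EuclideanSpace ℝ (Fin m) → E} :
    ∀ l : List (Fin m), (∀ i ∈ l, δ₁ i = δ₂ i) → Dl δ₁ l f = Dl δ₂ l f := by
  intro l
  induction l with
  | nil => intro _; rfl
  | cons i l ih =>
    intro h
    rw [Dl_cons, Dl_cons, ih (fun j hj => h j (List.mem_cons_of_mem _ hj)),
      h i List.mem_cons_self]

end Aux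
open Finset
section B
variable {m : ℕ} {E₁ E₂ E₃ : Type*}
  [NormedAddCommGroup E₁] [NormedSpace ℂ E₁] [NormedAddCommGroup E₂] [NormedSpace ℂ E₂]
  [NormedAddCommGroup E₃] [NormedSpace ℂ E₃]
  (b : E₁ →L[ℂ] E₂ →L[ℂ] E₃)

noncomputable def rb : E₁ →L[ℝ] E₂ →L[ℝ] E₃ :=
  (ContinuousLinearMap.restrictScalarsL ℂ E₂ E₃ ℝ ℝ).comp (b.restrictScalars ℝ)

theorem rb_apply (u : E₁) (v : E₂) : rb b u v = b u v := rfl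
end B

section C
variable {m : ℕ} {E E₁ E₂ E₃ : Type*}
  [NormedAddCommGroup E] [NormedSpace ℂ E]
  [NormedAddCommGroup E₁] [NormedSpace ℂ E₁] [NormedAddCommGroup E₂] [NormedSpace ℂ E₂]
  [NormedAddCommGroup E₃] [NormedSpace ℂ E₃]
  (b : E₁ →L[ℂ] E₂ →L[ℂ] E₃)
  {U : Set (EuclideanSpace ℝ (Fin m))}

theorem pd_sum {ι : Type*} {s : Finset ι} {F : ι → EuclideanSpace ℝ (Fin m) → E}
    {x : EuclideanSpace ℝ (Fin m)} (h : ∀ t ∈ s, DifferentiableAt ℝ (F t) x) (i : Fin m) :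
    pd i (fun y => ∑ t ∈ s, F t y) x = ∑ t ∈ s, pd i (F t) x := by
  unfold pd; rw [fderiv_fun_sum h]; simp

theorem pd_smul {F : EuclideanSpace ℝ (Fin m) → E} {x : EuclideanSpace ℝ (Fin m)}
    (c : ℂ) (h : DifferentiableAt ℝ F x) (i : Fin m) :
    pd i (fun y => c • F y) x = c • pd i F x := by
  unfold pd; rw [fderiv_fun_const_smul h c]; rfl

theorem prod_contDiffOn {g₁ : EuclideanSpace ℝ (Fin m) → E₁} {g₂ : EuclideanSpace ℝ (Fin m) → E₂}
    (h₁ : ContDiffOn ℝ (⊤ : ℕ∞) g₁ U) (h₂ : ContDiffOn ℝ (⊤ : ℕ∞) g₂ U) :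
    ContDiffOn ℝ (⊤ : ℕ∞) (fun y => b (g₁ y) (g₂ y)) U := by
  have : ContDiffOn ℝ (⊤ : ℕ∞) (fun y => rb b (g₁ y)) U := (rb b).contDiff.comp_contDiffOn h₁
  exact this.clm_apply h₂

theorem pd_leibniz (hU : IsOpen U) {g₁ : EuclideanSpace ℝ (Fin m) → E₁}
    {g₂ : EuclideanSpace ℝ (Fin m) → E₂}
    (h₁ : ContDiffOn ℝ (⊤ : ℕ∞) g₁ U) (h₂ : ContDiffOn ℝ (⊤ : ℕ∞) g₂ U) (i : Fin m)
    {x : EuclideanSpace ℝ (Fin m)} (hx : x ∈ U) :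
    pd i (fun y => b (g₁ y) (g₂ y)) x = b (pd i g₁ x) (g₂ x) + b (g₁ x) (pd i g₂ x) := by
  have d₁ : HasFDerivAt g₁ (fderiv ℝ g₁ x) x :=
    ((h₁.contDiffAt (hU.mem_nhds hx)).differentiableAt (by simp)).hasFDerivAt
  have d₂ : HasFDerivAt g₂ (fderiv ℝ g₂ x) x :=
    ((h₂.contDiffAt (hU.mem_nhds hx)).differentiableAt (by simp)).hasFDerivAt
  have hc : HasFDerivAt (fun y => rb b (g₁ y)) ((rb b).comp (fderiv ℝ g₁ x)) x :=
    ((rb b).hasFDerivAt).comp x d₁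
  have key := (hc.clm_apply d₂).fderiv
  show (fderiv ℝ (fun y => b (g₁ y) (g₂ y)) x) (EuclideanSpace.single i 1) = _
  rw [show (fun y => b (g₁ y) (g₂ y)) = fun y => rb b (g₁ y) (g₂ y) from rfl, key]
  simp only [ContinuousLinearMap.add_apply, ContinuousLinearMap.comp_apply,
    ContinuousLinearMap.flip_apply]
  rw [add_comm]
  rfl
end C

section D
variable {m : ℕ} {E E₁ E₂ E₃ : Type*}
  [NormedAddCommGroup E] [NormedSpace ℂ E]
  [NormedAddCommGroup E₁] [NormedSpace ℂ E₁] [NormedAddCommGroup E₂] [NormedSpace ℂ E₂]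
  [NormedAddCommGroup E₃] [NormedSpace ℂ E₃]
  (b : E₁ →L[ℂ] E₂ →L[ℂ] E₃)
  {U : Set (EuclideanSpace ℝ (Fin m))}

theorem smul_sum_contDiffOn {ι : Type*} {s : Finset ι} {c : ι → ℂ}
    {F : ι → EuclideanSpace ℝ (Fin m) → E}
    (hF : ∀ t ∈ s, ContDiffOn ℝ (⊤ : ℕ∞) (F t) U) :
    ContDiffOn ℝ (⊤ : ℕ∞) (fun y => ∑ t ∈ s, c t • F t y) U := by
  apply ContDiffOn.sum
  intro t ht
  exact (hF t ht).const_smul (c t)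

theorem pd_iter_sum_smul (hU : IsOpen U) {ι : Type*} {s : Finset ι} {c : ι → ℂ}
    {F : ι → EuclideanSpace ℝ (Fin m) → E}
    (hF : ∀ t ∈ s, ContDiffOn ℝ (⊤ : ℕ∞) (F t) U) (i : Fin m) (k : ℕ) :
    ∀ x ∈ U, (pd i)^[k] (fun y => ∑ t ∈ s, c t • F t y) x
      = ∑ t ∈ s, c t • (pd i)^[k] (F t) x := by
  induction k with
  | zero => intro x hx; rfl
  | succ k ih =>
    intro x hx
    rw [Function.iterate_succ_apply']
    have e1 : pd i ((pd i)^[k] fun y => ∑ t ∈ s, c t • F t y) x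
        = pd i (fun y => ∑ t ∈ s, c t • (pd i)^[k] (F t) y) x :=
      pd_congrOn hU (fun y hy => ih y hy) i hx
    rw [e1, pd_sum (fun t ht => ((((pd_iter_contDiffOn hU (hF t ht) i k).const_smul
      (c t)).contDiffAt (hU.mem_nhds hx)).differentiableAt (by simp))) i]
    refine Finset.sum_congr rfl fun t ht => ?_
    rw [Function.iterate_succ_apply']
    exact pd_smul (c t) (((pd_iter_contDiffOn hU (hF t ht) i k).contDiffAt
      (hU.mem_nhds hx)).differentiableAt (by simp)) i


theorem pascal_sum {M : Type*} [AddCommMonoid M] [Module ℂ M] (k : ℕ) (T : ℕ → ℕ → M) :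
    ∑ j ∈ range (k+1), ((k.choose j : ℂ)) • (T (j+1) (k-j) + T j (k-j+1))
      = ∑ j ∈ range (k+2), (((k+1).choose j : ℂ)) • T j (k+1-j) := by
  have hL : ∑ j ∈ range (k+1), ((k.choose j : ℂ)) • (T (j+1) (k-j) + T j (k-j+1))
      = (∑ j ∈ range (k+1), ((k.choose j : ℂ)) • T (j+1) (k-j))
        + ∑ j ∈ range (k+1), ((k.choose j : ℂ)) • T j (k-j+1) := by
    simp [smul_add, Finset.sum_add_distrib]
  have hR : ∑ j ∈ range (k+2), (((k+1).choose j : ℂ)) • T j (k+1-j)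
      = ((∑ j ∈ range (k+1), ((k.choose j : ℂ)) • T (j+1) (k-j))
        + ∑ j ∈ range (k+1), ((k.choose (j+1) : ℂ)) • T (j+1) (k-j)) + T 0 (k+1) := by
    rw [Finset.sum_range_succ']
    simp only [Nat.choose_succ_succ, Nat.succ_sub_succ, Nat.choose_zero_right, Nat.cast_one,
      one_smul, Nat.cast_add, add_smul, Nat.sub_zero, Finset.sum_add_distrib]
  have hS2 : ∑ j ∈ range (k+1), ((k.choose j : ℂ)) • T j (k-j+1)
      = (∑ j ∈ range (k+1), ((k.choose (j+1) : ℂ)) • T (j+1) (k-j)) + T 0 (k+1) := by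
    rw [Finset.sum_range_succ' (fun j => ((k.choose j : ℂ)) • T j (k-j+1))]
    simp only [Nat.choose_zero_right, Nat.cast_one, one_smul, Nat.sub_zero]
    congr 1
    rw [Finset.sum_range_succ, Nat.choose_succ_self]
    simp only [Nat.cast_zero, zero_smul, add_zero]
    refine Finset.sum_congr rfl fun j hj => ?_
    rw [Finset.mem_range] at hj
    rw [show k - (j+1) + 1 = k - j by omega]
  rw [hL, hR, hS2, add_assoc]

theorem pd_iter_leibniz (hU : IsOpen U) {g₁ : EuclideanSpace ℝ (Fin m) → E₁}
    {g₂ : EuclideanSpace ℝ (Fin m) → E₂}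
    (h₁ : ContDiffOn ℝ (⊤ : ℕ∞) g₁ U) (h₂ : ContDiffOn ℝ (⊤ : ℕ∞) g₂ U) (i : Fin m) (k : ℕ) :
    ∀ x ∈ U, (pd i)^[k] (fun y => b (g₁ y) (g₂ y)) x
      = ∑ j ∈ range (k+1),
          ((k.choose j : ℂ)) • b ((pd i)^[j] g₁ x) ((pd i)^[k-j] g₂ x) := by
  induction k with
  | zero => intro x hx; simp
  | succ k ih =>
    intro x hx
    rw [Function.iterate_succ_apply']
    have e1 : pd i ((pd i)^[k] fun y => b (g₁ y) (g₂ y)) x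
        = pd i (fun y => ∑ j ∈ range (k+1),
            ((k.choose j : ℂ)) • b ((pd i)^[j] g₁ y) ((pd i)^[k-j] g₂ y)) x :=
      pd_congrOn hU (fun y hy => ih y hy) i hx
    have hsm : ∀ j, j ∈ range (k+1) → ContDiffOn ℝ (⊤ : ℕ∞)
        (fun y => b ((pd i)^[j] g₁ y) ((pd i)^[k-j] g₂ y)) U := fun j _ =>
      prod_contDiffOn b (pd_iter_contDiffOn hU h₁ i j) (pd_iter_contDiffOn hU h₂ i (k-j))
    have e2 : pd i (fun y => ∑ j ∈ range (k+1),
          ((k.choose j : ℂ)) • b ((pd i)^[j] g₁ y) ((pd i)^[k-j] g₂ y)) x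
        = ∑ j ∈ range (k+1), ((k.choose j : ℂ)) •
            pd i (fun y => b ((pd i)^[j] g₁ y) ((pd i)^[k-j] g₂ y)) x := by
      rw [pd_sum (fun j hj => (((((hsm j hj).const_smul ((k.choose j : ℂ)))).contDiffAt
        (hU.mem_nhds hx)).differentiableAt (by simp))) i]
      exact Finset.sum_congr rfl fun j hj =>
        pd_smul _ (((hsm j hj).contDiffAt (hU.mem_nhds hx)).differentiableAt (by simp)) i
    rw [e1, e2]
    have e3 : ∀ j ∈ range (k+1),
        ((k.choose j : ℂ)) • pd i (fun y => b ((pd i)^[j] g₁ y) ((pd i)^[k-j] g₂ y)) x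
        = ((k.choose j : ℂ)) • (b ((pd i)^[j+1] g₁ x) ((pd i)^[k-j] g₂ x)
            + b ((pd i)^[j] g₁ x) ((pd i)^[k-j+1] g₂ x)) := by
      intro j hj
      rw [pd_leibniz b hU (pd_iter_contDiffOn hU h₁ i j) (pd_iter_contDiffOn hU h₂ i (k-j)) i hx]
      rw [Function.iterate_succ_apply', Function.iterate_succ_apply']
    rw [Finset.sum_congr rfl e3]
    have := pascal_sum k (fun p q => b ((pd i)^[p] g₁ x) ((pd i)^[q] g₂ x))
    exact this

end D

section Main
variable {m : ℕ} {E₁ E₂ E₃ : Type*}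
  [NormedAddCommGroup E₁] [NormedSpace ℂ E₁] [NormedAddCommGroup E₂] [NormedSpace ℂ E₂]
  [NormedAddCommGroup E₃] [NormedSpace ℂ E₃]
  (b : E₁ →L[ℂ] E₂ →L[ℂ] E₃)
  {U : Set (EuclideanSpace ℝ (Fin m))}

open scoped Classical in
theorem Dl_leibniz (hU : IsOpen U) :
    ∀ (l : List (Fin m)), l.Nodup → ∀ (γ : Fin m → ℕ)
    (f₁ : EuclideanSpace ℝ (Fin m) → E₁) (f₂ : EuclideanSpace ℝ (Fin m) → E₂),
    ContDiffOn ℝ (⊤ : ℕ∞) f₁ U → ContDiffOn ℝ (⊤ : ℕ∞) f₂ U → ∀ x ∈ U,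
    Dl γ l (fun y => b (f₁ y) (f₂ y)) x
      = ∑ β ∈ Finset.univ.filter
          (fun β : (∀ i : Fin m, Fin (γ i + 1)) => ∀ j, j ∉ l → (β j : ℕ) = 0),
          (∏ i', ((γ i').choose (β i') : ℂ)) •
            b (Dl (fun i' => (β i' : ℕ)) l f₁ x) (Dl (fun i' => γ i' - (β i' : ℕ)) l f₂ x) := by
  intro l
  induction l with
  | nil =>
    intro _ γ f₁ f₂ h₁ h₂ x hx
    have hset : Finset.univ.filter
        (fun β : (∀ i : Fin m, Fin (γ i + 1)) => ∀ j, j ∉ ([] : List (Fin m)) → (β j : ℕ) = 0)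
        = {fun i => (0 : Fin (γ i + 1))} := by
      ext β
      simp only [Finset.mem_filter, Finset.mem_univ, true_and, Finset.mem_singleton,
        List.not_mem_nil, not_false_iff, forall_true_left]
      constructor
      · intro h; funext i; exact Fin.ext (by simpa using h i)
      · intro h j; rw [h]; rfl
    rw [hset, Finset.sum_singleton]
    simp [Dl]
  | cons i l ih =>
    intro hnd γ f₁ f₂ h₁ h₂ x hx
    have hil : i ∉ l := (List.nodup_cons.mp hnd).1
    have hndl : l.Nodup := (List.nodup_cons.mp hnd).2
    set S' := Finset.univ.filter
      (fun β : (∀ i : Fin m, Fin (γ i + 1)) => ∀ j, j ∉ l → (β j : ℕ) = 0) with hS'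
    have hEq : Set.EqOn (Dl γ l fun y => b (f₁ y) (f₂ y))
        (fun y => ∑ β ∈ S', (∏ i', ((γ i').choose (β i') : ℂ)) •
          b (Dl (fun i' => (β i' : ℕ)) l f₁ y) (Dl (fun i' => γ i' - (β i' : ℕ)) l f₂ y)) U :=
      fun y hy => ih hndl γ f₁ f₂ h₁ h₂ y hy
    rw [Dl_cons]
    have e1 : (pd i)^[γ i] (Dl γ l fun y => b (f₁ y) (f₂ y)) x
        = (pd i)^[γ i] (fun y => ∑ β ∈ S', (∏ i', ((γ i').choose (β i') : ℂ)) •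
          b (Dl (fun i' => (β i' : ℕ)) l f₁ y) (Dl (fun i' => γ i' - (β i' : ℕ)) l f₂ y)) x :=
      pd_iter_congrOn hU hEq i (γ i) hx
    rw [e1, pd_iter_sum_smul hU (fun β _ =>
      prod_contDiffOn b (Dl_contDiffOn hU h₁ _ l) (Dl_contDiffOn hU h₂ _ l)) i (γ i) x hx]
    have e2 : ∀ β ∈ S', (∏ i', ((γ i').choose (β i') : ℂ)) •
        (pd i)^[γ i] (fun y =>
          b (Dl (fun i' => (β i' : ℕ)) l f₁ y) (Dl (fun i' => γ i' - (β i' : ℕ)) l f₂ y)) x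
        = ∑ j ∈ Finset.range (γ i + 1),
            ((∏ i', ((γ i').choose (β i') : ℂ)) * ((γ i).choose j : ℂ)) •
              b ((pd i)^[j] (Dl (fun i' => (β i' : ℕ)) l f₁) x)
                ((pd i)^[γ i - j] (Dl (fun i' => γ i' - (β i' : ℕ)) l f₂) x) := by
      intro β hβ
      rw [pd_iter_leibniz b hU (Dl_contDiffOn hU h₁ _ l) (Dl_contDiffOn hU h₂ _ l) i (γ i) x hx,
        Finset.smul_sum]
      exact Finset.sum_congr rfl fun j hj => smul_smul _ _ _
    rw [Finset.sum_congr rfl e2, ← Finset.sum_product']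
    -- reindex
    refine Finset.sum_nbij'
      (i := fun p : (∀ i : Fin m, Fin (γ i + 1)) × ℕ =>
        Function.update p.1 i ⟨min p.2 (γ i), Nat.lt_succ_of_le (min_le_right _ _)⟩)
      (j := fun β => (Function.update β i 0, (β i : ℕ))) ?_ ?_ ?_ ?_ ?_
    · -- maps to
      rintro ⟨β, j⟩ hp
      rw [Finset.mem_product] at hp
      obtain ⟨hβ, hj⟩ := hp
      rw [hS', Finset.mem_filter] at hβ
      dsimp only
      rw [Finset.mem_filter]
      refine ⟨Finset.mem_univ _, fun j' hj' => ?_⟩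
      have hne : j' ≠ i := fun h => hj' (h ▸ List.mem_cons_self)
      have hnl : j' ∉ l := fun h => hj' (List.mem_cons_of_mem _ h)
      rw [Function.update_of_ne hne]
      exact hβ.2 j' hnl
    · -- maps back
      intro β' hβ'
      rw [Finset.mem_filter] at hβ'
      rw [Finset.mem_product, hS']
      constructor
      · rw [Finset.mem_filter]
        refine ⟨Finset.mem_univ _, fun j' hj' => ?_⟩
        show ((Function.update β' i 0 : ∀ i', Fin (γ i' + 1)) j' : ℕ) = 0
        by_cases h : j' = i
        · subst h; rw [Function.update_self]; rfl
        · rw [Function.update_of_ne h]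
          exact hβ'.2 j' (by simp [h, hj'])
      · exact Finset.mem_range.mpr (β' i).isLt
    · -- left inverse
      rintro ⟨β, j⟩ hp
      rw [Finset.mem_product] at hp
      obtain ⟨hβ, hj⟩ := hp
      rw [hS', Finset.mem_filter] at hβ
      rw [Finset.mem_range] at hj
      dsimp only
      have hβi : β i = 0 := Fin.ext (hβ.2 i hil)
      have hmin : min j (γ i) = j := min_eq_left (Nat.lt_succ_iff.mp hj)
      refine Prod.ext ?_ ?_
      · show Function.update (Function.update β i _) i 0 = β
        rw [Function.update_idem]
        conv_rhs => rw [← Function.update_eq_self i β]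
        rw [hβi]
      · show ((Function.update β i ⟨min j (γ i), _⟩ : ∀ i', Fin (γ i' + 1)) i : ℕ) = j
        rw [Function.update_self]
        exact hmin
    · -- right inverse
      intro β' _
      dsimp only
      show Function.update (Function.update β' i 0) i _ = β'
      rw [Function.update_idem]
      have : (⟨min (β' i : ℕ) (γ i), Nat.lt_succ_of_le (min_le_right _ _)⟩ :
          Fin (γ i + 1)) = β' i := Fin.ext (min_eq_left (Nat.lt_succ_iff.mp (β' i).isLt))
      rw [this, Function.update_eq_self]
    · -- values
      rintro ⟨β, j⟩ hp
      rw [Finset.mem_product] at hp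
      obtain ⟨hβ, hj⟩ := hp
      rw [hS', Finset.mem_filter] at hβ
      rw [Finset.mem_range, Nat.lt_succ_iff] at hj
      dsimp only
      set v : Fin (γ i + 1) := ⟨min j (γ i), Nat.lt_succ_of_le (min_le_right _ _)⟩ with hv
      have hvval : (v : ℕ) = j := min_eq_left hj
      have hβi0 : (β i : ℕ) = 0 := hβ.2 i hil
      have herase : ∏ x ∈ Finset.univ.erase i,
            (((γ x).choose ((Function.update β i v) x)) : ℂ)
          = ∏ x ∈ Finset.univ.erase i, (((γ x).choose (β x)) : ℂ) :=
        Finset.prod_congr rfl (fun j' hj' => by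
          rw [Function.update_of_ne (Finset.ne_of_mem_erase hj')])
      have hcoef : (∏ i', ((γ i').choose ((Function.update β i v) i') : ℂ))
          = (∏ i', ((γ i').choose (β i') : ℂ)) * ((γ i).choose j : ℂ) := by
        rw [← Finset.mul_prod_erase Finset.univ _ (Finset.mem_univ i),
          ← Finset.mul_prod_erase Finset.univ
            (fun i' => (((γ i').choose (β i')) : ℂ)) (Finset.mem_univ i)]
        rw [herase, Function.update_self, hvval, hβi0, Nat.choose_zero_right]
        push_cast
        ring
      have hupdi : ((Function.update β i v) i : ℕ) = j := by
        rw [Function.update_self]; exact hvval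
      have hd1 : Dl (fun i' => ((Function.update β i v) i' : ℕ)) (i :: l) f₁
          = (pd i)^[j] (Dl (fun i' => (β i' : ℕ)) l f₁) := by
        rw [Dl_cons, hupdi, Dl_congr_idx l (fun i' hi' => by
          have hne : i' ≠ i := by rintro rfl; exact hil hi'
          rw [Function.update_of_ne hne])]
      have hd2 : Dl (fun i' => γ i' - ((Function.update β i v) i' : ℕ)) (i :: l) f₂
          = (pd i)^[γ i - j] (Dl (fun i' => γ i' - (β i' : ℕ)) l f₂) := by
        rw [Dl_cons, hupdi, Dl_congr_idx l (fun i' hi' => by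
          have hne : i' ≠ i := by rintro rfl; exact hil hi'
          rw [Function.update_of_ne hne])]
      rw [hcoef, hd1, hd2]

end Main

theorem mpd_leibniz {m : ℕ} {E₁ E₂ E₃ : Type*}
    [NormedAddCommGroup E₁] [NormedSpace ℂ E₁] [NormedAddCommGroup E₂] [NormedSpace ℂ E₂]
    [NormedAddCommGroup E₃] [NormedSpace ℂ E₃]
    (b : E₁ →L[ℂ] E₂ →L[ℂ] E₃) {U : Set (EuclideanSpace ℝ (Fin m))}
    (hU : IsOpen U) (γ : Fin m → ℕ)
    {f₁ : EuclideanSpace ℝ (Fin m) → E₁} {f₂ : EuclideanSpace ℝ (Fin m) → E₂}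
    (h₁ : ContDiffOn ℝ (⊤ : ℕ∞) f₁ U) (h₂ : ContDiffOn ℝ (⊤ : ℕ∞) f₂ U)
    {x : EuclideanSpace ℝ (Fin m)} (hx : x ∈ U) :
    mpd γ (fun y => b (f₁ y) (f₂ y)) x
      = ∑ β : (∀ i : Fin m, Fin (γ i + 1)),
          (∏ i', ((γ i').choose (β i') : ℂ)) •
            b (mpd (fun i' => (β i' : ℕ)) f₁ x) (mpd (fun i' => γ i' - (β i' : ℕ)) f₂ x) := by
  rw [mpd_eq_Dl, Dl_leibniz b hU (List.finRange m) (List.nodup_finRange m) γ f₁ f₂ h₁ h₂ x hx,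
    Finset.filter_true_of_mem (fun β _ => fun j hj => absurd (List.mem_finRange j) hj)]
  simp only [← mpd_eq_Dl]

theorem coord_le_norm {m : ℕ} (x : EuclideanSpace ℝ (Fin m)) (i : Fin m) : |x i| ≤ ‖x‖ := by
  rw [EuclideanSpace.norm_eq]
  calc |x i| = Real.sqrt ((x i)^2) := (Real.sqrt_sq_eq_abs _).symm
  _ ≤ _ := by
      apply Real.sqrt_le_sqrt
      simpa [Real.norm_eq_abs, sq_abs] using
        Finset.single_le_sum (f := fun i => (x i)^2) (fun _ _ => sq_nonneg _) (Finset.mem_univ i)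


/-- **Product rule for complex extensions.**  For a bilinear map `b` on finite-dimensional
complex spaces and `f₃ = b(f₁, f₂)` with `f₁, f₂` smooth away from `ξ = 0`, one has
`b(f̃₁⁽ⁿ⁾, f̃₂⁽ⁿ⁾) = f̃₃⁽ⁿ⁾ + ρ⁽ⁿ⁾`, and on a compact `K ⊂ ℝ^d \ {0}` with `|η| ≤ 1`
the remainder obeys `|ρ⁽ⁿ⁾(ξ,η)| ≤ C |η|^{n+1}`. -/
theorem stmt_4 (d : ℕ) {E₁ E₂ E₃ : Type*}
    [NormedAddCommGroup E₁] [NormedSpace ℂ E₁] [NormedAddCommGroup E₂] [NormedSpace ℂ E₂]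
    [NormedAddCommGroup E₃] [NormedSpace ℂ E₃]
    [FiniteDimensional ℂ E₁] [FiniteDimensional ℂ E₂] [FiniteDimensional ℂ E₃]
    (b : E₁ →L[ℂ] E₂ →L[ℂ] E₃)
    (f₁ : EuclideanSpace ℝ (Fin d) → E₁) (f₂ : EuclideanSpace ℝ (Fin d) → E₂)
    (hf₁ : ContDiffOn ℝ (⊤ : ℕ∞) f₁ {ξ | ξ ≠ 0}) (hf₂ : ContDiffOn ℝ (⊤ : ℕ∞) f₂ {ξ | ξ ≠ 0}) :
    (∀ n : ℕ, ∀ ξ η : EuclideanSpace ℝ (Fin d), ξ ≠ 0 →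
      b (cext n f₁ ξ η) (cext n f₂ ξ η) =
        cext n (fun ζ => b (f₁ ζ) (f₂ ζ)) ξ η + cextRho b n f₁ f₂ ξ η) ∧
    (∀ n : ℕ, ∀ K : Set (EuclideanSpace ℝ (Fin d)), IsCompact K → K ⊆ {ξ | ξ ≠ 0} →
      ∃ C : ℝ, ∀ ξ ∈ K, ∀ η : EuclideanSpace ℝ (Fin d), ‖η‖ ≤ 1 →
        ‖cextRho b n f₁ f₂ ξ η‖ ≤ C * ‖η‖ ^ (n + 1)) := by
  have hUopen : IsOpen {ξ : EuclideanSpace ℝ (Fin d) | ξ ≠ 0} := isOpen_ne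
  constructor
  · intro n ξ η hξ
    classical
    set A := Finset.univ.filter (fun α : Fin d → Fin (n + 1) => ∑ i, (α i : ℕ) ≤ n) with hA
    set c : (Fin d → Fin (n + 1)) → ℂ := fun α =>
      ((Complex.I ^ (∑ i, (α i : ℕ)) * ∏ i, (η i : ℂ) ^ (α i : ℕ)) /
        (∏ i, ((α i : ℕ).factorial : ℂ))) with hc
    have hAco : ∀ γ : Fin d → Fin (n + 1), γ ∈ A → ∀ i, (γ i : ℕ) ≤ n := by
      intro γ hγ i
      rw [hA, Finset.mem_filter] at hγ
      exact le_trans (Finset.single_le_sum (f := fun i => (γ i : ℕ))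
        (fun _ _ => Nat.zero_le _) (Finset.mem_univ i)) hγ.2
    have expand : b (cext n f₁ ξ η) (cext n f₂ ξ η)
        = ∑ p ∈ A ×ˢ A, (c p.1 * c p.2) •
            b (mpd (fun i => (p.1 i : ℕ)) f₁ ξ) (mpd (fun i => (p.2 i : ℕ)) f₂ ξ) := by
      rw [Finset.sum_product' (f := fun α β => (c α * c β) •
        b (mpd (fun i => (α i : ℕ)) f₁ ξ) (mpd (fun i => (β i : ℕ)) f₂ ξ))]
      unfold cext
      simp only [map_sum, map_smul, ContinuousLinearMap.sum_apply,
        ContinuousLinearMap.smul_apply, Finset.smul_sum, smul_smul]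
      rw [Finset.sum_comm]
      refine Finset.sum_congr rfl fun α _ => Finset.sum_congr rfl fun β _ => ?_
      congr 1
      simp only [hc]
      ring
    rw [expand,
      ← Finset.sum_filter_add_sum_filter_not (A ×ˢ A)
        (fun p => (∑ i, (p.1 i : ℕ)) + ∑ i, (p.2 i : ℕ) ≤ n)]
    have hsc : ∀ p : (Fin d → Fin (n + 1)) × (Fin d → Fin (n + 1)),
        c p.1 * c p.2 = (Complex.I ^ ((∑ i, (p.1 i : ℕ)) + ∑ i, (p.2 i : ℕ)) *
          ∏ i, (η i : ℂ) ^ ((p.1 i : ℕ) + (p.2 i : ℕ))) /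
        ((∏ i, ((p.1 i : ℕ).factorial : ℂ)) * ∏ i, ((p.2 i : ℕ).factorial : ℂ)) := by
      intro p
      rw [hc]
      dsimp only
      rw [pow_add, show (∏ i, (η i : ℂ) ^ ((p.1 i : ℕ) + (p.2 i : ℕ)))
          = (∏ i, (η i : ℂ) ^ (p.1 i : ℕ)) * ∏ i, (η i : ℂ) ^ (p.2 i : ℕ) from by
        rw [← Finset.prod_mul_distrib]
        exact Finset.prod_congr rfl fun i _ => pow_add _ _ _]
      rw [div_mul_div_comm]
      ring
    have hrho : ∑ p ∈ (A ×ˢ A).filter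
          (fun p => ¬((∑ i, (p.1 i : ℕ)) + ∑ i, (p.2 i : ℕ) ≤ n)),
          (c p.1 * c p.2) •
            b (mpd (fun i => (p.1 i : ℕ)) f₁ ξ) (mpd (fun i => (p.2 i : ℕ)) f₂ ξ)
        = cextRho b n f₁ f₂ ξ η := by
      unfold cextRho
      refine Finset.sum_congr ?_ (fun p _ => by rw [hsc p])
      rw [hA, ← Finset.filter_product, Finset.filter_filter, Finset.univ_product_univ]
      apply Finset.filter_congr
      intro p _
      constructor
      · rintro ⟨⟨h1, h2⟩, h3⟩; exact ⟨h1, h2, by omega⟩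
      · rintro ⟨h1, h2, h3⟩; exact ⟨⟨h1, h2⟩, by omega⟩
    rw [hrho]
    congr 1
    have hset : (A ×ˢ A).filter (fun p => (∑ i, (p.1 i : ℕ)) + ∑ i, (p.2 i : ℕ) ≤ n)
        = Finset.univ.filter
            (fun p : (Fin d → Fin (n + 1)) × (Fin d → Fin (n + 1)) =>
              (∑ i, (p.1 i : ℕ)) + ∑ i, (p.2 i : ℕ) ≤ n) := by
      rw [hA, ← Finset.filter_product, Finset.filter_filter, Finset.univ_product_univ]
      apply Finset.filter_congr
      intro p _
      constructor
      · rintro ⟨⟨h1, h2⟩, h3⟩; exact h3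
      · intro h3; exact ⟨⟨by omega, by omega⟩, h3⟩
    rw [hset]
    have hmaps : ∀ p ∈ Finset.univ.filter
          (fun p : (Fin d → Fin (n + 1)) × (Fin d → Fin (n + 1)) =>
            (∑ i, (p.1 i : ℕ)) + ∑ i, (p.2 i : ℕ) ≤ n),
        (fun i => (⟨min ((p.1 i : ℕ) + (p.2 i : ℕ)) n,
          Nat.lt_succ_of_le (min_le_right _ _)⟩ : Fin (n + 1))) ∈ A := by
      intro p hp
      rw [Finset.mem_filter] at hp
      rw [hA, Finset.mem_filter]
      refine ⟨Finset.mem_univ _, ?_⟩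
      calc ∑ i, ((⟨min ((p.1 i : ℕ) + (p.2 i : ℕ)) n,
            Nat.lt_succ_of_le (min_le_right _ _)⟩ : Fin (n + 1)) : ℕ)
          ≤ ∑ i, ((p.1 i : ℕ) + (p.2 i : ℕ)) :=
            Finset.sum_le_sum (fun i _ => min_le_left _ _)
        _ = (∑ i, (p.1 i : ℕ)) + ∑ i, (p.2 i : ℕ) := Finset.sum_add_distrib
        _ ≤ n := hp.2
    rw [← Finset.sum_fiberwise_of_maps_to hmaps]
    unfold cext
    refine Finset.sum_congr rfl ?_
    intro γ hγ
    have hγn : ∀ i, (γ i : ℕ) ≤ n := hAco γ hγ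
    rw [mpd_leibniz b hUopen (fun i => (γ i : ℕ)) hf₁ hf₂ hξ, Finset.smul_sum]
    refine Finset.sum_nbij'
      (i := fun p : (Fin d → Fin (n + 1)) × (Fin d → Fin (n + 1)) =>
        (fun i => (⟨min (p.1 i : ℕ) (γ i : ℕ), Nat.lt_succ_of_le (min_le_right _ _)⟩ :
          Fin ((γ i : ℕ) + 1))))
      (j := fun β => ((fun i => (⟨min (β i : ℕ) n,
          Nat.lt_succ_of_le (min_le_right _ _)⟩ : Fin (n + 1))),
        (fun i => (⟨min ((γ i : ℕ) - (β i : ℕ)) n,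
          Nat.lt_succ_of_le (min_le_right _ _)⟩ : Fin (n + 1)))))
      ?_ ?_ ?_ ?_ ?_
    · intro p _; exact Finset.mem_univ _
    · -- maps back into the fiber
      intro β _
      have hβγ : ∀ i, (β i : ℕ) ≤ (γ i : ℕ) := fun i => Nat.lt_succ_iff.mp (β i).isLt
      have e1 : ∀ i : Fin d, min (β i : ℕ) n = (β i : ℕ) :=
        fun i => min_eq_left (le_trans (hβγ i) (hγn i))
      have e2 : ∀ i : Fin d, min ((γ i : ℕ) - (β i : ℕ)) n = (γ i : ℕ) - (β i : ℕ) :=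
        fun i => min_eq_left (le_trans (Nat.sub_le _ _) (hγn i))
      rw [Finset.mem_filter, Finset.mem_filter]
      refine ⟨⟨Finset.mem_univ _, ?_⟩, ?_⟩
      · -- sum bound
        have : (∑ i, min (β i : ℕ) n) + ∑ i, min ((γ i : ℕ) - (β i : ℕ)) n
            = ∑ i, (γ i : ℕ) := by
          rw [Finset.sum_congr rfl (fun i _ => e1 i), Finset.sum_congr rfl (fun i _ => e2 i),
            ← Finset.sum_add_distrib]
          exact Finset.sum_congr rfl fun i _ => by omega
        calc (∑ i, ((⟨min (β i : ℕ) n, _⟩ : Fin (n+1)) : ℕ))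
              + ∑ i, ((⟨min ((γ i : ℕ) - (β i : ℕ)) n, _⟩ : Fin (n+1)) : ℕ)
            = ∑ i, (γ i : ℕ) := this
          _ ≤ n := (Finset.mem_filter.mp hγ).2
      · -- lands in the fiber over γ
        funext i
        apply Fin.ext
        show min (min (β i : ℕ) n + min ((γ i : ℕ) - (β i : ℕ)) n) n = (γ i : ℕ)
        rw [e1 i, e2 i]
        have := hβγ i; have := hγn i
        omega
    · -- left inverse
      intro p hp
      rw [Finset.mem_filter, Finset.mem_filter] at hp
      obtain ⟨⟨-, hQ⟩, hg⟩ := hp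
      have hco : ∀ i, (p.1 i : ℕ) + (p.2 i : ℕ) ≤ n := by
        intro i
        have h1 : (p.1 i : ℕ) ≤ ∑ j, (p.1 j : ℕ) :=
          Finset.single_le_sum (f := fun j => (p.1 j : ℕ)) (fun _ _ => Nat.zero_le _)
            (Finset.mem_univ i)
        have h2 : (p.2 i : ℕ) ≤ ∑ j, (p.2 j : ℕ) :=
          Finset.single_le_sum (f := fun j => (p.2 j : ℕ)) (fun _ _ => Nat.zero_le _)
            (Finset.mem_univ i)
        omega
      have hab : ∀ i, (γ i : ℕ) = (p.1 i : ℕ) + (p.2 i : ℕ) := by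
        intro i
        have := congrFun hg i
        have hv := congrArg Fin.val this
        simp only at hv
        rw [← hv, min_eq_left (hco i)]
      refine Prod.ext ?_ ?_
      · funext i
        apply Fin.ext
        show min (min (p.1 i : ℕ) (γ i : ℕ)) n = (p.1 i : ℕ)
        have := hab i; have := hco i
        omega
      · funext i
        apply Fin.ext
        show min ((γ i : ℕ) - min (p.1 i : ℕ) (γ i : ℕ)) n = (p.2 i : ℕ)
        have := hab i; have := hco i
        omega
    · -- right inverse
      intro β _
      have hβγ : ∀ i, (β i : ℕ) ≤ (γ i : ℕ) := fun i => Nat.lt_succ_iff.mp (β i).isLt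
      funext i
      apply Fin.ext
      show min (min (β i : ℕ) n) ((γ i : ℕ)) = (β i : ℕ)
      have := hβγ i; have := hγn i
      omega
    · -- values
      intro p hp
      rw [Finset.mem_filter, Finset.mem_filter] at hp
      obtain ⟨⟨-, hQ⟩, hg⟩ := hp
      have hco : ∀ i, (p.1 i : ℕ) + (p.2 i : ℕ) ≤ n := by
        intro i
        have h1 : (p.1 i : ℕ) ≤ ∑ j, (p.1 j : ℕ) :=
          Finset.single_le_sum (f := fun j => (p.1 j : ℕ)) (fun _ _ => Nat.zero_le _)
            (Finset.mem_univ i)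
        have h2 : (p.2 i : ℕ) ≤ ∑ j, (p.2 j : ℕ) :=
          Finset.single_le_sum (f := fun j => (p.2 j : ℕ)) (fun _ _ => Nat.zero_le _)
            (Finset.mem_univ i)
        omega
      have hab : ∀ i, (γ i : ℕ) = (p.1 i : ℕ) + (p.2 i : ℕ) := by
        intro i
        have hv := congrArg Fin.val (congrFun hg i)
        simp only at hv
        rw [← hv, min_eq_left (hco i)]
      have hφ : ∀ i, min (p.1 i : ℕ) (γ i : ℕ) = (p.1 i : ℕ) :=
        fun i => min_eq_left (by have := hab i; omega)
      have harg1 : (fun i => ((⟨min (p.1 i : ℕ) (γ i : ℕ),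
            Nat.lt_succ_of_le (min_le_right _ _)⟩ : Fin ((γ i : ℕ) + 1)) : ℕ))
          = fun i => (p.1 i : ℕ) := funext fun i => hφ i
      have harg2 : (fun i => (γ i : ℕ) - ((⟨min (p.1 i : ℕ) (γ i : ℕ),
            Nat.lt_succ_of_le (min_le_right _ _)⟩ : Fin ((γ i : ℕ) + 1)) : ℕ))
          = fun i => (p.2 i : ℕ) := funext fun i => by
        show (γ i : ℕ) - min (p.1 i : ℕ) (γ i : ℕ) = (p.2 i : ℕ)
        have := hab i; omega
      rw [harg1, harg2, smul_smul]
      congr 1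
      -- scalar identity
      have hsum : ∑ i, (γ i : ℕ) = (∑ i, (p.1 i : ℕ)) + ∑ i, (p.2 i : ℕ) := by
        rw [← Finset.sum_add_distrib]
        exact Finset.sum_congr rfl fun i _ => hab i
      have hprodη : ∏ i, (η i : ℂ) ^ (γ i : ℕ)
          = (∏ i, (η i : ℂ) ^ (p.1 i : ℕ)) * ∏ i, (η i : ℂ) ^ (p.2 i : ℕ) := by
        rw [← Finset.prod_mul_distrib]
        exact Finset.prod_congr rfl fun i _ => by rw [hab i, pow_add]
      have hfactnat : ∀ i : Fin d, ((γ i : ℕ).factorial : ℂ)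
          = (((γ i : ℕ).choose ((⟨min (p.1 i : ℕ) (γ i : ℕ),
              Nat.lt_succ_of_le (min_le_right _ _)⟩ : Fin ((γ i : ℕ) + 1)) : ℕ) : ℂ))
            * ((p.1 i : ℕ).factorial : ℂ) * ((p.2 i : ℕ).factorial : ℂ) := by
        intro i
        have h1 : ((⟨min (p.1 i : ℕ) (γ i : ℕ),
            Nat.lt_succ_of_le (min_le_right _ _)⟩ : Fin ((γ i : ℕ) + 1)) : ℕ)
            = (p.1 i : ℕ) := hφ i
        rw [h1]
        have h2 : (p.1 i : ℕ) ≤ (γ i : ℕ) := by have := hab i; omega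
        have h3 : (γ i : ℕ) - (p.1 i : ℕ) = (p.2 i : ℕ) := by have := hab i; omega
        have := Nat.choose_mul_factorial_mul_factorial h2
        rw [h3] at this
        exact_mod_cast this.symm
      have hfact : (∏ i, ((γ i : ℕ).factorial : ℂ))
          = (∏ i, (((γ i : ℕ).choose ((⟨min (p.1 i : ℕ) (γ i : ℕ),
              Nat.lt_succ_of_le (min_le_right _ _)⟩ : Fin ((γ i : ℕ) + 1)) : ℕ)) : ℂ))
            * (∏ i, ((p.1 i : ℕ).factorial : ℂ)) * ∏ i, ((p.2 i : ℕ).factorial : ℂ) := by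
        rw [← Finset.prod_mul_distrib, ← Finset.prod_mul_distrib]
        exact Finset.prod_congr rfl fun i _ => hfactnat i
      have hFa : (∏ i, ((p.1 i : ℕ).factorial : ℂ)) ≠ 0 :=
        Finset.prod_ne_zero_iff.mpr fun i _ =>
          Nat.cast_ne_zero.mpr (Nat.factorial_ne_zero _)
      have hFb : (∏ i, ((p.2 i : ℕ).factorial : ℂ)) ≠ 0 :=
        Finset.prod_ne_zero_iff.mpr fun i _ =>
          Nat.cast_ne_zero.mpr (Nat.factorial_ne_zero _)
      have hCh : (∏ i, (((γ i : ℕ).choose ((⟨min (p.1 i : ℕ) (γ i : ℕ),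
            Nat.lt_succ_of_le (min_le_right _ _)⟩ : Fin ((γ i : ℕ) + 1)) : ℕ)) : ℂ)) ≠ 0 := by
        exact Finset.prod_ne_zero_iff.mpr fun i _ => Nat.cast_ne_zero.mpr
          (Nat.ne_of_gt (Nat.choose_pos (min_le_right _ _)))
      rw [hc]
      dsimp only
      rw [hsum, hprodη, hfact, pow_add]
      field_simp
  · intro n K hK hKU
    have hb : ∀ p : (Fin d → Fin (n + 1)) × (Fin d → Fin (n + 1)),
        ∃ C : ℝ, ∀ x ∈ K,
          ‖b (mpd (fun i => (p.1 i : ℕ)) f₁ x) (mpd (fun i => (p.2 i : ℕ)) f₂ x)‖ ≤ C := by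
      intro p
      apply hK.exists_bound_of_continuousOn
      exact ((prod_contDiffOn b (mpd_contDiffOn hUopen hf₁ _)
        (mpd_contDiffOn hUopen hf₂ _)).continuousOn).mono hKU
    choose Cf hCf using hb
    classical
    refine ⟨∑ p ∈ Finset.univ.filter
      (fun p : (Fin d → Fin (n + 1)) × (Fin d → Fin (n + 1)) =>
        (∑ i, (p.1 i : ℕ)) ≤ n ∧ (∑ i, (p.2 i : ℕ)) ≤ n ∧
          n < (∑ i, (p.1 i : ℕ)) + ∑ i, (p.2 i : ℕ)), max (Cf p) 0, ?_⟩
    intro ξ hξ η hη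
    unfold cextRho
    refine le_trans (norm_sum_le _ _) ?_
    rw [Finset.sum_mul]
    refine Finset.sum_le_sum ?_
    intro p hp
    rw [Finset.mem_filter] at hp
    obtain ⟨-, h1, h2, h3⟩ := hp
    rw [norm_smul]
    have hcoef : ‖(Complex.I ^ ((∑ i, (p.1 i : ℕ)) + ∑ i, (p.2 i : ℕ)) *
        ∏ i, (η i : ℂ) ^ ((p.1 i : ℕ) + (p.2 i : ℕ))) /
      ((∏ i, ((p.1 i : ℕ).factorial : ℂ)) * ∏ i, ((p.2 i : ℕ).factorial : ℂ))‖
        ≤ ‖η‖ ^ (n + 1) := by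
      rw [norm_div, norm_mul, norm_pow, Complex.norm_I, one_pow, one_mul]
      have hden : (1 : ℝ) ≤ ‖(∏ i, ((p.1 i : ℕ).factorial : ℂ)) *
          ∏ i, ((p.2 i : ℕ).factorial : ℂ)‖ := by
        have : ((∏ i, ((p.1 i : ℕ).factorial : ℂ)) * ∏ i, ((p.2 i : ℕ).factorial : ℂ))
            = (((∏ i, ((p.1 i : ℕ).factorial)) * ∏ i, ((p.2 i : ℕ).factorial) : ℕ) : ℂ) := by
          push_cast; ring
        rw [this, Complex.norm_natCast]
        exact_mod_cast Nat.one_le_iff_ne_zero.mpr (by positivity)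
      have hnum : ‖∏ i, (η i : ℂ) ^ ((p.1 i : ℕ) + (p.2 i : ℕ))‖ ≤ ‖η‖ ^ (n + 1) := by
        rw [norm_prod]
        calc ∏ i, ‖(η i : ℂ) ^ ((p.1 i : ℕ) + (p.2 i : ℕ))‖
            ≤ ∏ i : Fin d, ‖η‖ ^ ((p.1 i : ℕ) + (p.2 i : ℕ)) := by
              refine Finset.prod_le_prod (fun _ _ => norm_nonneg _) (fun i _ => ?_)
              rw [norm_pow, Complex.norm_real, Real.norm_eq_abs]
              exact pow_le_pow_left₀ (abs_nonneg _) (coord_le_norm η i) _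
          _ = ‖η‖ ^ (∑ i : Fin d, ((p.1 i : ℕ) + (p.2 i : ℕ))) := by
              rw [Finset.prod_pow_eq_pow_sum]
          _ ≤ ‖η‖ ^ (n + 1) := by
              apply pow_le_pow_of_le_one (norm_nonneg _) hη
              rw [Finset.sum_add_distrib]
              omega
      calc ‖∏ i, (η i : ℂ) ^ ((p.1 i : ℕ) + (p.2 i : ℕ))‖ /
            ‖(∏ i, ((p.1 i : ℕ).factorial : ℂ)) * ∏ i, ((p.2 i : ℕ).factorial : ℂ)‖
          ≤ ‖∏ i, (η i : ℂ) ^ ((p.1 i : ℕ) + (p.2 i : ℕ))‖ :=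
            div_le_self (norm_nonneg _) hden
        _ ≤ ‖η‖ ^ (n + 1) := hnum
    have hB : ‖b (mpd (fun i => (p.1 i : ℕ)) f₁ ξ) (mpd (fun i => (p.2 i : ℕ)) f₂ ξ)‖
        ≤ max (Cf p) 0 := le_trans (hCf p ξ hξ) (le_max_left _ _)
    calc _ ≤ ‖η‖ ^ (n + 1) * max (Cf p) 0 :=
          mul_le_mul hcoef hB (norm_nonneg _) (pow_nonneg (norm_nonneg _) _)
      _ = max (Cf p) 0 * ‖η‖ ^ (n + 1) := mul_comm _ _
end

section
/- Let π_l : K × (ℝ^d \ {0}) → End(ℂ^N), l = 1, …, m, be smooth matrix-valued functions, K ⊆ ℝ^{1+d}, satisfying π_l(t,x,ξ) π_{l'}(t,x,ξ) = δ_{ll'} π_l(t,x,ξ) for all arguments. Then for every integer n ≥ 0, every compact set K₀ ⊆ K and every compact set Ξ ⊂ ℝ^d \ {0}, there is a constant C such that for all (t,x) ∈ K₀, ξ ∈ Ξ, and η ∈ ℝ^d with |η| ≤ 1: ‖π̃_l⁽ⁿ⁾(t,x,ξ+iη) π̃_{l'}⁽ⁿ⁾(t,x,ξ+iη) − δ_{ll'}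 π̃_l⁽ⁿ⁾(t,x,ξ+iη)‖ ≤ C |η|^{n+1}. -/
attribute [local instance] Matrix.normedAddCommGroup Matrix.normedSpace

namespace Stmt6

open Set Function List

variable {d : ℕ} {E : Type*} [NormedAddCommGroup E] [NormedSpace ℝ E]

local notation "V" => EuclideanSpace ℝ (Fin d)

/-- iterated first-order partial derivatives along a list of directions -/
noncomputable def pds (L : List (Fin d)) (f : V → E) : V → E :=
  L.foldr (fun i g => pd i g) f

@[simp] lemma pds_nil (f : V → E) : pds [] f = f := rfl

@[simp] lemma pds_cons (i : Fin d) (L : List (Fin d)) (f : V → E) :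
    pds (i :: L) f = pd i (pds L f) := rfl

lemma pd_congrOn {U : Set V} (hU : IsOpen U) {f g : V → E} (h : EqOn f g U) (i : Fin d) :
    EqOn (pd i f) (pd i g) U := by
  intro x hx
  have : fderiv ℝ f x = fderiv ℝ g x :=
    Filter.EventuallyEq.fderiv_eq (Filter.eventuallyEq_of_mem (hU.mem_nhds hx) h)
  simp only [pd, this]

lemma pds_congrOn {U : Set V} (hU : IsOpen U) {f g : V → E} (h : EqOn f g U) :
    ∀ L : List (Fin d), EqOn (pds L f) (pds L g) U := by
  intro L
  induction L with
  | nil => simpa using h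
  | cons i L ih => simpa using pd_congrOn hU ih i

lemma pds_replicate (k : ℕ) (i : Fin d) (f : V → E) :
    pds (List.replicate k i) f = (pd i)^[k] f := by
  induction k with
  | zero => rfl
  | succ k ih =>
      rw [List.replicate_succ, Function.iterate_succ_apply']
      simpa [pds] using congrArg (pd i) ih

lemma mpd_eq_pds (α : Fin d → ℕ) (f : V → E) :
    mpd α f = pds ((List.finRange d).flatMap fun i => List.replicate (α i) i) f := by
  show (List.finRange d).foldr (fun i g => (pd i)^[α i] g) f = _
  induction (List.finRange d) with
  | nil => rfl
  | cons i L ih =>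
      rw [List.flatMap_cons]
      show (pd i)^[α i] (L.foldr (fun i g => (pd i)^[α i] g) f) = _
      rw [ih, ← pds_replicate]
      show _ = (List.replicate (α i) i ++ L.flatMap fun i => List.replicate (α i) i).foldr
        (fun i g => pd i g) f
      rw [List.foldr_append]
      rfl

lemma foldr_agree {γ γ' : Fin d → ℕ} {f : V → E} :
    ∀ L : List (Fin d), (∀ j ∈ L, γ j = γ' j) →
      L.foldr (fun j g => (pd j)^[γ j] g) f = L.foldr (fun j g => (pd j)^[γ' j] g) f := by
  intro L
  induction L with
  | nil => intro; rfl
  | cons a L ih =>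
      intro h
      show (pd a)^[γ a] _ = (pd a)^[γ' a] _
      rw [ih (fun j hj => h j (List.mem_cons_of_mem a hj)), h a (List.mem_cons_self)]

lemma foldr_eq_self {γ : Fin d → ℕ} {f : V → E} :
    ∀ L : List (Fin d), (∀ j ∈ L, γ j = 0) → L.foldr (fun j g => (pd j)^[γ j] g) f = f := by
  intro L
  induction L with
  | nil => intro; rfl
  | cons a L ih =>
      intro h
      show (pd a)^[γ a] _ = f
      rw [h a (List.mem_cons_self), ih (fun j hj => h j (List.mem_cons_of_mem a hj))]
      rfl

lemma mpd_eq_self {γ : Fin d → ℕ} (h : ∀ j, γ j = 0) (f : V → E) : mpd γ f = f :=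
  foldr_eq_self _ (fun j _ => h j)

@[simp] lemma pd_zero_fun (i : Fin d) : pd i (fun _ : V => (0 : E)) = fun _ => 0 := by
  funext x
  simp [pd, fderiv_const]

lemma mpd_zero_fun (γ : Fin d → ℕ) : mpd γ (fun _ : V => (0 : E)) = fun _ => 0 := by
  rw [mpd_eq_pds]
  induction ((List.finRange d).flatMap fun i => List.replicate (γ i) i) with
  | nil => rfl
  | cons a L ih => rw [pds_cons, ih, pd_zero_fun]

lemma peel_aux {γ : Fin d → ℕ} {i : Fin d} (hi : γ i ≠ 0) (f : V → E) :
    ∀ L : List (Fin d), L.Pairwise (· < ·) → i ∈ L → (∀ j ∈ L, j < i → γ j = 0) →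
      L.foldr (fun j g => (pd j)^[γ j] g) f
        = pd i (L.foldr (fun j g => (pd j)^[Function.update γ i (γ i - 1) j] g) f) := by
  intro L
  induction L with
  | nil => intro _ h; cases h
  | cons a L ih =>
      intro hpw hmem h0
      rcases List.mem_cons.mp hmem with rfl | hiL
      · -- head is i
        have hL : L.foldr (fun j g => (pd j)^[γ j] g) f
            = L.foldr (fun j g => (pd j)^[Function.update γ i (γ i - 1) j] g) f := by
          apply foldr_agree
          intro j hj
          have hij : i < j := (List.pairwise_cons.mp hpw).1 j hj
          rw [Function.update_of_ne (by rintro rfl; exact lt_irrefl _ hij)]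
        show (pd i)^[γ i] (L.foldr (fun j g => (pd j)^[γ j] g) f)
          = pd i ((pd i)^[Function.update γ i (γ i - 1) i]
              (L.foldr (fun j g => (pd j)^[Function.update γ i (γ i - 1) j] g) f))
        rw [hL, Function.update_self]
        conv_lhs => rw [show γ i = γ i - 1 + 1 by omega]
        rw [Function.iterate_succ_apply']
        simp [Nat.add_sub_cancel]
      · -- head a, with a < i
        have ha : a < i := (List.pairwise_cons.mp hpw).1 i hiL
        have hγa : γ a = 0 := h0 a (List.mem_cons_self) ha
        have hγa' : Function.update γ i (γ i - 1) a = 0 := by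
          rw [Function.update_of_ne (by rintro rfl; exact lt_irrefl _ ha)]; exact hγa
        show (pd a)^[γ a] (L.foldr (fun j g => (pd j)^[γ j] g) f)
          = pd i ((pd a)^[Function.update γ i (γ i - 1) a]
              (L.foldr (fun j g => (pd j)^[Function.update γ i (γ i - 1) j] g) f))
        rw [hγa, hγa']
        exact ih (List.pairwise_cons.mp hpw).2 hiL
          (fun j hj hji => h0 j (List.mem_cons_of_mem a hj) hji)

lemma mpd_peel {γ : Fin d → ℕ} {i : Fin d} (h0 : ∀ j, j < i → γ j = 0) (hi : γ i ≠ 0)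
    (f : V → E) :
    mpd γ f = pd i (mpd (Function.update γ i (γ i - 1)) f) := by
  unfold mpd
  exact peel_aux hi f _ (List.pairwise_lt_finRange d) (List.mem_finRange i)
    (fun j _ hji => h0 j hji)

lemma pd_mpd {α : Fin d → ℕ} {i : Fin d} (h0 : ∀ j, j < i → α j = 0) (f : V → E) :
    pd i (mpd α f) = mpd (Function.update α i (α i + 1)) f := by
  have heq : Function.update (Function.update α i (α i + 1)) i
      (Function.update α i (α i + 1) i - 1) = α := by
    funext j
    by_cases hj : j = i
    · subst hj; simp
    · simp [Function.update_of_ne hj]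
  have h := mpd_peel (γ := Function.update α i (α i + 1)) (i := i)
    (fun j hj => by
      rw [Function.update_of_ne (by rintro rfl; exact lt_irrefl _ hj)]; exact h0 j hj)
    (by simp) f
  rw [heq] at h
  exact h.symm


section Analysis

open scoped ContDiff

lemma diffAt_of_contDiffOn {U : Set V} (hU : IsOpen U) {f : V → E}
    (hf : ContDiffOn ℝ ∞ f U) {x : V} (hx : x ∈ U) : DifferentiableAt ℝ f x :=
  ((hf.differentiableOn (by simp)).differentiableAt (hU.mem_nhds hx))

lemma contDiffOn_pd {U : Set V} (hU : IsOpen U) {f : V → E}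
    (hf : ContDiffOn ℝ ∞ f U) (i : Fin d) : ContDiffOn ℝ ∞ (pd i f) U := by
  have h1 : ContDiffOn ℝ ∞ (fderiv ℝ f) U := hf.fderiv_of_isOpen hU (by simp)
  exact (ContinuousLinearMap.apply ℝ E (EuclideanSpace.single i (1:ℝ))).contDiff.comp_contDiffOn h1

lemma contDiffOn_pds {U : Set V} (hU : IsOpen U) {f : V → E}
    (hf : ContDiffOn ℝ ∞ f U) : ∀ L : List (Fin d), ContDiffOn ℝ ∞ (pds L f) U := by
  intro L
  induction L with
  | nil => exact hf
  | cons i L ih => exact contDiffOn_pd hU ih i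

lemma contDiffOn_mpd {U : Set V} (hU : IsOpen U) {f : V → E}
    (hf : ContDiffOn ℝ ∞ f U) (γ : Fin d → ℕ) : ContDiffOn ℝ ∞ (mpd γ f) U := by
  rw [mpd_eq_pds]; exact contDiffOn_pds hU hf _

end Analysis

section Matrices

variable {N : ℕ}

local notation "MM" => Matrix (Fin N) (Fin N) ℂ

open scoped ContDiff

noncomputable def mulL : MM →L[ℝ] MM →L[ℝ] MM :=
  LinearMap.toContinuousLinearMap
    { toFun := fun a => LinearMap.toContinuousLinearMap (LinearMap.mul ℝ MM a)
      map_add' := by intro a b; ext x; simp [add_mul]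
      map_smul' := by intro c a; ext x; simp [smul_mul_assoc] }

lemma mulL_apply (a b : MM) : mulL a b = a * b := rfl

noncomputable instance instSNMulL : SeminormedAddCommGroup (MM →L[ℝ] MM) :=
  ContinuousLinearMap.toSeminormedAddCommGroup
noncomputable instance instNSMulL : NormedSpace ℝ (MM →L[ℝ] MM) :=
  ContinuousLinearMap.toNormedSpace
noncomputable instance instNormMulL : Norm (MM →L[ℝ] MM →L[ℝ] MM) :=
  ContinuousLinearMap.hasOpNorm

lemma isBBM_mul : IsBoundedBilinearMap ℝ (fun p : MM × MM => p.1 * p.2) :=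
  (mulL (N := N)).isBoundedBilinearMap

lemma pd_mul {f g : V → MM} {x : V} (hf : DifferentiableAt ℝ f x)
    (hg : DifferentiableAt ℝ g x) (i : Fin d) :
    pd i (fun y => f y * g y) x = f x * pd i g x + pd i f x * g x := by
  have h : HasFDerivAt (fun y => f y * g y)
      ((isBBM_mul.deriv (f x, g x)).comp ((fderiv ℝ f x).prod (fderiv ℝ g x))) x :=
    by have := (isBBM_mul.hasFDerivAt (f x, g x)).comp x (hf.hasFDerivAt.prodMk hg.hasFDerivAt)
       exact this
  show fderiv ℝ (fun y => f y * g y) x (EuclideanSpace.single i (1:ℝ)) = _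
  erw [h.fderiv]
  rfl

lemma contDiffOn_mul {U : Set V} {f g : V → MM} (hf : ContDiffOn ℝ ∞ f U)
    (hg : ContDiffOn ℝ ∞ g U) : ContDiffOn ℝ ∞ (fun x => f x * g x) U :=
  isBBM_mul.contDiff.comp_contDiffOn (hf.prodMk hg)

lemma pd_sum_smul {ι : Type*} (s : Finset ι) (c : ι → ℂ) (F : ι → V → MM) {x : V}
    (h : ∀ a ∈ s, DifferentiableAt ℝ (F a) x) (i : Fin d) :
    pd i (fun ζ => ∑ a ∈ s, c a • F a ζ) x = ∑ a ∈ s, c a • pd i (F a) x := by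
  show fderiv ℝ _ x _ = _
  erw [fderiv_fun_sum (fun a ha => ((h a ha).const_smul (c a) : DifferentiableAt ℝ (fun ζ => c a • F a ζ) x))]
  rw [ContinuousLinearMap.sum_apply]
  refine Finset.sum_congr rfl fun a ha => ?_
  erw [fderiv_const_smul (h a ha), ContinuousLinearMap.smul_apply]
  rfl

end Matrices


section Pascal

variable {N : ℕ}
local notation "MM" => Matrix (Fin N) (Fin N) ℂ

lemma pascal_key {γ : Fin d → ℕ} {i₀ : Fin d} (hγi₀ : γ i₀ ≠ 0) (β : Fin d → ℕ) :
    (∏ j, (γ j).choose (β j))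
      = (∏ j, ((Function.update γ i₀ (γ i₀ - 1)) j).choose (β j))
        + (if β i₀ = 0 then 0 else
            ∏ j, ((Function.update γ i₀ (γ i₀ - 1)) j).choose
              ((Function.update β i₀ (β i₀ - 1)) j)) := by
  set γ' := Function.update γ i₀ (γ i₀ - 1) with hγ'
  have hγ'i : γ' i₀ = γ i₀ - 1 := by rw [hγ', Function.update_self]
  have e1 : ∏ j, (γ j).choose (β j)
      = (γ i₀).choose (β i₀) * ∏ j ∈ Finset.univ.erase i₀, (γ j).choose (β j) :=
    (Finset.mul_prod_erase _ _ (Finset.mem_univ i₀)).symm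
  have e2 : ∏ j, (γ' j).choose (β j)
      = (γ' i₀).choose (β i₀) * ∏ j ∈ Finset.univ.erase i₀, (γ j).choose (β j) := by
    rw [← Finset.mul_prod_erase _ _ (Finset.mem_univ i₀)]
    congr 1
    exact Finset.prod_congr rfl fun j hj => by
      rw [hγ', Function.update_of_ne (Finset.ne_of_mem_erase hj)]
  have e3 : ∏ j, (γ' j).choose ((Function.update β i₀ (β i₀ - 1)) j)
      = (γ' i₀).choose (β i₀ - 1) * ∏ j ∈ Finset.univ.erase i₀, (γ j).choose (β j) := by
    rw [← Finset.mul_prod_erase _ _ (Finset.mem_univ i₀), Function.update_self]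
    congr 1
    exact Finset.prod_congr rfl fun j hj => by
      rw [hγ', Function.update_of_ne (Finset.ne_of_mem_erase hj),
        Function.update_of_ne (Finset.ne_of_mem_erase hj)]
  rcases Nat.eq_zero_or_pos (β i₀) with hβ | hβ
  · rw [if_pos hβ, e1, e2, hβ, Nat.add_zero, hγ'i]
    simp
  · rw [if_neg (by omega), e1, e2, e3, ← Nat.add_mul]
    congr 1
    have hg : γ i₀ = (γ i₀ - 1) + 1 := by omega
    have hb : β i₀ = (β i₀ - 1) + 1 := by omega
    rw [hγ'i]
    conv_lhs => rw [hg, hb]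
    rw [Nat.choose_succ_succ, Nat.succ_eq_add_one, ← hb, Nat.add_comm]

lemma pascal_reindex {γ : Fin d → ℕ} {i₀ : Fin d} (hγi₀ : γ i₀ ≠ 0)
    (T : (Fin d → ℕ) → MM) :
    ∑ β ∈ Finset.Iic γ, ((∏ j, (γ j).choose (β j) : ℕ) : ℂ) • T β
      = ∑ α ∈ Finset.Iic (Function.update γ i₀ (γ i₀ - 1)),
          ((∏ j, ((Function.update γ i₀ (γ i₀ - 1)) j).choose (α j) : ℕ) : ℂ) • T α
        + ∑ α ∈ Finset.Iic (Function.update γ i₀ (γ i₀ - 1)),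
          ((∏ j, ((Function.update γ i₀ (γ i₀ - 1)) j).choose (α j) : ℕ) : ℂ) •
            T (Function.update α i₀ (α i₀ + 1)) := by
  set γ' := Function.update γ i₀ (γ i₀ - 1) with hγ'
  have hγ'app : ∀ j, γ' j = if j = i₀ then γ i₀ - 1 else γ j := by
    intro j
    by_cases hj : j = i₀
    · subst hj; rw [hγ', Function.update_self, if_pos rfl]
    · rw [hγ', Function.update_of_ne hj, if_neg hj]
  have hγ'le : γ' ≤ γ := by
    intro j
    rw [hγ'app j]
    by_cases hj : j = i₀ <;> simp [hj] <;> omega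
  have split : ∀ β ∈ Finset.Iic γ,
      ((∏ j, (γ j).choose (β j) : ℕ) : ℂ) • T β
        = ((∏ j, (γ' j).choose (β j) : ℕ) : ℂ) • T β
          + (if β i₀ = 0 then (0:MM) else
              ((∏ j, (γ' j).choose ((Function.update β i₀ (β i₀ - 1)) j) : ℕ) : ℂ) • T β) := by
    intro β _
    rw [pascal_key hγi₀ β]
    push_cast
    rw [add_smul]
    congr 1
    rcases Nat.eq_zero_or_pos (β i₀) with hβ | hβ
    · rw [if_pos hβ, if_pos hβ]; push_cast; rw [zero_smul]
    · rw [if_neg (by omega), if_neg (by omega)]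
  rw [Finset.sum_congr rfl split, Finset.sum_add_distrib]
  congr 1
  · -- first sum restricts to Iic γ'
    refine (Finset.sum_subset (Finset.Iic_subset_Iic.mpr hγ'le) ?_).symm
    intro β hβ hβ'
    have hnle : ¬ β ≤ γ' := by simpa [Finset.mem_Iic] using hβ'
    obtain ⟨j, hj⟩ : ∃ j, γ' j < β j := by
      by_contra h
      push_neg at h
      exact hnle h
    have hβγ : β j ≤ γ j := (Finset.mem_Iic.mp hβ) j
    have hj0 : j = i₀ := by
      by_contra hne
      rw [hγ'app j, if_neg hne] at hj
      omega
    subst hj0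
    have h1 : (γ' j).choose (β j) = 0 := Nat.choose_eq_zero_of_lt hj
    rw [Finset.prod_eq_zero (Finset.mem_univ j) h1]
    push_cast
    rw [zero_smul]
  · -- second sum: drop the zero `if` entries and reindex
    have hfilter : ∀ (F : (Fin d → ℕ) → MM),
        (∑ β ∈ Finset.Iic γ, (if β i₀ = 0 then (0:MM) else F β))
          = ∑ β ∈ (Finset.Iic γ).filter (fun β => ¬ β i₀ = 0), F β := by
      intro F
      rw [Finset.sum_filter]
      refine Finset.sum_congr rfl fun β _ => ?_
      by_cases hβ : β i₀ = 0
      · rw [if_pos hβ, if_neg (by simpa using hβ)]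
      · rw [if_neg hβ, if_pos (by simpa using hβ)]
    rw [hfilter]
    refine Finset.sum_nbij' (fun β => Function.update β i₀ (β i₀ - 1))
      (fun α => Function.update α i₀ (α i₀ + 1)) ?_ ?_ ?_ ?_ ?_
    · intro β hβ
      simp only [Finset.mem_filter, Finset.mem_Iic] at hβ
      rw [Finset.mem_Iic]
      intro j
      rw [hγ'app j]
      by_cases hj : j = i₀
      · subst hj
        simp only [Function.update_self]
        simp only [if_true]
        have h2 : β j ≤ γ j := (Pi.le_def.mp hβ.1) j
        omega
      · simp only [Function.update_of_ne hj, if_neg hj]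
        exact (Pi.le_def.mp hβ.1) j
    · intro α hα
      rw [Finset.mem_Iic] at hα
      simp only [Finset.mem_filter, Finset.mem_Iic]
      refine ⟨fun j => ?_, by simp⟩
      have hj' := hα j
      rw [hγ'app j] at hj'
      by_cases hj : j = i₀
      · subst hj
        simp only [Function.update_self]
        simp only [if_true] at hj'
        omega
      · simp only [Function.update_of_ne hj]
        simpa [hj] using hj'
    · intro β hβ
      simp only [Finset.mem_filter, Finset.mem_Iic] at hβ
      funext j
      by_cases hj : j = i₀
      · subst hj
        simp only [Function.update_self]
        have := hβ.2; omega
      · simp only [Function.update_of_ne hj]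
    · intro α hα
      funext j
      by_cases hj : j = i₀
      · subst hj
        simp only [Function.update_self]
        omega
      · simp only [Function.update_of_ne hj]
    · intro β hβ
      simp only [Finset.mem_filter, Finset.mem_Iic] at hβ
      have hrec : Function.update (Function.update β i₀ (β i₀ - 1)) i₀
          ((Function.update β i₀ (β i₀ - 1)) i₀ + 1) = β := by
        funext j
        by_cases hj : j = i₀
        · subst hj
          simp only [Function.update_self]
          have := hβ.2; omega
        · simp only [Function.update_of_ne hj]
      rw [hrec]

end Pascal


section Leibniz

variable {N : ℕ}
local notation "MM" => Matrix (Fin N) (Fin N) ℂ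

open scoped ContDiff

lemma leibniz {U : Set V} (hU : IsOpen U) {f g : V → MM}
    (hf : ContDiffOn ℝ ∞ f U) (hg : ContDiffOn ℝ ∞ g U) :
    ∀ (k : ℕ) (γ : Fin d → ℕ), (∑ j, γ j) = k → ∀ ξ ∈ U,
      mpd γ (fun x => f x * g x) ξ
        = ∑ α ∈ Finset.Iic γ, ((∏ j, (γ j).choose (α j) : ℕ) : ℂ) •
            (mpd α f ξ * mpd (γ - α) g ξ) := by
  intro k
  induction k using Nat.strong_induction_on with
  | _ k IH =>
    intro γ hγ ξ hξ
    by_cases h0 : γ = 0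
    · subst h0
      have hIic : Finset.Iic (0 : Fin d → ℕ) = {0} := by
        ext β
        simp only [Finset.mem_Iic, Finset.mem_singleton]
        constructor
        · intro h; funext j; exact Nat.le_zero.mp ((Pi.le_def.mp h) j)
        · rintro rfl; exact le_rfl
      rw [hIic, Finset.sum_singleton]
      rw [mpd_eq_self (γ := (0 : Fin d → ℕ)) (fun j => rfl),
        mpd_eq_self (γ := (0 : Fin d → ℕ)) (fun j => rfl),
        show (0 : Fin d → ℕ) - 0 = 0 from rfl,
        mpd_eq_self (γ := (0 : Fin d → ℕ)) (fun j => rfl)]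
      simp
    · -- inductive step
      obtain ⟨i₁, hi₁⟩ : ∃ i, γ i ≠ 0 := by
        by_contra h; push_neg at h; exact h0 (funext h)
      have hSne : (Finset.univ.filter (fun j => γ j ≠ 0)).Nonempty := ⟨i₁, by simp [hi₁]⟩
      set i₀ := (Finset.univ.filter (fun j => γ j ≠ 0)).min' hSne with hi₀def
      have hγi₀ : γ i₀ ≠ 0 := by
        have := Finset.min'_mem _ hSne
        simpa using this
      have hlow : ∀ j, j < i₀ → γ j = 0 := by
        intro j hj
        by_contra hne
        exact absurd (Finset.min'_le _ j (by simpa using hne)) (not_le.mpr hj)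
      set γ' := Function.update γ i₀ (γ i₀ - 1) with hγ'
      have hγ'app : ∀ j, γ' j = if j = i₀ then γ i₀ - 1 else γ j := by
        intro j
        by_cases hj : j = i₀
        · subst hj; rw [hγ', Function.update_self, if_pos rfl]
        · rw [hγ', Function.update_of_ne hj, if_neg hj]
      have hsum' : (∑ j, γ' j) + 1 = k := by
        rw [← hγ, hγ', Finset.sum_update_of_mem (Finset.mem_univ i₀)]
        rw [← Finset.sum_compl_add_sum {i₀} γ]
        simp only [Finset.sum_singleton, Finset.compl_eq_univ_sdiff]
        omega
      have hIH := IH (∑ j, γ' j) (by omega) γ' rfl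
      have hmulC : ContDiffOn ℝ ∞ (fun x => f x * g x) U := contDiffOn_mul hf hg
      rw [mpd_peel hlow hγi₀ (fun x => f x * g x)]
      have hcongr : Set.EqOn (mpd γ' (fun x => f x * g x))
          (fun ζ => ∑ α ∈ Finset.Iic γ', ((∏ j, (γ' j).choose (α j) : ℕ) : ℂ) •
              (mpd α f ζ * mpd (γ' - α) g ζ)) U := fun ζ hζ => hIH ζ hζ
      rw [pd_congrOn hU hcongr i₀ hξ]
      have hdf : ∀ α : Fin d → ℕ, DifferentiableAt ℝ (mpd α f) ξ :=
        fun α => diffAt_of_contDiffOn hU (contDiffOn_mpd hU hf α) hξ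
      have hdg : ∀ α : Fin d → ℕ, DifferentiableAt ℝ (mpd α g) ξ :=
        fun α => diffAt_of_contDiffOn hU (contDiffOn_mpd hU hg α) hξ
      have hdfg : ∀ α β : Fin d → ℕ, DifferentiableAt ℝ (fun ζ => mpd α f ζ * mpd β g ζ) ξ := by
        intro α β
        have h : Differentiable ℝ (fun p : MM × MM => p.1 * p.2) :=
          ((isBBM_mul (N := N)).contDiff (n := 1)).differentiable one_ne_zero
        exact (h _).comp ξ ((hdf α).prodMk (hdg β))
      rw [pd_sum_smul _ _ _ (fun α _ => hdfg α (γ' - α)) i₀]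
      -- compute each term
      have hterm : ∀ α ∈ Finset.Iic γ',
          ((∏ j, (γ' j).choose (α j) : ℕ) : ℂ) •
              pd i₀ (fun ζ => mpd α f ζ * mpd (γ' - α) g ζ) ξ
            = ((∏ j, (γ' j).choose (α j) : ℕ) : ℂ) • (mpd α f ξ * mpd (γ - α) g ξ)
              + ((∏ j, (γ' j).choose (α j) : ℕ) : ℂ) •
                (mpd (Function.update α i₀ (α i₀ + 1)) f ξ *
                  mpd (γ - Function.update α i₀ (α i₀ + 1)) g ξ) := by
        intro α hα
        rw [Finset.mem_Iic] at hα
        have hα0 : ∀ j, j < i₀ → α j = 0 := by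
          intro j hj
          have h1 := (Pi.le_def.mp hα) j
          rw [hγ'app j, if_neg (by rintro rfl; exact lt_irrefl _ hj)] at h1
          have := hlow j hj
          omega
        have hβ0 : ∀ j, j < i₀ → (γ' - α) j = 0 := by
          intro j hj
          have : γ' j = 0 := by
            rw [hγ'app j, if_neg (by rintro rfl; exact lt_irrefl _ hj)]
            exact hlow j hj
          show γ' j - α j = 0
          omega
        have e1 : Function.update (γ' - α) i₀ ((γ' - α) i₀ + 1) = γ - α := by
          funext j
          by_cases hj : j = i₀
          · rw [hj, Function.update_self]
            show γ' i₀ - α i₀ + 1 = γ i₀ - α i₀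
            have h1 := (Pi.le_def.mp hα) i₀
            rw [hγ'app i₀] at h1 ⊢
            rw [if_pos rfl] at h1 ⊢
            omega
          · rw [Function.update_of_ne hj]
            show γ' j - α j = γ j - α j
            rw [hγ'app j, if_neg hj]
        have e2 : γ' - α = γ - Function.update α i₀ (α i₀ + 1) := by
          funext j
          by_cases hj : j = i₀
          · rw [hj]
            show γ' i₀ - α i₀ = γ i₀ - Function.update α i₀ (α i₀ + 1) i₀
            rw [Function.update_self, hγ'app i₀, if_pos rfl]
            omega
          · show γ' j - α j = γ j - Function.update α i₀ (α i₀ + 1) j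
            rw [Function.update_of_ne hj, hγ'app j, if_neg hj]
        rw [pd_mul (hdf α) (hdg (γ' - α)) i₀]
        rw [pd_mpd hα0 f, pd_mpd hβ0 g, e1, e2, smul_add]
      rw [Finset.sum_congr rfl hterm, Finset.sum_add_distrib]
      rw [pascal_reindex hγi₀ (fun β => mpd β f ξ * mpd (γ - β) g ξ)]

end Leibniz


section Slice

open scoped ContDiff

lemma taylor_slice {u : Set ((ℝ × V) × V)}
    {q : (ℝ × V) × V → FormalMultilinearSeries ℝ ((ℝ × V) × V) E}
    {F : (ℝ × V) × V → E} {m : ℕ}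
    (hq : HasFTaylorSeriesUpToOn (m : ℕ∞) F q u) (p₀ : ℝ × V) {W : Set V}
    (hW : IsOpen W) (hWu : ∀ ξ ∈ W, (p₀, ξ) ∈ u) :
    ∀ L : List (Fin d), L.length ≤ m → ∀ ξ ∈ W,
      pds L (fun ζ => F (p₀, ζ)) ξ
        = q (p₀, ξ) L.length (fun j => (0, EuclideanSpace.single (L.get j) 1)) := by
  intro L
  induction L with
  | nil =>
      intro _ ξ hξ
      rw [pds_nil]
      simp only [List.length_nil]
      rw [hq.zero_eq' (hWu ξ hξ)]
      simp
  | cons i L ih =>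
      intro hlen ξ hξ
      have hlen' : L.length ≤ m := Nat.le_of_succ_le hlen
      have hEq : Set.EqOn (pds L (fun ζ => F (p₀, ζ)))
          (fun ζ => q (p₀, ζ) L.length
            (fun j => (0, EuclideanSpace.single (L.get j) 1))) W :=
        fun ζ hζ => ih hlen' ζ hζ
      rw [pds_cons, pd_congrOn hW hEq i hξ]
      set vL : Fin L.length → ((ℝ × V) × V) :=
        (fun j => ((0 : ℝ × V), EuclideanSpace.single (L.get j) (1:ℝ))) with hvL
      have hstep : HasFDerivWithinAt (fun z => q z L.length)
          (q (p₀, ξ) (L.length + 1)).curryLeft u (p₀, ξ) :=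
        hq.fderivWithin L.length (by exact_mod_cast hlen) _ (hWu ξ hξ)
      have hι : HasFDerivAt (fun ζ : V => ((p₀, ζ) : (ℝ × V) × V))
          ((0 : V →L[ℝ] ℝ × V).prod (ContinuousLinearMap.id ℝ V)) ξ :=
        (hasFDerivAt_const p₀ ξ).prodMk (hasFDerivAt_id ξ)
      have hcomp := (hstep.comp ξ hι.hasFDerivWithinAt
        (fun ζ hζ => hWu ζ hζ)).hasFDerivAt (hW.mem_nhds hξ)
      have happ := (ContinuousMultilinearMap.apply ℝ
        (fun _ : Fin L.length => ((ℝ × V) × V)) E vL).hasFDerivAt.comp ξ hcomp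
      have happ' : HasFDerivAt (fun ζ => q (p₀, ζ) L.length vL)
          ((ContinuousMultilinearMap.apply ℝ (fun _ : Fin L.length => ((ℝ × V) × V)) E vL).comp
            (((q (p₀, ξ) (L.length + 1)).curryLeft).comp
              ((0 : V →L[ℝ] ℝ × V).prod (ContinuousLinearMap.id ℝ V)))) ξ := happ
      show fderiv ℝ (fun ζ => q (p₀, ζ) L.length vL) ξ (EuclideanSpace.single i 1) = _
      rw [happ'.fderiv]
      simp only [ContinuousLinearMap.coe_comp', Function.comp_apply,
        ContinuousLinearMap.prod_apply, ContinuousLinearMap.zero_apply,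
        ContinuousLinearMap.coe_id', id_eq,
        ContinuousMultilinearMap.apply_apply, ContinuousMultilinearMap.curryLeft_apply]
      congr 1
      funext j
      refine Fin.cases ?_ ?_ j
      · simp [hvL]
      · intro j'
        simp [hvL, Fin.cons_succ]

end Slice


section ContOn

open scoped ContDiff

lemma mpd_continuousOn {K : Set (ℝ × V)} {F : (ℝ × V) × V → E}
    (hπ : ContDiffOn ℝ (⊤ : ℕ∞) F (K ×ˢ {ξ : V | ξ ≠ 0})) (γ : Fin d → ℕ) :
    ContinuousOn (fun z : (ℝ × V) × V => mpd γ (fun ζ => F (z.1, ζ)) z.2)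
      (K ×ˢ {ξ : V | ξ ≠ 0}) := by
  set s := K ×ˢ {ξ : V | ξ ≠ 0} with hs
  set L := (List.finRange d).flatMap (fun i => List.replicate (γ i) i) with hLdef
  set vL : Fin L.length → ((ℝ × V) × V) :=
    (fun j => ((0 : ℝ × V), EuclideanSpace.single (L.get j) (1:ℝ))) with hvL
  intro z₀ hz₀
  have hcd : ContDiffWithinAt ℝ ((L.length : ℕ∞) : WithTop ℕ∞) F s z₀ :=
    (hπ z₀ hz₀).of_le (by exact_mod_cast le_top)
  obtain ⟨u, hu, q, hq⟩ := hcd L.length le_rfl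
  rw [Set.insert_eq_of_mem hz₀] at hu
  obtain ⟨v, hv_open, hz₀v, hvu⟩ := mem_nhdsWithin.mp hu
  have hcont : ContinuousOn (fun z => q z L.length vL) u :=
    (ContinuousMultilinearMap.apply ℝ (fun _ : Fin L.length => ((ℝ × V) × V)) E
      vL).continuous.comp_continuousOn (hq.cont L.length le_rfl)
  have hEq : ∀ z ∈ v ∩ s, mpd γ (fun ζ => F (z.1, ζ)) z.2 = q z L.length vL := by
    intro z hz
    obtain ⟨hzv, hzs⟩ := hz
    have hzK : z.1 ∈ K := (Set.mem_prod.mp hzs).1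
    have hzU : z.2 ∈ {ξ : V | ξ ≠ 0} := (Set.mem_prod.mp hzs).2
    have hWopen : IsOpen {ξ : V | (z.1, ξ) ∈ v ∧ ξ ≠ 0} := by
      have h1 : IsOpen {ξ : V | (z.1, ξ) ∈ v} := hv_open.preimage (Continuous.prodMk_right z.1)
      have h2 : IsOpen {ξ : V | ξ ≠ 0} := isOpen_ne
      exact h1.inter h2
    have hWu : ∀ ξ ∈ {ξ : V | (z.1, ξ) ∈ v ∧ ξ ≠ 0}, (z.1, ξ) ∈ u :=
      fun ξ hξ => hvu ⟨hξ.1, Set.mem_prod.mpr ⟨hzK, hξ.2⟩⟩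
    have hz2 : z.2 ∈ {ξ : V | (z.1, ξ) ∈ v ∧ ξ ≠ 0} := ⟨by simpa using hzv, hzU⟩
    have := taylor_slice hq z.1 hWopen hWu L le_rfl z.2 hz2
    rw [mpd_eq_pds]
    exact this
  have h1 : ContinuousWithinAt (fun z => mpd γ (fun ζ => F (z.1, ζ)) z.2) (v ∩ s) z₀ :=
    ((hcont.mono hvu) z₀ ⟨hz₀v, hz₀⟩).congr hEq (hEq z₀ ⟨hz₀v, hz₀⟩)
  rw [Set.inter_comm] at h1
  exact (continuousWithinAt_inter (hv_open.mem_nhds hz₀v)).mp h1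

end ContOn


section CextAlgebra

open scoped ContDiff

lemma mpd_congrOn {U : Set V} (hU : IsOpen U) {f g : V → E} (h : Set.EqOn f g U)
    (γ : Fin d → ℕ) : Set.EqOn (mpd γ f) (mpd γ g) U := by
  rw [mpd_eq_pds, mpd_eq_pds]
  exact pds_congrOn hU h _

lemma abs_coord_le (η : V) (i : Fin d) : |η i| ≤ ‖η‖ := by
  rw [EuclideanSpace.norm_eq]
  have h1 : |η i| = Real.sqrt (|η i| ^ 2) := (Real.sqrt_sq (abs_nonneg _)).symm
  rw [h1]
  apply Real.sqrt_le_sqrt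
  have : |η i| ^ 2 ≤ ∑ j, ‖η j‖ ^ 2 := by
    have := Finset.single_le_sum (f := fun j => ‖η j‖ ^ 2)
      (fun j _ => sq_nonneg _) (Finset.mem_univ i)
    simpa [Real.norm_eq_abs] using this
  exact this

lemma fact_identity {γ α : Fin d → ℕ} (hα : α ≤ γ) :
    (∏ j, (γ j).choose (α j)) * ((∏ j, (α j).factorial) * (∏ j, ((γ - α) j).factorial))
      = ∏ j, (γ j).factorial := by
  rw [← Finset.prod_mul_distrib, ← Finset.prod_mul_distrib]
  refine Finset.prod_congr rfl fun j _ => ?_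
  have h := Nat.choose_mul_factorial_mul_factorial ((Pi.le_def.mp hα) j)
  show (γ j).choose (α j) * ((α j).factorial * ((γ j - α j).factorial)) = _
  rw [← mul_assoc]
  exact h

section Smul

variable {N : ℕ}
local notation "MM" => Matrix (Fin N) (Fin N) ℂ

lemma pds_const_smul {U : Set V} (hU : IsOpen U) {f : V → MM}
    (hf : ContDiffOn ℝ ∞ f U) (c : ℂ) :
    ∀ L : List (Fin d), Set.EqOn (pds L (fun x => c • f x)) (fun x => c • pds L f x) U := by
  intro L
  induction L with
  | nil => intro x _; rfl
  | cons i L ih =>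
      intro x hx
      rw [pds_cons, pd_congrOn hU ih i hx]
      show fderiv ℝ (fun y => c • pds L f y) x (EuclideanSpace.single i 1) = _
      erw [fderiv_fun_const_smul (diffAt_of_contDiffOn hU (contDiffOn_pds hU hf L) hx) c]
      rfl

lemma mpd_const_smul {U : Set V} (hU : IsOpen U) {f : V → MM}
    (hf : ContDiffOn ℝ ∞ f U) (c : ℂ) (γ : Fin d → ℕ) {x : V} (hx : x ∈ U) :
    mpd γ (fun y => c • f y) x = c • mpd γ f x := by
  rw [mpd_eq_pds, mpd_eq_pds]
  exact pds_const_smul hU hf c _ hx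

end Smul

open Fin.NatCast in
lemma cext_eq {E' : Type*} [NormedAddCommGroup E'] [NormedSpace ℂ E'] (n : ℕ)
    (f : V → E') (ξ η : V) :
    cext n f ξ η = ∑ γ ∈ (Finset.Iic (fun _ => n : Fin d → ℕ)).filter
        (fun γ => ∑ i, γ i ≤ n),
      ((Complex.I ^ (∑ i, γ i) * ∏ i, (η i : ℂ) ^ γ i) /
        (∏ i, ((γ i).factorial : ℂ))) • mpd γ f ξ := by
  unfold cext
  refine Finset.sum_nbij' (fun α => fun i => ((α i : ℕ) : ℕ))
    (fun γ => fun i => ((γ i : ℕ) : Fin (n+1))) ?_ ?_ ?_ ?_ ?_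
  · intro α hα
    simp only [Finset.mem_filter, Finset.mem_univ, true_and] at hα
    simp only [Finset.mem_filter, Finset.mem_Iic]
    exact ⟨Pi.le_def.mpr fun i => Nat.lt_succ_iff.mp (α i).isLt, hα⟩
  · intro γ hγ
    simp only [Finset.mem_filter, Finset.mem_Iic] at hγ
    simp only [Finset.mem_filter, Finset.mem_univ, true_and]
    have hlt : ∀ i, γ i < n + 1 := fun i => Nat.lt_succ_of_le ((Pi.le_def.mp hγ.1) i)
    calc (∑ i, (((γ i : ℕ) : Fin (n+1)) : ℕ)) = ∑ i, γ i := by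
          refine Finset.sum_congr rfl fun i _ => ?_
          exact Fin.val_cast_of_lt (hlt i)
      _ ≤ n := hγ.2
  · intro α _
    funext i
    exact Fin.cast_val_eq_self (α i)
  · intro γ hγ
    simp only [Finset.mem_filter, Finset.mem_Iic] at hγ
    funext i
    exact Fin.val_cast_of_lt (Nat.lt_succ_of_le ((Pi.le_def.mp hγ.1) i))
  · intro α _
    rfl

section KeyAlgebra

variable {N : ℕ}
local notation "MM" => Matrix (Fin N) (Fin N) ℂ

lemma key_algebra {U : Set V} (hU : IsOpen U) {f g : V → MM}
    (hf : ContDiffOn ℝ ∞ f U) (hg : ContDiffOn ℝ ∞ g U) (δ : ℂ)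
    (hfg : Set.EqOn (fun x => f x * g x) (fun x => δ • f x) U)
    (n : ℕ) {ξ : V} (hξ : ξ ∈ U) (η : V) :
    cext n f ξ η * cext n g ξ η - δ • cext n f ξ η
      = ∑ ab ∈ (((Finset.Iic (fun _ => n : Fin d → ℕ)).filter (fun γ => ∑ i, γ i ≤ n)) ×ˢ
            ((Finset.Iic (fun _ => n : Fin d → ℕ)).filter (fun γ => ∑ i, γ i ≤ n))).filter
            (fun ab => ¬((∑ i, ab.1 i) + (∑ i, ab.2 i) ≤ n)),
          (((Complex.I ^ (∑ i, ab.1 i) * ∏ i, (η i : ℂ) ^ ab.1 i) /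
              (∏ i, ((ab.1 i).factorial : ℂ))) *
           ((Complex.I ^ (∑ i, ab.2 i) * ∏ i, (η i : ℂ) ^ ab.2 i) /
              (∏ i, ((ab.2 i).factorial : ℂ)))) •
            (mpd ab.1 f ξ * mpd ab.2 g ξ) := by
  classical
  set T : Finset (Fin d → ℕ) :=
    (Finset.Iic (fun _ => n : Fin d → ℕ)).filter (fun γ => ∑ i, γ i ≤ n) with hT
  set w : (Fin d → ℕ) → ℂ := fun γ =>
    (Complex.I ^ (∑ i, γ i) * ∏ i, (η i : ℂ) ^ γ i) / (∏ i, ((γ i).factorial : ℂ)) with hw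
  have h1 : cext n f ξ η = ∑ γ ∈ T, w γ • mpd γ f ξ := cext_eq n f ξ η
  have h2 : cext n g ξ η = ∑ γ ∈ T, w γ • mpd γ g ξ := cext_eq n g ξ η
  have hprod : cext n f ξ η * cext n g ξ η
      = ∑ ab ∈ T ×ˢ T, (w ab.1 * w ab.2) • (mpd ab.1 f ξ * mpd ab.2 g ξ) := by
    rw [h1, h2, Finset.sum_mul_sum, Finset.sum_product]
    exact Finset.sum_congr rfl fun α _ => Finset.sum_congr rfl fun β _ =>
      smul_mul_smul_comm (w α) (mpd α f ξ) (w β) (mpd β g ξ)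
  have hsplit := (Finset.sum_filter_add_sum_filter_not (T ×ˢ T)
    (fun ab => (∑ i, ab.1 i) + (∑ i, ab.2 i) ≤ n)
    (fun ab => (w ab.1 * w ab.2) • (mpd ab.1 f ξ * mpd ab.2 g ξ))).symm
  -- the low-order part
  have hmaps : ∀ ab ∈ (T ×ˢ T).filter (fun ab => (∑ i, ab.1 i) + (∑ i, ab.2 i) ≤ n),
      ab.1 + ab.2 ∈ T := by
    intro ab hab
    simp only [Finset.mem_filter, Finset.mem_product, hT, Finset.mem_Iic] at hab ⊢
    have hsum : ∑ i, (ab.1 + ab.2) i = (∑ i, ab.1 i) + (∑ i, ab.2 i) := by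
      rw [← Finset.sum_add_distrib]; rfl
    refine ⟨Pi.le_def.mpr fun i => ?_, by rw [hsum]; exact hab.2⟩
    have h3 : (ab.1 + ab.2) i ≤ ∑ j, (ab.1 + ab.2) j :=
      Finset.single_le_sum (f := fun j => (ab.1 + ab.2) j)
        (fun j _ => Nat.zero_le _) (Finset.mem_univ i)
    calc (ab.1 + ab.2) i ≤ ∑ j, (ab.1 + ab.2) j := h3
      _ ≤ n := by rw [hsum]; exact hab.2
  have hlow : ∑ ab ∈ (T ×ˢ T).filter (fun ab => (∑ i, ab.1 i) + (∑ i, ab.2 i) ≤ n),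
      (w ab.1 * w ab.2) • (mpd ab.1 f ξ * mpd ab.2 g ξ) = δ • cext n f ξ η := by
    rw [← Finset.sum_fiberwise_of_maps_to hmaps
      (fun ab => (w ab.1 * w ab.2) • (mpd ab.1 f ξ * mpd ab.2 g ξ))]
    have hfiber : ∀ γ ∈ T,
        (∑ ab ∈ ((T ×ˢ T).filter
            (fun ab => (∑ i, ab.1 i) + (∑ i, ab.2 i) ≤ n)).filter
            (fun ab => ab.1 + ab.2 = γ),
          (w ab.1 * w ab.2) • (mpd ab.1 f ξ * mpd ab.2 g ξ))
          = w γ • mpd γ (fun x => f x * g x) ξ := by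
      intro γ hγT
      have hγle : γ ≤ (fun _ => n) := by
        rw [hT] at hγT
        exact Finset.mem_Iic.mp (Finset.mem_filter.mp hγT).1
      have hγn : ∑ i, γ i ≤ n := (Finset.mem_filter.mp hγT).2
      rw [leibniz hU hf hg (∑ j, γ j) γ rfl ξ hξ, Finset.smul_sum]
      refine Finset.sum_nbij' (fun ab => ab.1) (fun α => (α, γ - α)) ?_ ?_ ?_ ?_ ?_
      · intro ab hab
        rw [Finset.mem_filter, Finset.mem_filter, Finset.mem_product] at hab
        obtain ⟨⟨-, -⟩, habγ⟩ := hab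
        rw [Finset.mem_Iic]
        refine Pi.le_def.mpr fun i => ?_
        have h5 : ab.1 i + ab.2 i = γ i := congrFun habγ i
        omega
      · intro α hα
        rw [Finset.mem_Iic] at hα
        have hαle := Pi.le_def.mp hα
        have hsum3 : ∀ i, α i + (γ - α) i = γ i := fun i => by
          show α i + (γ i - α i) = γ i
          have := hαle i; omega
        have hsumeq : (∑ i, α i) + (∑ i, (γ - α) i) = ∑ i, γ i := by
          rw [← Finset.sum_add_distrib]
          exact Finset.sum_congr rfl fun i _ => hsum3 i
        rw [Finset.mem_filter, Finset.mem_filter, Finset.mem_product]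
        refine ⟨⟨⟨?_, ?_⟩, ?_⟩, ?_⟩
        · rw [hT, Finset.mem_filter, Finset.mem_Iic]
          refine ⟨le_trans hα hγle, ?_⟩
          calc ∑ i, α i ≤ ∑ i, γ i := Finset.sum_le_sum fun i _ => hαle i
            _ ≤ n := hγn
        · rw [hT, Finset.mem_filter, Finset.mem_Iic]
          constructor
          · refine Pi.le_def.mpr fun i => ?_
            calc (γ - α) i ≤ γ i := by show γ i - α i ≤ γ i; omega
              _ ≤ n := (Pi.le_def.mp hγle) i
          · calc ∑ i, (γ - α) i ≤ ∑ i, γ i :=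
                Finset.sum_le_sum fun i _ => by show γ i - α i ≤ γ i; omega
              _ ≤ n := hγn
        · show (∑ i, α i) + (∑ i, (γ - α) i) ≤ n
          rw [hsumeq]; exact hγn
        · show α + (γ - α) = γ
          funext i; exact hsum3 i
      · intro ab hab
        rw [Finset.mem_filter, Finset.mem_filter, Finset.mem_product] at hab
        obtain ⟨⟨-, -⟩, habγ⟩ := hab
        have h4 : γ - ab.1 = ab.2 := by
          funext i
          have h5 : ab.1 i + ab.2 i = γ i := congrFun habγ i
          show γ i - ab.1 i = ab.2 i
          omega
        show (ab.1, γ - ab.1) = ab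
        rw [h4]
      · intro α _
        rfl
      · intro ab hab
        rw [Finset.mem_filter, Finset.mem_filter, Finset.mem_product] at hab
        obtain ⟨⟨-, -⟩, habγ⟩ := hab
        have h5 : ∀ i, ab.1 i + ab.2 i = γ i := fun i => congrFun habγ i
        have h4 : γ - ab.1 = ab.2 := by
          funext i
          show γ i - ab.1 i = ab.2 i
          have := h5 i; omega
        have hab1le : ab.1 ≤ γ := Pi.le_def.mpr fun i => by have := h5 i; omega
        rw [smul_smul, h4]
        congr 1
        have hFα : (∏ i, ((ab.1 i).factorial : ℂ)) ≠ 0 :=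
          Finset.prod_ne_zero_iff.mpr fun i _ =>
            Nat.cast_ne_zero.mpr (Nat.factorial_ne_zero _)
        have hFβ : (∏ i, ((ab.2 i).factorial : ℂ)) ≠ 0 :=
          Finset.prod_ne_zero_iff.mpr fun i _ =>
            Nat.cast_ne_zero.mpr (Nat.factorial_ne_zero _)
        have hFγ : (∏ i, ((γ i).factorial : ℂ)) ≠ 0 :=
          Finset.prod_ne_zero_iff.mpr fun i _ =>
            Nat.cast_ne_zero.mpr (Nat.factorial_ne_zero _)
        have hηprod : (∏ i, (η i:ℂ) ^ (ab.1 i)) * (∏ i, (η i:ℂ) ^ (ab.2 i))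
            = ∏ i, (η i:ℂ) ^ (γ i) := by
          rw [← Finset.prod_mul_distrib]
          refine Finset.prod_congr rfl fun i _ => ?_
          rw [← pow_add, h5 i]
        have hIpow : Complex.I ^ (∑ i, γ i)
            = Complex.I ^ (∑ i, ab.1 i) * Complex.I ^ (∑ i, ab.2 i) := by
          rw [← pow_add]
          congr 1
          rw [← Finset.sum_add_distrib]
          exact (Finset.sum_congr rfl fun i _ => (h5 i).symm)
        have hfac := fact_identity (γ := γ) (α := ab.1) hab1le
        rw [h4] at hfac
        have hfacC : (∏ i, ((γ i).factorial : ℂ))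
            = ((∏ j, (γ j).choose (ab.1 j) : ℕ) : ℂ) *
              ((∏ i, ((ab.1 i).factorial : ℂ)) * (∏ i, ((ab.2 i).factorial : ℂ))) := by
          exact_mod_cast congrArg (fun k : ℕ => (k : ℂ)) hfac.symm
        rw [hw]
        rw [div_mul_div_comm, div_mul_eq_mul_div,
          div_eq_div_iff (mul_ne_zero hFα hFβ) hFγ]
        rw [hfacC, ← hηprod, hIpow]
        ring
    rw [Finset.sum_congr rfl hfiber]
    have hdelta : ∀ γ ∈ T, w γ • mpd γ (fun x => f x * g x) ξ
        = δ • (w γ • mpd γ f ξ) := by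
      intro γ _
      rw [mpd_congrOn hU hfg γ hξ, mpd_const_smul hU hf δ γ hξ, smul_comm]
    rw [Finset.sum_congr rfl hdelta, ← Finset.smul_sum, ← h1]
  rw [hprod, hsplit, hlow, add_sub_cancel_left]

end KeyAlgebra

end CextAlgebra


open scoped ContDiff in
theorem stmt_6 (d N mm : ℕ) (K : Set (ℝ × EuclideanSpace ℝ (Fin d)))
    (π : Fin mm → (ℝ × EuclideanSpace ℝ (Fin d)) → EuclideanSpace ℝ (Fin d) →
      Matrix (Fin N) (Fin N) ℂ)
    (hπ : ∀ l, ContDiffOn ℝ (⊤ : ℕ∞)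
      (fun w : (ℝ × EuclideanSpace ℝ (Fin d)) × EuclideanSpace ℝ (Fin d) => π l w.1 w.2)
      (K ×ˢ {ξ : EuclideanSpace ℝ (Fin d) | ξ ≠ 0}))
    (horth : ∀ l l', ∀ p ∈ K, ∀ ξ : EuclideanSpace ℝ (Fin d), ξ ≠ 0 →
      π l p ξ * π l' p ξ = if l = l' then π l p ξ else 0) :
    ∀ n : ℕ, ∀ l l' : Fin mm,
    ∀ K₀ : Set (ℝ × EuclideanSpace ℝ (Fin d)), IsCompact K₀ → K₀ ⊆ K →
    ∀ Ξ : Set (EuclideanSpace ℝ (Fin d)), IsCompact Ξ → Ξ ⊆ {ξ | ξ ≠ 0} →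
      ∃ C : ℝ, ∀ p ∈ K₀, ∀ ξ ∈ Ξ, ∀ η : EuclideanSpace ℝ (Fin d), ‖η‖ ≤ 1 →
        ‖cext n (π l p) ξ η * cext n (π l' p) ξ η -
            (if l = l' then (1 : ℂ) else 0) • cext n (π l p) ξ η‖ ≤ C * ‖η‖ ^ (n + 1) := by
  intro n l l' K₀ hK₀c hK₀K Ξ hΞc hΞU
  classical
  set U : Set (EuclideanSpace ℝ (Fin d)) := {ξ | ξ ≠ 0} with hUdef
  have hU : IsOpen U := isOpen_ne
  set B : Finset (Fin d → ℕ) := Finset.Iic (fun _ => n) with hB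
  set T : Finset (Fin d → ℕ) := B.filter (fun γ => ∑ i, γ i ≤ n) with hT
  -- uniform bound on the iterated partial derivatives over the compact set
  have hcontsum : ContinuousOn
      (fun z : (ℝ × EuclideanSpace ℝ (Fin d)) × EuclideanSpace ℝ (Fin d) =>
        ∑ γ ∈ B, (‖mpd γ (π l z.1) z.2‖ + ‖mpd γ (π l' z.1) z.2‖)) (K ×ˢ U) := by
    refine continuousOn_finset_sum _ fun γ _ => ContinuousOn.add ?_ ?_
    · exact (mpd_continuousOn (F := fun w => π l w.1 w.2) (hπ l) γ).norm
    · exact (mpd_continuousOn (F := fun w => π l' w.1 w.2) (hπ l') γ).norm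
  obtain ⟨Cb, hCbb⟩ := (hK₀c.prod hΞc).exists_bound_of_continuousOn
    (hcontsum.mono (Set.prod_mono hK₀K hΞU))
  have hMb : ∀ γ ∈ B, ∀ p ∈ K₀, ∀ ξ ∈ Ξ,
      ‖mpd γ (π l p) ξ‖ ≤ Cb ∧ ‖mpd γ (π l' p) ξ‖ ≤ Cb := by
    intro γ hγ p hp ξ hξ
    have h1 := hCbb (p, ξ) (Set.mk_mem_prod hp hξ)
    rw [Real.norm_eq_abs] at h1
    have h2 : (∑ γ ∈ B, (‖mpd γ (π l p) ξ‖ + ‖mpd γ (π l' p) ξ‖)) ≤ Cb :=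
      (le_abs_self _).trans h1
    have h3 : ‖mpd γ (π l p) ξ‖ + ‖mpd γ (π l' p) ξ‖
        ≤ ∑ γ ∈ B, (‖mpd γ (π l p) ξ‖ + ‖mpd γ (π l' p) ξ‖) :=
      Finset.single_le_sum (f := fun γ => ‖mpd γ (π l p) ξ‖ + ‖mpd γ (π l' p) ξ‖)
        (fun γ _ => add_nonneg (norm_nonneg _) (norm_nonneg _)) hγ
    constructor
    · calc ‖mpd γ (π l p) ξ‖ ≤ _ + _ := le_add_of_nonneg_right (norm_nonneg _)
        _ ≤ _ := h3
        _ ≤ Cb := h2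
    · calc ‖mpd γ (π l' p) ξ‖ ≤ _ + _ := le_add_of_nonneg_left (norm_nonneg _)
        _ ≤ _ := h3
        _ ≤ Cb := h2
  refine ⟨(B.card * B.card : ℕ) * (‖mulL (N := N)‖ * Cb * Cb), ?_⟩
  intro p hp ξ hξ η hη
  have hξU : ξ ∈ U := hΞU hξ
  have hCb0 : (0:ℝ) ≤ Cb := by
    have h0B : (0 : Fin d → ℕ) ∈ B := by
      rw [hB, Finset.mem_Iic]
      exact Pi.le_def.mpr fun i => Nat.zero_le n
    exact (norm_nonneg _).trans (hMb 0 h0B p hp ξ hξ).1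
  -- slice smoothness
  have hslice : ∀ lx : Fin mm, ContDiffOn ℝ ∞ (π lx p) U := by
    intro lx
    have hι : ContDiff ℝ (⊤ : ℕ∞) (fun ζ : EuclideanSpace ℝ (Fin d) =>
        ((p, ζ) : (ℝ × EuclideanSpace ℝ (Fin d)) × EuclideanSpace ℝ (Fin d))) :=
      contDiff_const.prodMk contDiff_id
    have h := (hπ lx).comp hι.contDiffOn
      (fun ζ hζ => Set.mk_mem_prod (hK₀K hp) hζ)
    exact h.of_le (by simp)
  -- orthogonality as EqOn
  set δ : ℂ := if l = l' then (1:ℂ) else 0 with hδ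
  have hfg : Set.EqOn (fun x => π l p x * π l' p x) (fun x => δ • π l p x) U := by
    intro x hx
    have h := horth l l' p (hK₀K hp) x hx
    by_cases hll : l = l'
    · simp only [hδ, if_pos hll]
      simpa [hll] using h
    · simp only [hδ, if_neg hll]
      rw [zero_smul]
      simpa [hll] using h
  have hkey := key_algebra hU (hslice l) (hslice l') δ hfg n hξU η
  rw [hkey]
  -- bound the high-order sum
  set Hi := ((T ×ˢ T).filter
    (fun ab : (Fin d → ℕ) × (Fin d → ℕ) => ¬((∑ i, ab.1 i) + (∑ i, ab.2 i) ≤ n))) with hHi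
  have hterm : ∀ ab ∈ Hi,
      ‖(((Complex.I ^ (∑ i, ab.1 i) * ∏ i, (η i : ℂ) ^ ab.1 i) /
              (∏ i, ((ab.1 i).factorial : ℂ))) *
           ((Complex.I ^ (∑ i, ab.2 i) * ∏ i, (η i : ℂ) ^ ab.2 i) /
              (∏ i, ((ab.2 i).factorial : ℂ)))) •
            (mpd ab.1 (π l p) ξ * mpd ab.2 (π l' p) ξ)‖
        ≤ ‖η‖ ^ (n + 1) * (‖mulL (N := N)‖ * Cb * Cb) := by
    intro ab hab
    rw [hHi, Finset.mem_filter, Finset.mem_product] at hab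
    obtain ⟨⟨haT, hbT⟩, hhigh⟩ := hab
    have haB : ab.1 ∈ B := (Finset.mem_filter.mp haT).1
    have hbB : ab.2 ∈ B := (Finset.mem_filter.mp hbT).1
    rw [norm_smul]
    have hprodnn : ∀ β : Fin d → ℕ, (0:ℝ) ≤ ∏ i, |η i| ^ β i :=
      fun β => Finset.prod_nonneg fun i _ => pow_nonneg (abs_nonneg _) _
    have e1 : ∀ β : Fin d → ℕ,
        ‖((Complex.I ^ (∑ i, β i) * ∏ i, (η i : ℂ) ^ β i) /
            (∏ i, ((β i).factorial : ℂ)))‖ ≤ ∏ i, |η i| ^ β i := by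
      intro β
      rw [norm_div, norm_mul, norm_pow, Complex.norm_I, one_pow, one_mul]
      have hden : (1:ℝ) ≤ ‖(∏ i, ((β i).factorial : ℂ))‖ := by
        have hc : (∏ i, ((β i).factorial : ℂ)) = ((∏ i, (β i).factorial : ℕ) : ℂ) := by
          push_cast; ring
        rw [hc, Complex.norm_natCast]
        exact_mod_cast Nat.one_le_iff_ne_zero.mpr
          (Finset.prod_ne_zero_iff.mpr fun i _ => Nat.factorial_ne_zero _)
      have hnum : ‖(∏ i, (η i : ℂ) ^ β i)‖ = ∏ i, |η i| ^ β i := by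
        rw [norm_prod]
        exact Finset.prod_congr rfl fun i _ => by
          rw [norm_pow, Complex.norm_real, Real.norm_eq_abs]
      calc ‖(∏ i, (η i : ℂ) ^ β i)‖ / ‖(∏ i, ((β i).factorial : ℂ))‖
          ≤ ‖(∏ i, (η i : ℂ) ^ β i)‖ := div_le_self (norm_nonneg _) hden
        _ = ∏ i, |η i| ^ β i := hnum
    have hwbound : ‖(((Complex.I ^ (∑ i, ab.1 i) * ∏ i, (η i : ℂ) ^ ab.1 i) /
            (∏ i, ((ab.1 i).factorial : ℂ))) *
         ((Complex.I ^ (∑ i, ab.2 i) * ∏ i, (η i : ℂ) ^ ab.2 i) /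
            (∏ i, ((ab.2 i).factorial : ℂ))))‖ ≤ ‖η‖ ^ (n + 1) := by
      rw [norm_mul]
      calc ‖_‖ * ‖_‖ ≤ (∏ i, |η i| ^ ab.1 i) * (∏ i, |η i| ^ ab.2 i) :=
            mul_le_mul (e1 ab.1) (e1 ab.2) (norm_nonneg _) (hprodnn ab.1)
        _ = ∏ i, |η i| ^ (ab.1 i + ab.2 i) := by
            rw [← Finset.prod_mul_distrib]
            exact Finset.prod_congr rfl fun i _ => (pow_add _ _ _).symm
        _ ≤ ∏ i, ‖η‖ ^ (ab.1 i + ab.2 i) :=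
            Finset.prod_le_prod (fun i _ => pow_nonneg (abs_nonneg _) _)
              (fun i _ => pow_le_pow_left₀ (abs_nonneg _) (abs_coord_le η i) _)
        _ = ‖η‖ ^ (∑ i, (ab.1 i + ab.2 i)) := Finset.prod_pow_eq_pow_sum _ _ _
        _ ≤ ‖η‖ ^ (n + 1) := by
            apply pow_le_pow_of_le_one (norm_nonneg η) hη
            have hs : ∑ i, (ab.1 i + ab.2 i) = (∑ i, ab.1 i) + (∑ i, ab.2 i) :=
              Finset.sum_add_distrib
            omega
    have hAB : ‖mpd ab.1 (π l p) ξ * mpd ab.2 (π l' p) ξ‖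
        ≤ ‖mulL (N := N)‖ * Cb * Cb := by
      have h := ContinuousLinearMap.le_opNorm₂ (mulL (N := N))
        (mpd ab.1 (π l p) ξ) (mpd ab.2 (π l' p) ξ)
      erw [mulL_apply] at h
      refine h.trans ?_
      have h1 := (hMb ab.1 haB p hp ξ hξ).1
      have h2 := (hMb ab.2 hbB p hp ξ hξ).2
      exact mul_le_mul (mul_le_mul_of_nonneg_left h1 (ContinuousLinearMap.opNorm_nonneg _)) h2
        (norm_nonneg _) (mul_nonneg (ContinuousLinearMap.opNorm_nonneg _) hCb0)
    exact mul_le_mul hwbound hAB (norm_nonneg _) (pow_nonneg (norm_nonneg _) _)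
  have hmcb0 : (0:ℝ) ≤ ‖mulL (N := N)‖ * Cb * Cb :=
    mul_nonneg (mul_nonneg (ContinuousLinearMap.opNorm_nonneg _) hCb0) hCb0
  refine le_trans (norm_sum_le _ _) ?_
  refine le_trans (Finset.sum_le_sum hterm) ?_
  rw [Finset.sum_const, nsmul_eq_mul]
  have hcard : ((Hi.card : ℕ) : ℝ) ≤ ((B.card * B.card : ℕ) : ℝ) := by
    have h1 : Hi.card ≤ (T ×ˢ T).card := Finset.card_filter_le _ _
    have h2 : (T ×ˢ T).card = T.card * T.card := Finset.card_product _ _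
    have h3 : T.card ≤ B.card := Finset.card_filter_le _ _
    have : Hi.card ≤ B.card * B.card := by
      calc Hi.card ≤ T.card * T.card := by rw [← h2]; exact h1
        _ ≤ B.card * B.card := Nat.mul_le_mul h3 h3
    exact_mod_cast this
  calc (Hi.card : ℝ) * (‖η‖ ^ (n + 1) * (‖mulL (N := N)‖ * Cb * Cb))
      ≤ ((B.card * B.card : ℕ) : ℝ) * (‖η‖ ^ (n + 1) * (‖mulL (N := N)‖ * Cb * Cb)) :=
        mul_le_mul_of_nonneg_right hcard
          (mul_nonneg (pow_nonneg (norm_nonneg η) _) hmcb0)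
    _ = ((B.card * B.card : ℕ) : ℝ) * (‖mulL (N := N)‖ * Cb * Cb) * ‖η‖ ^ (n + 1) := by
        ring

end Stmt6

/-- **Approximate orthogonality of the extended projectors.**
If the smooth matrix-valued `π_l` on `K × (ℝ^d \ {0})` satisfy `π_l π_{l'} = δ_{ll'} π_l`,
then for every `n`, compact `K₀ ⊆ K` and compact `Ξ ⊂ ℝ^d \ {0}` there is `C` with
`‖π̃_l⁽ⁿ⁾ π̃_{l'}⁽ⁿ⁾ − δ_{ll'} π̃_l⁽ⁿ⁾‖ ≤ C|η|^{n+1}` for `(t,x) ∈ K₀`, `ξ ∈ Ξ`, `|η| ≤ 1`. -/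
theorem stmt_6 (d N mm : ℕ) (K : Set (ℝ × EuclideanSpace ℝ (Fin d)))
    (π : Fin mm → (ℝ × EuclideanSpace ℝ (Fin d)) → EuclideanSpace ℝ (Fin d) →
      Matrix (Fin N) (Fin N) ℂ)
    (hπ : ∀ l, ContDiffOn ℝ (⊤ : ℕ∞)
      (fun w : (ℝ × EuclideanSpace ℝ (Fin d)) × EuclideanSpace ℝ (Fin d) => π l w.1 w.2)
      (K ×ˢ {ξ : EuclideanSpace ℝ (Fin d) | ξ ≠ 0}))
    (horth : ∀ l l', ∀ p ∈ K, ∀ ξ : EuclideanSpace ℝ (Fin d), ξ ≠ 0 →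
      π l p ξ * π l' p ξ = if l = l' then π l p ξ else 0) :
    ∀ n : ℕ, ∀ l l' : Fin mm,
    ∀ K₀ : Set (ℝ × EuclideanSpace ℝ (Fin d)), IsCompact K₀ → K₀ ⊆ K →
    ∀ Ξ : Set (EuclideanSpace ℝ (Fin d)), IsCompact Ξ → Ξ ⊆ {ξ | ξ ≠ 0} →
      ∃ C : ℝ, ∀ p ∈ K₀, ∀ ξ ∈ Ξ, ∀ η : EuclideanSpace ℝ (Fin d), ‖η‖ ≤ 1 →
        ‖cext n (π l p) ξ η * cext n (π l' p) ξ η -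
            (if l = l' then (1 : ℂ) else 0) • cext n (π l p) ξ η‖ ≤ C * ‖η‖ ^ (n + 1) :=
  Stmt6.stmt_6 d N mm K π hπ horth
end

section
/- Let A : K × (ℝ^d \ {0}) → End(ℂ^N) be smooth and Hermitian-valued, K ⊆ ℝ^{1+d}, and suppose U : K × (ℝ^d \ {0}) → End(ℂ^N) is smooth with U(t,x,ξ) unitary for every argument and U A U* = diag(λ₁, …, λ_N) pointwise, where λ₁, …, λ_N : K × (ℝ^d \ {0}) → ℝ are smooth (eigenvalues counted with multiplicity). Set V = U*. Then for every integer n ≥ 0, every compact K₀ ⊆ K and compact Ξ ⊂ ℝ^d \ {0} there is a constant C such that for all (t,x) ∈ K₀, ξ ∈ Ξ, |η| ≤ 1: ‖Ũ⁽ⁿ⁾Ṽ⁽ⁿ⁾ − I‖ ≤ C|η|^{n+1}, ‖Ṽ⁽ⁿ⁾Ũ⁽ⁿ⁾ − I‖ ≤ C|η|^{n+1}, and ‖Ũ⁽ⁿ⁾ Ã⁽ⁿ⁾ Ṽ⁽ⁿ⁾ − diag(λ̃₁⁽ⁿ⁾, …, λ̃_N⁽ⁿ⁾)‖ ≤ C|η|^{n+1},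 all extensions evaluated at (t,x,ξ+iη). -/
open scoped Matrix
attribute [local instance] Matrix.normedAddCommGroup Matrix.normedSpace

namespace CextAux

variable {m : ℕ} {Ω : Set (EuclideanSpace ℝ (Fin m))}
variable {E : Type*} [NormedAddCommGroup E] [NormedSpace ℝ E]
variable {f g : EuclideanSpace ℝ (Fin m) → E} {i : Fin m}

lemma pd_congr (hΩ : IsOpen Ω) (h : Set.EqOn f g Ω) : Set.EqOn (pd i f) (pd i g) Ω := by
  intro x hx
  unfold pd
  rw [Filter.EventuallyEq.fderiv_eq (h.eventuallyEq_of_mem (hΩ.mem_nhds hx))]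

lemma pdIter_congr (hΩ : IsOpen Ω) (h : Set.EqOn f g Ω) (k : ℕ) :
    Set.EqOn ((pd i)^[k] f) ((pd i)^[k] g) Ω := by
  induction k with
  | zero => simpa using h
  | succ k ih =>
    simpa [Function.iterate_succ_apply'] using pd_congr hΩ ih

lemma pd_contDiffOn (hΩ : IsOpen Ω) (hf : ContDiffOn ℝ (⊤ : ℕ∞) f Ω) :
    ContDiffOn ℝ (⊤ : ℕ∞) (pd i f) Ω := by
  have h1 : ContDiffOn ℝ (⊤ : ℕ∞) (fderiv ℝ f) Ω := hf.fderiv_of_isOpen hΩ (by simp)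
  exact h1.clm_apply contDiffOn_const

lemma pdIter_contDiffOn (hΩ : IsOpen Ω) (hf : ContDiffOn ℝ (⊤ : ℕ∞) f Ω) (k : ℕ) :
    ContDiffOn ℝ (⊤ : ℕ∞) ((pd i)^[k] f) Ω := by
  induction k with
  | zero => simpa using hf
  | succ k ih => rw [Function.iterate_succ_apply']; exact pd_contDiffOn hΩ ih

lemma diffAt (hΩ : IsOpen Ω) (hf : ContDiffOn ℝ (⊤ : ℕ∞) f Ω) {x} (hx : x ∈ Ω) :
    DifferentiableAt ℝ f x :=
  ((hf.differentiableOn (by simp [le_top])) x hx).differentiableAt (hΩ.mem_nhds hx)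

lemma pd_add {x} (hf : DifferentiableAt ℝ f x) (hg : DifferentiableAt ℝ g x) :
    pd i (fun y => f y + g y) x = pd i f x + pd i g x := by
  unfold pd; rw [fderiv_fun_add hf hg]; rfl

lemma pd_sum {ι : Type*} {s : Finset ι} {F : ι → EuclideanSpace ℝ (Fin m) → E} {x}
    (hF : ∀ j ∈ s, DifferentiableAt ℝ (F j) x) :
    pd i (fun y => ∑ j ∈ s, F j y) x = ∑ j ∈ s, pd i (F j) x := by
  unfold pd; rw [fderiv_fun_sum hF]; simp

lemma pd_const_smul {R : Type*} [Semiring R] [Module R E] [SMulCommClass ℝ R E]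
    [ContinuousConstSMul R E] {x} (hf : DifferentiableAt ℝ f x) (c : R) :
    pd i (fun y => c • f y) x = c • pd i f x := by
  unfold pd; rw [fderiv_fun_const_smul hf c]; rfl

end CextAux

section Mul
variable {N : ℕ}

noncomputable instance matCLMNormedGroup (N : ℕ) :
    SeminormedAddCommGroup (Matrix (Fin N) (Fin N) ℂ →L[ℝ] Matrix (Fin N) (Fin N) ℂ) :=
  ContinuousLinearMap.toSeminormedAddCommGroup

noncomputable instance matCLMNormedSpace (N : ℕ) :
    NormedSpace ℝ (Matrix (Fin N) (Fin N) ℂ →L[ℝ] Matrix (Fin N) (Fin N) ℂ) :=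
  ContinuousLinearMap.toNormedSpace

noncomputable instance matCLM2NormedGroup (N : ℕ) : SeminormedAddCommGroup
    (Matrix (Fin N) (Fin N) ℂ →L[ℝ] Matrix (Fin N) (Fin N) ℂ →L[ℝ] Matrix (Fin N) (Fin N) ℂ) :=
  ContinuousLinearMap.toSeminormedAddCommGroup

noncomputable def mulL (N : ℕ) :
    Matrix (Fin N) (Fin N) ℂ →L[ℝ] Matrix (Fin N) (Fin N) ℂ →L[ℝ] Matrix (Fin N) (Fin N) ℂ :=
  LinearMap.toContinuousLinearMap <|
    (LinearMap.toContinuousLinearMap.toLinearMap.comp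
      (LinearMap.mul ℝ (Matrix (Fin N) (Fin N) ℂ)))

@[simp] lemma mulL_apply (a b : Matrix (Fin N) (Fin N) ℂ) : mulL N a b = a * b := rfl

lemma norm_matrix_mul_le (a b : Matrix (Fin N) (Fin N) ℂ) :
    ‖a * b‖ ≤ ‖mulL N‖ * ‖a‖ * ‖b‖ := by
  exact (mulL N).le_opNorm₂ a b

namespace CextAux

variable {m : ℕ} {Ω : Set (EuclideanSpace ℝ (Fin m))}
variable {f g : EuclideanSpace ℝ (Fin m) → Matrix (Fin N) (Fin N) ℂ} {i : Fin m}

lemma pd_mul {x} (hf : DifferentiableAt ℝ f x) (hg : DifferentiableAt ℝ g x) :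
    pd i (fun y => f y * g y) x = pd i f x * g x + f x * pd i g x := by
  have h := ((mulL N).isBoundedBilinearMap.hasFDerivAt (f x, g x)).comp x
    (HasFDerivAt.prodMk hf.hasFDerivAt hg.hasFDerivAt)
  unfold pd
  have h2 : HasFDerivAt (fun y => f y * g y) _ x := h
  erw [h2.fderiv]
  show f x * (fderiv ℝ g x) (EuclideanSpace.single i 1) +
      (fderiv ℝ f x) (EuclideanSpace.single i 1) * g x = _
  exact add_comm _ _

lemma mul_contDiffOn (hΩ : IsOpen Ω) (hf : ContDiffOn ℝ (⊤ : ℕ∞) f Ω) (hg : ContDiffOn ℝ (⊤ : ℕ∞) g Ω) :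
    ContDiffOn ℝ (⊤ : ℕ∞) (fun y => f y * g y) Ω := by
  have : ContDiff ℝ (⊤ : ℕ∞) (fun p : Matrix (Fin N) (Fin N) ℂ × Matrix (Fin N) (Fin N) ℂ =>
      mulL N p.1 p.2) := (mulL N).isBoundedBilinearMap.contDiff
  exact this.comp_contDiffOn (hf.prodMk hg)

end CextAux
end Mul

namespace CextAux
section Leib1
variable {N m : ℕ} {Ω : Set (EuclideanSpace ℝ (Fin m))}
variable {f g : EuclideanSpace ℝ (Fin m) → Matrix (Fin N) (Fin N) ℂ} {i : Fin m}

lemma leib1 (hΩ : IsOpen Ω) (hf : ContDiffOn ℝ (⊤ : ℕ∞) f Ω) (hg : ContDiffOn ℝ (⊤ : ℕ∞) g Ω) (k : ℕ) :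
    Set.EqOn ((pd i)^[k] (fun x => f x * g x))
      (fun x => ∑ j ∈ Finset.range (k + 1),
        ((k.choose j : ℂ)) • ((pd i)^[j] f x * (pd i)^[k - j] g x)) Ω := by
  induction k with
  | zero => intro x hx; simp
  | succ k ih =>
    intro x hx
    rw [Function.iterate_succ_apply']
    rw [pd_congr hΩ ih hx]
    have hdterm : ∀ j ∈ Finset.range (k + 1), DifferentiableAt ℝ
        (fun y => ((k.choose j : ℂ)) • ((pd i)^[j] f y * (pd i)^[k - j] g y)) x := by
      intro j _
      exact diffAt hΩ ((mul_contDiffOn hΩ (pdIter_contDiffOn hΩ hf j)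
        (pdIter_contDiffOn hΩ hg (k - j))).const_smul _) hx
    rw [pd_sum hdterm]
    have hterm : ∀ j ∈ Finset.range (k + 1),
        pd i (fun y => ((k.choose j : ℂ)) • ((pd i)^[j] f y * (pd i)^[k - j] g y)) x
        = ((k.choose j : ℂ)) • ((pd i)^[j + 1] f x * (pd i)^[k - j] g x)
          + ((k.choose j : ℂ)) • ((pd i)^[j] f x * (pd i)^[k - j + 1] g x) := by
      intro j _
      have hu := diffAt hΩ (pdIter_contDiffOn (i := i) hΩ hf j) hx
      have hv := diffAt hΩ (pdIter_contDiffOn (i := i) hΩ hg (k - j)) hx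
      have huv : DifferentiableAt ℝ (fun y => (pd i)^[j] f y * (pd i)^[k - j] g y) x :=
        diffAt hΩ (mul_contDiffOn hΩ (pdIter_contDiffOn hΩ hf j)
          (pdIter_contDiffOn hΩ hg (k - j))) hx
      rw [pd_const_smul huv, pd_mul hu hv, smul_add,
        ← Function.iterate_succ_apply' (pd i) j, ← Function.iterate_succ_apply' (pd i) (k - j)]
    rw [Finset.sum_congr rfl hterm, Finset.sum_add_distrib]
    have pascal : ∀ j : ℕ, (((k+1).choose (j+1) : ℕ) : ℂ)
        = ((k.choose j : ℕ) : ℂ) + ((k.choose (j+1) : ℕ) : ℂ) := by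
      intro j; rw [Nat.choose_succ_succ]; push_cast; ring
    have e1 : ∑ j ∈ Finset.range (k+1),
          ((k.choose j : ℂ)) • ((pd i)^[j + 1] f x * (pd i)^[k - j] g x)
        = ∑ j ∈ Finset.range (k+1),
          ((k.choose j : ℂ)) • ((pd i)^[j + 1] f x * (pd i)^[k + 1 - (j+1)] g x) :=
      Finset.sum_congr rfl (fun j _ => by rw [Nat.succ_sub_succ])
    have e2 : ∑ j ∈ Finset.range (k+1),
          ((k.choose j : ℂ)) • ((pd i)^[j] f x * (pd i)^[k - j + 1] g x)
        = ∑ j ∈ Finset.range (k+2),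
          ((k.choose j : ℂ)) • ((pd i)^[j] f x * (pd i)^[k + 1 - j] g x) := by
      rw [Finset.sum_range_succ (fun j =>
        ((k.choose j : ℂ)) • ((pd i)^[j] f x * (pd i)^[k + 1 - j] g x)) (k+1)]
      simp only [Nat.choose_succ_self, Nat.cast_zero, zero_smul, add_zero]
      apply Finset.sum_congr rfl
      intro j hj
      rw [Nat.sub_add_comm (Nat.lt_succ_iff.mp (Finset.mem_range.mp hj))]
    rw [e1, e2]
    have splitR : (∑ j ∈ Finset.range (k+2),
          (((k+1).choose j : ℂ)) • ((pd i)^[j] f x * (pd i)^[k+1-j] g x))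
        = (∑ j ∈ Finset.range (k+1),
            ((k.choose j : ℂ)) • ((pd i)^[j+1] f x * (pd i)^[k+1-(j+1)] g x))
          + ∑ j ∈ Finset.range (k+2),
            ((k.choose j : ℂ)) • ((pd i)^[j] f x * (pd i)^[k+1-j] g x) := by
      rw [Finset.sum_range_succ' (fun j =>
        (((k+1).choose j : ℂ)) • ((pd i)^[j] f x * (pd i)^[k+1-j] g x)) (k+1)]
      rw [Finset.sum_range_succ' (fun j =>
        ((k.choose j : ℂ)) • ((pd i)^[j] f x * (pd i)^[k+1-j] g x)) (k+1)]
      simp only [pascal, add_smul, Finset.sum_add_distrib]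
      simp only [Nat.choose_zero_right, Nat.cast_one]
      abel
    rw [← splitR]
end Leib1
end CextAux

namespace CextAux
section Pds
variable {m : ℕ} {Ω : Set (EuclideanSpace ℝ (Fin m))}
variable {E : Type*} [NormedAddCommGroup E] [NormedSpace ℝ E]
variable {f g : EuclideanSpace ℝ (Fin m) → E} {i : Fin m}

noncomputable def pds (L : List (Fin m)) (α : Fin m → ℕ)
    (f : EuclideanSpace ℝ (Fin m) → E) : EuclideanSpace ℝ (Fin m) → E :=
  L.foldr (fun i g => (pd i)^[α i] g) f

lemma mpd_eq_pds (α : Fin m → ℕ) (f : EuclideanSpace ℝ (Fin m) → E) :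
    mpd α f = pds (List.finRange m) α f := rfl

lemma pds_nil (α : Fin m → ℕ) : pds ([] : List (Fin m)) α f = f := rfl

lemma pds_cons (L : List (Fin m)) (α : Fin m → ℕ) :
    pds (i :: L) α f = (pd i)^[α i] (pds L α f) := rfl

lemma pds_congr_idx {L : List (Fin m)} {α β : Fin m → ℕ} (h : ∀ i ∈ L, α i = β i) :
    pds L α f = pds L β f := by
  induction L with
  | nil => rfl
  | cons j L ih =>
    rw [pds_cons, pds_cons, ih (fun i hi => h i (List.mem_cons_of_mem j hi)),
      h j List.mem_cons_self]

lemma pds_contDiffOn (hΩ : IsOpen Ω) (hf : ContDiffOn ℝ (⊤ : ℕ∞) f Ω) (L : List (Fin m))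
    (α : Fin m → ℕ) : ContDiffOn ℝ (⊤ : ℕ∞) (pds L α f) Ω := by
  induction L with
  | nil => exact hf
  | cons j L ih => exact pdIter_contDiffOn hΩ ih _

lemma pds_congr_fun (hΩ : IsOpen Ω) (h : Set.EqOn f g Ω) (L : List (Fin m)) (α : Fin m → ℕ) :
    Set.EqOn (pds L α f) (pds L α g) Ω := by
  induction L with
  | nil => exact h
  | cons j L ih => exact pdIter_congr hΩ ih _

lemma pdIter_sum (hΩ : IsOpen Ω) {ι : Type*} {s : Finset ι}
    {F : ι → EuclideanSpace ℝ (Fin m) → E} (hF : ∀ j ∈ s, ContDiffOn ℝ (⊤ : ℕ∞) (F j) Ω) (k : ℕ) :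
    Set.EqOn ((pd i)^[k] (fun x => ∑ j ∈ s, F j x))
      (fun x => ∑ j ∈ s, (pd i)^[k] (F j) x) Ω := by
  induction k with
  | zero => intro x hx; simp
  | succ k ih =>
    intro x hx
    show (pd i)^[k+1] (fun x => ∑ j ∈ s, F j x) x = ∑ j ∈ s, (pd i)^[k+1] (F j) x
    rw [Function.iterate_succ_apply' (pd i) k]
    rw [pd_congr hΩ ih hx,
      pd_sum (fun j hj => diffAt hΩ (pdIter_contDiffOn hΩ (hF j hj) k) hx)]
    exact Finset.sum_congr rfl fun j _ =>
      congrFun (Function.iterate_succ_apply' (pd i) k (F j)).symm x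

lemma pdIter_smul (hΩ : IsOpen Ω) {R : Type*} [Semiring R] [Module R E] [SMulCommClass ℝ R E]
    [ContinuousConstSMul R E] (hf : ContDiffOn ℝ (⊤ : ℕ∞) f Ω) (c : R) (k : ℕ) :
    Set.EqOn ((pd i)^[k] (fun x => c • f x)) (fun x => c • (pd i)^[k] f x) Ω := by
  induction k with
  | zero => intro x hx; simp
  | succ k ih =>
    intro x hx
    show (pd i)^[k+1] (fun x => c • f x) x = c • (pd i)^[k+1] f x
    rw [Function.iterate_succ_apply' (pd i) k]
    rw [pd_congr hΩ ih hx,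
      pd_const_smul (diffAt hΩ (pdIter_contDiffOn hΩ hf k) hx) c,
      Function.iterate_succ_apply']

end Pds

section LeibP
variable {N m : ℕ} {Ω : Set (EuclideanSpace ℝ (Fin m))}
variable {f g : EuclideanSpace ℝ (Fin m) → Matrix (Fin N) (Fin N) ℂ}

/-- multi-indices bounded by `α` on `L` and zero off `L` -/
def Bs (L : List (Fin m)) (α : Fin m → ℕ) : Finset (Fin m → ℕ) :=
  Fintype.piFinset (fun i => Finset.range ((if i ∈ L then α i else 0) + 1))

lemma mem_Bs {L : List (Fin m)} {α β : Fin m → ℕ} :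
    β ∈ Bs L α ↔ ∀ i, β i ≤ if i ∈ L then α i else 0 := by
  simp [Bs, Fintype.mem_piFinset, Nat.lt_succ_iff]

lemma leibP (hΩ : IsOpen Ω) (hf : ContDiffOn ℝ (⊤ : ℕ∞) f Ω) (hg : ContDiffOn ℝ (⊤ : ℕ∞) g Ω)
    (L : List (Fin m)) (hL : L.Nodup) (α : Fin m → ℕ) :
    Set.EqOn (pds L α (fun x => f x * g x))
      (fun x => ∑ β ∈ Bs L α, ((∏ i, (α i).choose (β i) : ℕ) : ℂ) •
        (pds L β f x * pds L (fun i => α i - β i) g x)) Ω := by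
  induction L with
  | nil =>
    intro x hx
    have hBs : Bs ([] : List (Fin m)) α = {fun _ => 0} := by
      ext β
      simp [mem_Bs, funext_iff]
    rw [hBs]
    simp [pds_nil]
  | cons i L ih =>
    have hi : i ∉ L := (List.nodup_cons.mp hL).1
    have hLn : L.Nodup := (List.nodup_cons.mp hL).2
    intro x hx
    show pds (i :: L) α (fun y => f y * g y) x = ∑ β ∈ Bs (i :: L) α,
      ((∏ k, (α k).choose (β k) : ℕ) : ℂ) •
        (pds (i :: L) β f x * pds (i :: L) (fun k => α k - β k) g x)
    have h1 : pds (i :: L) α (fun y => f y * g y) x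
        = (pd i)^[α i] (fun y => ∑ β ∈ Bs L α, ((∏ k, (α k).choose (β k) : ℕ) : ℂ) •
            (pds L β f y * pds L (fun k => α k - β k) g y)) x := by
      rw [pds_cons]
      exact pdIter_congr hΩ (ih hLn) (α i) hx
    have h2 : (pd i)^[α i] (fun y => ∑ β ∈ Bs L α, ((∏ k, (α k).choose (β k) : ℕ) : ℂ) •
          (pds L β f y * pds L (fun k => α k - β k) g y)) x
        = ∑ β ∈ Bs L α, (pd i)^[α i] (fun y => ((∏ k, (α k).choose (β k) : ℕ) : ℂ) •
            (pds L β f y * pds L (fun k => α k - β k) g y)) x :=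
      pdIter_sum hΩ (fun β _ => ((mul_contDiffOn hΩ (pds_contDiffOn hΩ hf L β)
        (pds_contDiffOn hΩ hg L _)).const_smul _)) (α i) hx
    have step2 : ∀ β ∈ Bs L α,
        (pd i)^[α i] (fun y => ((∏ k, (α k).choose (β k) : ℕ) : ℂ) •
          (pds L β f y * pds L (fun k => α k - β k) g y)) x
        = ∑ j ∈ Finset.range (α i + 1),
            (((∏ k, (α k).choose (β k) : ℕ) : ℂ) * ((α i).choose j : ℂ)) •
            ((pd i)^[j] (pds L β f) x * (pd i)^[α i - j] (pds L (fun k => α k - β k) g) x) := by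
      intro β _
      have hsm : (pd i)^[α i] (fun y => ((∏ k, (α k).choose (β k) : ℕ) : ℂ) •
            (pds L β f y * pds L (fun k => α k - β k) g y)) x
          = ((∏ k, (α k).choose (β k) : ℕ) : ℂ) •
            (pd i)^[α i] (fun y => pds L β f y * pds L (fun k => α k - β k) g y) x :=
        pdIter_smul hΩ (mul_contDiffOn hΩ (pds_contDiffOn hΩ hf L β)
          (pds_contDiffOn hΩ hg L _)) _ (α i) hx
      have hlb : (pd i)^[α i] (fun y => pds L β f y * pds L (fun k => α k - β k) g y) x
          = ∑ j ∈ Finset.range (α i + 1), (((α i).choose j : ℕ) : ℂ) •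
              ((pd i)^[j] (pds L β f) x * (pd i)^[α i - j] (pds L (fun k => α k - β k) g) x) :=
        leib1 hΩ (pds_contDiffOn hΩ hf L β) (pds_contDiffOn hΩ hg L _) (α i) hx
      rw [hsm, hlb, Finset.smul_sum]
      exact Finset.sum_congr rfl (fun j _ => by rw [smul_smul])
    rw [h1, h2, Finset.sum_congr rfl step2]
    rw [← Finset.sum_product' (s := Bs L α) (t := Finset.range (α i + 1))]
    -- now reindex
    refine Finset.sum_nbij' (fun q => Function.update q.1 i q.2)
      (fun δ => (Function.update δ i 0, δ i)) ?_ ?_ ?_ ?_ ?_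
    · rintro ⟨β, j⟩ hq
      obtain ⟨hβ, hj⟩ := Finset.mem_product.mp hq
      rw [mem_Bs] at hβ ⊢
      intro k
      dsimp only
      by_cases hk : k = i
      · subst hk
        simp [Function.update_self, Nat.lt_succ_iff.mp (Finset.mem_range.mp hj)]
      · rw [Function.update_of_ne hk]
        have := hβ k
        by_cases hkL : k ∈ L <;> simp [hk, hkL, List.mem_cons] at this ⊢ <;> omega
    · intro δ hδ
      rw [mem_Bs] at hδ
      refine Finset.mem_product.mpr ⟨?_, ?_⟩
      · rw [mem_Bs]
        intro k
        dsimp only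
        by_cases hk : k = i
        · subst hk; simp [Function.update_self]
        · rw [Function.update_of_ne hk]
          have := hδ k
          by_cases hkL : k ∈ L <;> simp [hk, hkL, List.mem_cons] at this ⊢ <;> omega
      · have := hδ i
        simp [List.mem_cons] at this
        simpa [Finset.mem_range, Nat.lt_succ_iff] using this
    · rintro ⟨β, j⟩ hq
      obtain ⟨hβ, _⟩ := Finset.mem_product.mp hq
      have hβi : β i = 0 := by
        have := (mem_Bs.mp hβ) i
        simpa [hi] using this
      ext1
      · simp only
        funext k
        by_cases hk : k = i
        · subst hk; simp [Function.update_self, hβi]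
        · simp [Function.update_of_ne hk]
      · simp
    · intro δ _
      simp only
      funext k
      by_cases hk : k = i
      · subst hk; simp [Function.update_self]
      · simp [Function.update_of_ne hk]
    · rintro ⟨β, j⟩ hq
      obtain ⟨hβ, hj⟩ := Finset.mem_product.mp hq
      have hβi : β i = 0 := by
        have := (mem_Bs.mp hβ) i
        simpa [hi] using this
      simp only
      set δ := Function.update β i j with hδdef
      have hδL : ∀ k ∈ L, δ k = β k := by
        intro k hk
        have : k ≠ i := fun h => hi (h ▸ hk)
        rw [hδdef, Function.update_of_ne this]
      have hσL : ∀ k ∈ L, α k - δ k = α k - β k := fun k hk => by rw [hδL k hk]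
      have hcoef : (∏ k, (α k).choose (δ k)) = (∏ k, (α k).choose (β k)) * (α i).choose j := by
        have h1 : ∏ k, (α k).choose (δ k)
            = (α i).choose j * ∏ k ∈ Finset.univ.erase i, (α k).choose (δ k) := by
          rw [← Finset.mul_prod_erase Finset.univ _ (Finset.mem_univ i), hδdef,
            Function.update_self]
        have h2 : ∏ k, (α k).choose (β k)
            = 1 * ∏ k ∈ Finset.univ.erase i, (α k).choose (β k) := by
          rw [← Finset.mul_prod_erase Finset.univ _ (Finset.mem_univ i), hβi,
            Nat.choose_zero_right]
        have h3 : ∏ k ∈ Finset.univ.erase i, (α k).choose (δ k)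
            = ∏ k ∈ Finset.univ.erase i, (α k).choose (β k) := by
          apply Finset.prod_congr rfl
          intro k hk
          rw [hδdef, Function.update_of_ne (Finset.mem_erase.mp hk).1]
        rw [h1, h2, h3]; ring
      have e1 : pds (i :: L) δ f = (pd i)^[j] (pds L β f) := by
        rw [pds_cons, hδdef, Function.update_self, pds_congr_idx (β := β) hδL]
      have e2 : pds (i :: L) (fun k => α k - δ k) g
          = (pd i)^[α i - j] (pds L (fun k => α k - β k) g) := by
        rw [pds_cons]
        have hexp : α i - δ i = α i - j := by
          rw [hδdef, Function.update_self]
        rw [hexp, pds_congr_idx (β := fun k => α k - β k) hσL]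
      rw [e1, e2, hcoef]
      push_cast
      ring_nf
end LeibP
end CextAux

namespace CextAux
section CextId
variable {m N : ℕ} {Ω : Set (EuclideanSpace ℝ (Fin m))}

/-- ℕ-valued multi-indices of total degree ≤ n -/
def S' (m n : ℕ) : Finset (Fin m → ℕ) :=
  (Fintype.piFinset (fun _ : Fin m => Finset.range (n + 1))).filter (fun α => ∑ i, α i ≤ n)

lemma mem_S' {n : ℕ} {α : Fin m → ℕ} : α ∈ S' m n ↔ (∀ i, α i ≤ n) ∧ ∑ i, α i ≤ n := by
  simp [S', Fintype.mem_piFinset, Nat.lt_succ_iff]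

noncomputable def wgt (η : EuclideanSpace ℝ (Fin m)) (α : Fin m → ℕ) : ℂ :=
  (Complex.I ^ (∑ i, α i) * ∏ i, (η i : ℂ) ^ (α i)) / (∏ i, ((α i).factorial : ℂ))

variable {E : Type*} [NormedAddCommGroup E] [NormedSpace ℂ E]

lemma cext_eq (n : ℕ) (f : EuclideanSpace ℝ (Fin m) → E) (ξ η : EuclideanSpace ℝ (Fin m)) :
    cext n f ξ η = ∑ α ∈ S' m n, wgt η α • mpd α f ξ := by
  unfold cext
  refine Finset.sum_nbij' (fun α => fun k => (α k : ℕ))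
    (fun β => fun k => (⟨β k % (n + 1), Nat.mod_lt _ (Nat.succ_pos n)⟩ : Fin (n + 1)))
    ?_ ?_ ?_ ?_ ?_
  · intro α hα
    rw [mem_S']
    exact ⟨fun i => Nat.lt_succ_iff.mp (α i).is_lt, (Finset.mem_filter.mp hα).2⟩
  · intro β hβ
    refine Finset.mem_filter.mpr ⟨Finset.mem_univ _, ?_⟩
    have h1 := (mem_S'.mp hβ).1
    have h2 := (mem_S'.mp hβ).2
    calc ∑ i, ((⟨β i % (n + 1), Nat.mod_lt _ (Nat.succ_pos n)⟩ : Fin (n + 1)) : ℕ)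
        = ∑ i, β i := by
          apply Finset.sum_congr rfl
          intro i _
          exact Nat.mod_eq_of_lt (Nat.lt_succ_of_le (h1 i))
      _ ≤ n := h2
  · intro α _
    funext k
    exact Fin.ext (Nat.mod_eq_of_lt (α k).is_lt)
  · intro β hβ
    funext k
    exact Nat.mod_eq_of_lt (Nat.lt_succ_of_le ((mem_S'.mp hβ).1 k))
  · intro α _
    rfl

lemma coord_le_norm (η : EuclideanSpace ℝ (Fin m)) (i : Fin m) : |η i| ≤ ‖η‖ := by
  rw [EuclideanSpace.norm_eq]
  calc |η i| = Real.sqrt (‖η i‖ ^ 2) := by rw [Real.norm_eq_abs, Real.sqrt_sq_eq_abs]; exact (abs_abs _).symm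
    _ ≤ Real.sqrt (∑ j, ‖η j‖ ^ 2) := Real.sqrt_le_sqrt (Finset.single_le_sum
        (f := fun j => ‖η j‖ ^ 2) (fun j _ => sq_nonneg _) (Finset.mem_univ i))

lemma norm_wgt_le (η : EuclideanSpace ℝ (Fin m)) (α : Fin m → ℕ) :
    ‖wgt η α‖ ≤ ‖η‖ ^ (∑ i, α i) := by
  unfold wgt
  rw [norm_div, norm_mul]
  have h1 : ‖Complex.I ^ (∑ i, α i)‖ = 1 := by
    rw [norm_pow, Complex.norm_I, one_pow]
  have h2 : ‖∏ i, ((α i).factorial : ℂ)‖ ≥ 1 := by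
    rw [show (∏ i, ((α i).factorial : ℂ)) = ((∏ i, (α i).factorial : ℕ) : ℂ) by push_cast; rfl]
    rw [Complex.norm_natCast]
    exact_mod_cast Nat.one_le_iff_ne_zero.mpr (Finset.prod_ne_zero_iff.mpr
      (fun i _ => (α i).factorial_ne_zero))
  have h3 : ‖∏ i, (η i : ℂ) ^ (α i)‖ ≤ ‖η‖ ^ (∑ i, α i) := by
    rw [norm_prod]
    rw [← Finset.prod_pow_eq_pow_sum]
    apply Finset.prod_le_prod (fun i _ => norm_nonneg _)
    intro i _
    rw [norm_pow]
    apply pow_le_pow_left₀ (norm_nonneg _)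
    rw [Complex.norm_real]
    exact coord_le_norm η i
  calc ‖Complex.I ^ (∑ i, α i)‖ * ‖∏ i, (η i : ℂ) ^ (α i)‖ / ‖∏ i, ((α i).factorial : ℂ)‖
      ≤ ‖Complex.I ^ (∑ i, α i)‖ * ‖∏ i, (η i : ℂ) ^ (α i)‖ / 1 := by
        apply div_le_div_of_nonneg_left ?_ ?_ h2 |>.trans ?_
        · positivity
        · norm_num
        · norm_num
    _ = ‖∏ i, (η i : ℂ) ^ (α i)‖ := by rw [h1, one_mul, div_one]
    _ ≤ ‖η‖ ^ (∑ i, α i) := h3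

lemma wgt_mul (η : EuclideanSpace ℝ (Fin m)) (a b : Fin m → ℕ) :
    wgt η a * wgt η b
      = (∏ i, (((a i + b i).choose (a i) : ℕ) : ℂ)) * wgt η (fun i => a i + b i) := by
  have hFa : (∏ i, ((a i).factorial : ℂ)) ≠ 0 :=
    Finset.prod_ne_zero_iff.mpr (fun i _ => Nat.cast_ne_zero.mpr (a i).factorial_ne_zero)
  have hFb : (∏ i, ((b i).factorial : ℂ)) ≠ 0 :=
    Finset.prod_ne_zero_iff.mpr (fun i _ => Nat.cast_ne_zero.mpr (b i).factorial_ne_zero)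
  have hFc : (∏ i, (((a i + b i).factorial : ℕ) : ℂ)) ≠ 0 :=
    Finset.prod_ne_zero_iff.mpr (fun i _ => Nat.cast_ne_zero.mpr (a i + b i).factorial_ne_zero)
  have hkey : (∏ i, (((a i + b i).choose (a i) : ℕ) : ℂ)) *
      ((∏ i, ((a i).factorial : ℂ)) * (∏ i, ((b i).factorial : ℂ)))
      = ∏ i, (((a i + b i).factorial : ℕ) : ℂ) := by
    rw [← Finset.prod_mul_distrib, ← Finset.prod_mul_distrib]
    apply Finset.prod_congr rfl
    intro i _
    have := Nat.choose_mul_factorial_mul_factorial (Nat.le_add_right (a i) (b i))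
    rw [Nat.add_sub_cancel_left] at this
    push_cast [← this]
    ring
  have hI : Complex.I ^ (∑ i, a i) * Complex.I ^ (∑ i, b i)
      = Complex.I ^ (∑ i, (a i + b i)) := by
    rw [← pow_add, Finset.sum_add_distrib]
  have hP : (∏ i, (η i : ℂ) ^ (a i)) * (∏ i, (η i : ℂ) ^ (b i))
      = ∏ i, (η i : ℂ) ^ (a i + b i) := by
    rw [← Finset.prod_mul_distrib]
    exact Finset.prod_congr rfl (fun i _ => (pow_add _ _ _).symm)
  unfold wgt
  beta_reduce
  rw [div_mul_div_comm, mul_div_assoc']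
  rw [div_eq_div_iff (mul_ne_zero hFa hFb) hFc, ← hkey, ← hI, ← hP]
  ring
end CextId
end CextAux

namespace CextAux
section Key
variable {m N : ℕ} {Ω : Set (EuclideanSpace ℝ (Fin m))}
variable {f g h : EuclideanSpace ℝ (Fin m) → Matrix (Fin N) (Fin N) ℂ}
variable {ξ η : EuclideanSpace ℝ (Fin m)} {n : ℕ}

lemma good_eq (hΩ : IsOpen Ω) (hf : ContDiffOn ℝ (⊤ : ℕ∞) f Ω) (hg : ContDiffOn ℝ (⊤ : ℕ∞) g Ω)
    (hfg : Set.EqOn (fun x => f x * g x) h Ω) (hξ : ξ ∈ Ω) :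
    ∑ q ∈ (S' m n ×ˢ S' m n).filter (fun q => ∑ i, (q.1 i + q.2 i) ≤ n),
        (wgt η q.1 * wgt η q.2) • (mpd q.1 f ξ * mpd q.2 g ξ)
      = ∑ γ ∈ S' m n, wgt η γ • mpd γ h ξ := by
  have hR : ∀ γ ∈ S' m n, wgt η γ • mpd γ h ξ
      = ∑ β ∈ Bs (List.finRange m) γ,
          (wgt η γ * ((∏ i, (γ i).choose (β i) : ℕ) : ℂ)) •
            (mpd β f ξ * mpd (fun i => γ i - β i) g ξ) := by
    intro γ _
    have h1 : mpd γ h ξ = mpd γ (fun x => f x * g x) ξ := by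
      rw [mpd_eq_pds, mpd_eq_pds]
      exact (pds_congr_fun hΩ hfg (List.finRange m) γ hξ).symm
    have h2 : mpd γ (fun x => f x * g x) ξ = ∑ β ∈ Bs (List.finRange m) γ,
        ((∏ i, (γ i).choose (β i) : ℕ) : ℂ) • (mpd β f ξ * mpd (fun i => γ i - β i) g ξ) :=
      leibP hΩ hf hg (List.finRange m) (List.nodup_finRange m) γ hξ
    rw [h1, h2, Finset.smul_sum]
    exact Finset.sum_congr rfl fun β _ => by rw [smul_smul]
  rw [Finset.sum_congr rfl hR, Finset.sum_sigma']
  refine Finset.sum_nbij'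
    (fun q => (⟨fun i => q.1 i + q.2 i, q.1⟩ : (_ : Fin m → ℕ) × (Fin m → ℕ)))
    (fun p => (p.2, fun i => p.1 i - p.2 i)) ?_ ?_ ?_ ?_ ?_
  · rintro ⟨a, b⟩ hq
    rw [Finset.mem_filter, Finset.mem_product] at hq
    obtain ⟨⟨ha, hb⟩, hsum⟩ := hq
    simp only at hsum ha hb
    refine Finset.mem_sigma.mpr ⟨?_, ?_⟩
    · dsimp only
      rw [mem_S']
      refine ⟨fun i => ?_, hsum⟩
      have h1 : a i + b i ≤ ∑ k, (a k + b k) :=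
        Finset.single_le_sum (f := fun k => a k + b k) (fun k _ => Nat.zero_le _)
          (Finset.mem_univ i)
      exact le_trans h1 hsum
    · dsimp only
      rw [mem_Bs]
      intro i
      simp [List.mem_finRange]
  · rintro ⟨γ, β⟩ hp
    rw [Finset.mem_sigma] at hp
    obtain ⟨hγ, hβ⟩ := hp
    rw [mem_S'] at hγ
    rw [mem_Bs] at hβ
    dsimp only
    have hle : ∀ i, β i ≤ γ i := by
      intro i
      have := hβ i
      simpa [List.mem_finRange] using this
    rw [Finset.mem_filter, Finset.mem_product]
    refine ⟨⟨?_, ?_⟩, ?_⟩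
    · rw [mem_S']
      exact ⟨fun i => le_trans (hle i) (hγ.1 i),
        le_trans (Finset.sum_le_sum (fun i _ => hle i)) hγ.2⟩
    · rw [mem_S']
      exact ⟨fun i => le_trans (Nat.sub_le _ _) (hγ.1 i),
        le_trans (Finset.sum_le_sum (fun i _ => Nat.sub_le _ _)) hγ.2⟩
    · calc ∑ i, (β i + (γ i - β i)) = ∑ i, γ i :=
        Finset.sum_congr rfl (fun i _ => Nat.add_sub_cancel' (hle i))
      _ ≤ n := hγ.2
  · rintro ⟨a, b⟩ _
    simp only
    ext
    · rfl
    · simp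
  · rintro ⟨γ, β⟩ hp
    rw [Finset.mem_sigma] at hp
    have hle : ∀ i, β i ≤ γ i := by
      intro i
      have := (mem_Bs.mp hp.2) i
      simpa [List.mem_finRange] using this
    simp only
    refine Sigma.ext ?_ (heq_of_eq ?_)
    · funext i
      exact Nat.add_sub_cancel' (hle i)
    · rfl
  · rintro ⟨a, b⟩ _
    simp only
    rw [wgt_mul]
    have : (fun i => (a i + b i) - a i) = b := by
      funext i
      exact Nat.add_sub_cancel_left _ _
    rw [this, mul_comm (wgt η fun i => a i + b i)]
    norm_cast

lemma cext_mul_sub (hΩ : IsOpen Ω) (hf : ContDiffOn ℝ (⊤ : ℕ∞) f Ω) (hg : ContDiffOn ℝ (⊤ : ℕ∞) g Ω)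
    (hfg : Set.EqOn (fun x => f x * g x) h Ω) (hξ : ξ ∈ Ω) :
    cext n f ξ η * cext n g ξ η - cext n h ξ η
      = ∑ q ∈ (S' m n ×ˢ S' m n).filter (fun q => ¬ ∑ i, (q.1 i + q.2 i) ≤ n),
          (wgt η q.1 * wgt η q.2) • (mpd q.1 f ξ * mpd q.2 g ξ) := by
  have hprod : cext n f ξ η * cext n g ξ η
      = ∑ q ∈ S' m n ×ˢ S' m n, (wgt η q.1 * wgt η q.2) • (mpd q.1 f ξ * mpd q.2 g ξ) := by
    rw [cext_eq, cext_eq, Finset.sum_mul_sum, ← Finset.sum_product']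
    exact Finset.sum_congr rfl fun q _ => smul_mul_smul_comm _ _ _ _
  rw [hprod, ← Finset.sum_filter_add_sum_filter_not (S' m n ×ˢ S' m n)
    (fun q => ∑ i, (q.1 i + q.2 i) ≤ n), good_eq hΩ hf hg hfg hξ, cext_eq]
  abel

lemma key_est (hΩ : IsOpen Ω) (hf : ContDiffOn ℝ (⊤ : ℕ∞) f Ω) (hg : ContDiffOn ℝ (⊤ : ℕ∞) g Ω)
    (hfg : Set.EqOn (fun x => f x * g x) h Ω) (hξ : ξ ∈ Ω) (hη : ‖η‖ ≤ 1)
    {Mf Mg : ℝ} (hMf0 : 0 ≤ Mf) (hMg0 : 0 ≤ Mg)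
    (hMf : ∀ α ∈ S' m n, ‖mpd α f ξ‖ ≤ Mf) (hMg : ∀ α ∈ S' m n, ‖mpd α g ξ‖ ≤ Mg) :
    ‖cext n f ξ η * cext n g ξ η - cext n h ξ η‖
      ≤ ((S' m n ×ˢ S' m n).card * (‖mulL N‖ * Mf * Mg)) * ‖η‖ ^ (n + 1) := by
  rw [cext_mul_sub hΩ hf hg hfg hξ]
  refine (norm_sum_le _ _).trans ?_
  have hterm : ∀ q ∈ (S' m n ×ˢ S' m n).filter (fun q => ¬ ∑ i, (q.1 i + q.2 i) ≤ n),
      ‖(wgt η q.1 * wgt η q.2) • (mpd q.1 f ξ * mpd q.2 g ξ)‖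
        ≤ (‖mulL N‖ * Mf * Mg) * ‖η‖ ^ (n + 1) := by
    rintro ⟨a, b⟩ hq
    rw [Finset.mem_filter, Finset.mem_product] at hq
    obtain ⟨⟨ha, hb⟩, hbig⟩ := hq
    dsimp only at ha hb hbig ⊢
    have hdeg : n + 1 ≤ ∑ i, a i + ∑ i, b i := by
      rw [← Finset.sum_add_distrib]
      omega
    rw [norm_smul]
    have hw : ‖wgt η a‖ * ‖wgt η b‖ ≤ ‖η‖ ^ (n + 1) := by
      calc ‖wgt η a‖ * ‖wgt η b‖ ≤ ‖η‖ ^ (∑ i, a i) * ‖η‖ ^ (∑ i, b i) :=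
            mul_le_mul (norm_wgt_le η a) (norm_wgt_le η b) (norm_nonneg _)
              (pow_nonneg (norm_nonneg _) _)
        _ = ‖η‖ ^ (∑ i, a i + ∑ i, b i) := (pow_add _ _ _).symm
        _ ≤ ‖η‖ ^ (n + 1) := pow_le_pow_of_le_one (norm_nonneg _) hη hdeg
    have hm : ‖mpd a f ξ * mpd b g ξ‖ ≤ ‖mulL N‖ * Mf * Mg := by
      calc ‖mpd a f ξ * mpd b g ξ‖ ≤ ‖mulL N‖ * ‖mpd a f ξ‖ * ‖mpd b g ξ‖ :=
            norm_matrix_mul_le _ _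
        _ ≤ ‖mulL N‖ * Mf * Mg := by
            apply mul_le_mul
            · exact mul_le_mul_of_nonneg_left (hMf a ha) (mulL N).opNorm_nonneg
            · exact hMg b hb
            · exact norm_nonneg _
            · positivity
    calc ‖wgt η a * wgt η b‖ * ‖mpd a f ξ * mpd b g ξ‖
        ≤ ‖η‖ ^ (n + 1) * (‖mulL N‖ * Mf * Mg) := by
          rw [norm_mul]
          apply mul_le_mul hw hm (norm_nonneg _) (pow_nonneg (norm_nonneg _) _)
      _ = (‖mulL N‖ * Mf * Mg) * ‖η‖ ^ (n + 1) := mul_comm _ _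
  calc ∑ q ∈ (S' m n ×ˢ S' m n).filter (fun q => ¬ ∑ i, (q.1 i + q.2 i) ≤ n),
        ‖(wgt η q.1 * wgt η q.2) • (mpd q.1 f ξ * mpd q.2 g ξ)‖
      ≤ ∑ _q ∈ (S' m n ×ˢ S' m n).filter (fun q => ¬ ∑ i, (q.1 i + q.2 i) ≤ n),
          (‖mulL N‖ * Mf * Mg) * ‖η‖ ^ (n + 1) := Finset.sum_le_sum hterm
    _ = ((S' m n ×ˢ S' m n).filter (fun q => ¬ ∑ i, (q.1 i + q.2 i) ≤ n)).card *
          ((‖mulL N‖ * Mf * Mg) * ‖η‖ ^ (n + 1)) := by rw [Finset.sum_const, nsmul_eq_mul]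
    _ ≤ (S' m n ×ˢ S' m n).card * ((‖mulL N‖ * Mf * Mg) * ‖η‖ ^ (n + 1)) := by
        apply mul_le_mul_of_nonneg_right _ (by positivity)
        exact_mod_cast Nat.cast_le.mpr (Finset.card_filter_le _ _)
    _ = ((S' m n ×ˢ S' m n).card * (‖mulL N‖ * Mf * Mg)) * ‖η‖ ^ (n + 1) := by ring

end Key

section CextBound
variable {m : ℕ} {E : Type*} [NormedAddCommGroup E] [NormedSpace ℂ E]

lemma cext_norm_le {n : ℕ} {f : EuclideanSpace ℝ (Fin m) → E} {ξ η : EuclideanSpace ℝ (Fin m)}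
    (hη : ‖η‖ ≤ 1) {Mf : ℝ} (hMf0 : 0 ≤ Mf) (hMf : ∀ α ∈ S' m n, ‖mpd α f ξ‖ ≤ Mf) :
    ‖cext n f ξ η‖ ≤ (S' m n).card * Mf := by
  rw [cext_eq]
  refine (norm_sum_le _ _).trans ?_
  calc ∑ α ∈ S' m n, ‖wgt η α • mpd α f ξ‖ ≤ ∑ _α ∈ S' m n, Mf := by
        apply Finset.sum_le_sum
        intro α hα
        rw [norm_smul]
        calc ‖wgt η α‖ * ‖mpd α f ξ‖ ≤ 1 * Mf := by
              apply mul_le_mul _ (hMf α hα) (norm_nonneg _) zero_le_one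
              exact (norm_wgt_le η α).trans (pow_le_one₀ (norm_nonneg _) hη)
          _ = Mf := one_mul _
    _ = (S' m n).card * Mf := by rw [Finset.sum_const, nsmul_eq_mul]

lemma pd_const (c : E) (i : Fin m) : pd i (fun _ => c) = fun _ => 0 := by
  funext x
  unfold pd
  rw [fderiv_fun_const]
  rfl

lemma pdIter_const (c : E) (i : Fin m) (k : ℕ) :
    (pd i)^[k] (fun _ => c) = fun _ => if k = 0 then c else 0 := by
  induction k with
  | zero => simp
  | succ k ih =>
    rw [Function.iterate_succ_apply', ih]
    by_cases hk : k = 0 <;> simp [hk, pd_const]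

lemma pds_const (c : E) (L : List (Fin m)) (α : Fin m → ℕ) :
    pds L α (fun _ => c) = fun _ => if ∀ i ∈ L, α i = 0 then c else 0 := by
  induction L with
  | nil => simp [pds_nil]
  | cons i L ih =>
    rw [pds_cons, ih, pdIter_const]
    funext x
    simp only [List.forall_mem_cons]
    by_cases hi : α i = 0 <;> by_cases hL : ∀ j ∈ L, α j = 0 <;> simp [hi, hL]

lemma cext_const (n : ℕ) (c : E) (ξ η : EuclideanSpace ℝ (Fin m)) :
    cext n (fun _ => c) ξ η = c := by
  rw [cext_eq]
  rw [Finset.sum_eq_single (fun _ : Fin m => (0:ℕ))]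
  · have h1 : mpd (fun _ : Fin m => (0:ℕ)) (fun _ => c) = fun _ => c := by
      rw [mpd_eq_pds, pds_const]
      simp
    have h2 : wgt η (fun _ : Fin m => (0:ℕ)) = 1 := by
      simp [wgt]
    rw [h1, h2, one_smul]
  · intro α _ hα
    have h1 : mpd α (fun _ => c) = fun _ => 0 := by
      rw [mpd_eq_pds, pds_const]
      have h0 : ¬ ∀ i, α i = 0 := fun hc => hα (funext hc)
      simp [h0]
    rw [h1]
    simp
  · intro hc
    exact absurd (mem_S'.mpr ⟨fun i => Nat.zero_le n, by simp⟩) hc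

end CextBound
end CextAux

namespace CextAux
section JS
variable {m : ℕ} {E : Type*} [NormedAddCommGroup E] [NormedSpace ℝ E]
variable {K : Set (ℝ × EuclideanSpace ℝ (Fin m))} {Ω : Set (EuclideanSpace ℝ (Fin m))}

/-- joint smoothness of a parametrized family -/
def JS (K : Set (ℝ × EuclideanSpace ℝ (Fin m))) (Ω : Set (EuclideanSpace ℝ (Fin m)))
    (F : (ℝ × EuclideanSpace ℝ (Fin m)) → EuclideanSpace ℝ (Fin m) → E) : Prop :=
  ContDiffOn ℝ (⊤ : ℕ∞) (fun w : (ℝ × EuclideanSpace ℝ (Fin m)) × EuclideanSpace ℝ (Fin m) =>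
    F w.1 w.2) (K ×ˢ Ω)

variable {F G : (ℝ × EuclideanSpace ℝ (Fin m)) → EuclideanSpace ℝ (Fin m) → E}

lemma JS.slice (hF : JS K Ω F) {p} (hp : p ∈ K) : ContDiffOn ℝ (⊤ : ℕ∞) (F p) Ω := by
  have hmk : ContDiff ℝ (⊤ : ℕ∞) (fun ζ : EuclideanSpace ℝ (Fin m) =>
      ((p, ζ) : (ℝ × EuclideanSpace ℝ (Fin m)) × EuclideanSpace ℝ (Fin m))) :=
    contDiff_const.prodMk contDiff_id
  exact hF.comp hmk.contDiffOn (fun ζ hζ => Set.mk_mem_prod hp hζ)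

lemma JS.pd (hΩ : IsOpen Ω) (hF : JS K Ω F) (i : Fin m) :
    JS K Ω (fun p ζ => _root_.pd i (F p) ζ) := by
  have hG : ContDiffOn ℝ (⊤ : ℕ∞) (fun w : (ℝ × EuclideanSpace ℝ (Fin m)) × EuclideanSpace ℝ (Fin m)
      => fderivWithin ℝ (F w.1) Ω w.2) (K ×ˢ Ω) := by
    intro w₀ hw₀
    have hfmk : ContDiff ℝ (⊤ : ℕ∞) (fun v : ((ℝ × EuclideanSpace ℝ (Fin m)) ×
        EuclideanSpace ℝ (Fin m)) × EuclideanSpace ℝ (Fin m) => (v.1.1, v.2)) :=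
      (contDiff_fst.fst).prodMk contDiff_snd
    have hf : ContDiffOn ℝ (⊤ : ℕ∞) (Function.uncurry (fun w ζ => F w.1 ζ))
        ((K ×ˢ Ω) ×ˢ Ω) := by
      refine hF.comp hfmk.contDiffOn ?_
      rintro ⟨⟨w, ζ'⟩, ζ⟩ ⟨hw, hζ⟩
      exact Set.mk_mem_prod hw.1 hζ
    refine ContDiffWithinAt.fderivWithin (hf (w₀, w₀.2) (Set.mk_mem_prod hw₀ hw₀.2))
      contDiff_snd.contDiffWithinAt hΩ.uniqueDiffOn (by simp) hw₀ (fun w hw => hw.2)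
  have happ : ContDiffOn ℝ (⊤ : ℕ∞) (fun w : (ℝ × EuclideanSpace ℝ (Fin m)) ×
      EuclideanSpace ℝ (Fin m) => fderivWithin ℝ (F w.1) Ω w.2
        (EuclideanSpace.single i 1)) (K ×ˢ Ω) :=
    hG.clm_apply contDiffOn_const
  refine happ.congr ?_
  rintro ⟨p, ζ⟩ ⟨hp, hζ⟩
  show _root_.pd i (F p) ζ = _
  unfold _root_.pd
  rw [fderivWithin_of_isOpen hΩ hζ]

lemma JS.pdIter (hΩ : IsOpen Ω) (hF : JS K Ω F) (i : Fin m) (k : ℕ) :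
    JS K Ω (fun p ζ => (_root_.pd i)^[k] (F p) ζ) := by
  induction k with
  | zero => simpa using hF
  | succ k ih =>
    have := ih.pd hΩ i
    simp only [Function.iterate_succ_apply']
    exact this

lemma JS.pds (hΩ : IsOpen Ω) (hF : JS K Ω F) (L : List (Fin m)) (α : Fin m → ℕ) :
    JS K Ω (fun p ζ => CextAux.pds L α (F p) ζ) := by
  induction L with
  | nil => simpa [pds_nil] using hF
  | cons j L ih =>
    simp only [pds_cons]
    exact ih.pdIter hΩ j (α j)

lemma JS.mpd (hΩ : IsOpen Ω) (hF : JS K Ω F) (α : Fin m → ℕ) :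
    JS K Ω (fun p ζ => _root_.mpd α (F p) ζ) := by
  simpa [mpd_eq_pds] using hF.pds hΩ (List.finRange m) α

lemma JS.bound (hΩ : IsOpen Ω) (hF : JS K Ω F) {K₀ : Set (ℝ × EuclideanSpace ℝ (Fin m))}
    {Ξ : Set (EuclideanSpace ℝ (Fin m))} (hK₀ : IsCompact K₀) (hK₀K : K₀ ⊆ K)
    (hΞ : IsCompact Ξ) (hΞΩ : Ξ ⊆ Ω) (n : ℕ) :
    ∃ Mf : ℝ, 0 ≤ Mf ∧ ∀ p ∈ K₀, ∀ ξ ∈ Ξ, ∀ α ∈ S' m n, ‖_root_.mpd α (F p) ξ‖ ≤ Mf := by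
  have hC : ∀ α : Fin m → ℕ, ∃ C : ℝ, ∀ p ∈ K₀, ∀ ξ ∈ Ξ, ‖_root_.mpd α (F p) ξ‖ ≤ C := by
    intro α
    have hcont : ContinuousOn (fun w : (ℝ × EuclideanSpace ℝ (Fin m)) ×
        EuclideanSpace ℝ (Fin m) => _root_.mpd α (F w.1) w.2) (K₀ ×ˢ Ξ) :=
      ((hF.mpd hΩ α).continuousOn).mono (Set.prod_mono hK₀K hΞΩ)
    obtain ⟨C, hCb⟩ := (hK₀.prod hΞ).exists_bound_of_continuousOn hcont
    exact ⟨C, fun p hp ξ hξ => hCb (p, ξ) (Set.mk_mem_prod hp hξ)⟩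
  choose C hCb using hC
  refine ⟨∑ α ∈ S' m n, max (C α) 0, Finset.sum_nonneg (fun α _ => le_max_right _ _), ?_⟩
  intro p hp ξ hξ α hα
  calc ‖_root_.mpd α (F p) ξ‖ ≤ C α := hCb α p hp ξ hξ
    _ ≤ max (C α) 0 := le_max_left _ _
    _ ≤ ∑ β ∈ S' m n, max (C β) 0 := Finset.single_le_sum
        (f := fun β => max (C β) 0) (fun β _ => le_max_right _ _) hα

end JS
end CextAux

namespace CextAux
section CLM
variable {m : ℕ} {Ω : Set (EuclideanSpace ℝ (Fin m))}
variable {E E₂ : Type*} [NormedAddCommGroup E] [NormedSpace ℂ E]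
  [NormedAddCommGroup E₂] [NormedSpace ℂ E₂]
variable (T : E →L[ℂ] E₂) {v : EuclideanSpace ℝ (Fin m) → E}

lemma pd_clm (hΩ : IsOpen Ω) (hv : ContDiffOn ℝ (⊤ : ℕ∞) v Ω) (i : Fin m) :
    Set.EqOn (pd i (fun ζ => T (v ζ))) (fun ζ => T (pd i v ζ)) Ω := by
  intro ζ hζ
  unfold pd
  have hvd : DifferentiableAt ℝ v ζ := diffAt hΩ hv hζ
  have h := ((T.restrictScalars ℝ).hasFDerivAt (x := v ζ)).comp ζ hvd.hasFDerivAt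
  have h2 : HasFDerivAt (fun ζ => T (v ζ)) _ ζ := h
  rw [h2.fderiv]
  rfl

lemma clm_contDiffOn (hv : ContDiffOn ℝ (⊤ : ℕ∞) v Ω) :
    ContDiffOn ℝ (⊤ : ℕ∞) (fun ζ => T (v ζ)) Ω :=
  (T.restrictScalars ℝ).contDiff.comp_contDiffOn hv

lemma pdIter_clm (hΩ : IsOpen Ω) (hv : ContDiffOn ℝ (⊤ : ℕ∞) v Ω) (i : Fin m) (k : ℕ) :
    Set.EqOn ((pd i)^[k] (fun ζ => T (v ζ))) (fun ζ => T ((pd i)^[k] v ζ)) Ω := by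
  induction k with
  | zero => intro ζ _; simp
  | succ k ih =>
    intro ζ hζ
    rw [Function.iterate_succ_apply', pd_congr hΩ ih hζ,
      pd_clm T hΩ (pdIter_contDiffOn hΩ hv k) i hζ, Function.iterate_succ_apply']

lemma pds_clm (hΩ : IsOpen Ω) (hv : ContDiffOn ℝ (⊤ : ℕ∞) v Ω) (L : List (Fin m)) (α : Fin m → ℕ) :
    Set.EqOn (pds L α (fun ζ => T (v ζ))) (fun ζ => T (pds L α v ζ)) Ω := by
  induction L with
  | nil => intro ζ _; rfl
  | cons j L ih =>
    intro ζ hζ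
    rw [pds_cons, pdIter_congr hΩ ih (α j) hζ,
      pdIter_clm T hΩ (pds_contDiffOn hΩ hv L α) j (α j) hζ, pds_cons]

lemma cext_clm (hΩ : IsOpen Ω) (hv : ContDiffOn ℝ (⊤ : ℕ∞) v Ω) {ξ : EuclideanSpace ℝ (Fin m)}
    (hξ : ξ ∈ Ω) (n : ℕ) (η : EuclideanSpace ℝ (Fin m)) :
    cext n (fun ζ => T (v ζ)) ξ η = T (cext n v ξ η) := by
  rw [cext_eq, cext_eq, map_sum]
  refine Finset.sum_congr rfl fun α _ => ?_
  rw [map_smul]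
  congr 1
  rw [mpd_eq_pds, mpd_eq_pds]
  exact pds_clm T hΩ hv (List.finRange m) α hξ
end CLM

section Diag
variable {m N : ℕ} {Ω : Set (EuclideanSpace ℝ (Fin m))}

noncomputable def diagL (N : ℕ) : (Fin N → ℂ) →L[ℂ] Matrix (Fin N) (Fin N) ℂ :=
  LinearMap.toContinuousLinearMap (Matrix.diagonalLinearMap (Fin N) ℂ ℂ)

@[simp] lemma diagL_apply (v : Fin N → ℂ) : diagL N v = Matrix.diagonal v := rfl

lemma cext_diag (hΩ : IsOpen Ω) {v : EuclideanSpace ℝ (Fin m) → (Fin N → ℂ)}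
    (hv : ContDiffOn ℝ (⊤ : ℕ∞) v Ω) {ξ : EuclideanSpace ℝ (Fin m)} (hξ : ξ ∈ Ω) (n : ℕ)
    (η : EuclideanSpace ℝ (Fin m)) :
    cext n (fun ζ => Matrix.diagonal (v ζ)) ξ η
      = Matrix.diagonal (fun l => cext n (fun ζ => v ζ l) ξ η) := by
  have h1 : cext n (fun ζ => diagL N (v ζ)) ξ η = diagL N (cext n v ξ η) :=
    cext_clm (diagL N) hΩ hv hξ n η
  simp only [diagL_apply] at h1
  have h2 : (cext n v ξ η) = fun l => cext n (fun ζ => v ζ l) ξ η := by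
    funext l
    exact (cext_clm (ContinuousLinearMap.proj (R := ℂ) (φ := fun _ : Fin N => ℂ) l)
      hΩ hv hξ n η).symm
  rw [h1, h2]
end Diag

section MulJS
variable {m N : ℕ} {K : Set (ℝ × EuclideanSpace ℝ (Fin m))} {Ω : Set (EuclideanSpace ℝ (Fin m))}
variable {F G : (ℝ × EuclideanSpace ℝ (Fin m)) → EuclideanSpace ℝ (Fin m) →
  Matrix (Fin N) (Fin N) ℂ}

lemma JS.mul (hF : JS K Ω F) (hG : JS K Ω G) : JS K Ω (fun p ζ => F p ζ * G p ζ) := by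
  have hb : ContDiff ℝ (⊤ : ℕ∞) (fun q : Matrix (Fin N) (Fin N) ℂ × Matrix (Fin N) (Fin N) ℂ =>
      mulL N q.1 q.2) := (mulL N).isBoundedBilinearMap.contDiff
  exact hb.comp_contDiffOn (hF.prodMk hG)

noncomputable def starRL (N : ℕ) : Matrix (Fin N) (Fin N) ℂ →L[ℝ] Matrix (Fin N) (Fin N) ℂ :=
  LinearMap.toContinuousLinearMap (starLinearEquiv ℝ
    (A := Matrix (Fin N) (Fin N) ℂ)).toLinearMap

lemma JS.star (hF : JS K Ω F) : JS K Ω (fun p ζ => (F p ζ)ᴴ) := by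
  have : ContDiff ℝ (⊤ : ℕ∞) (fun A : Matrix (Fin N) (Fin N) ℂ => starRL N A) := (starRL N).contDiff
  have h := this.comp_contDiffOn hF
  exact h.congr (fun w _ => rfl)
end MulJS
end CextAux

open CextAux in
set_option maxHeartbeats 2000000 in
/-- **Approximate diagonalization for the extended symbol.**
If `A` is smooth Hermitian-valued, `U` smooth unitary-valued with `U A U* = diag(λ₁,…,λ_N)`
pointwise on `K × (ℝ^d \ {0})` and `V = U*`, then for every `n`, compact `K₀ ⊆ K` and
compact `Ξ ⊂ ℝ^d \ {0}` there is `C` such that `‖Ũ⁽ⁿ⁾Ṽ⁽ⁿ⁾ − I‖`, `‖Ṽ⁽ⁿ⁾Ũ⁽ⁿ⁾ − I‖` and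
`‖Ũ⁽ⁿ⁾Ã⁽ⁿ⁾Ṽ⁽ⁿ⁾ − diag(λ̃₁⁽ⁿ⁾,…,λ̃_N⁽ⁿ⁾)‖` are all `≤ C|η|^{n+1}` for `(t,x) ∈ K₀`,
`ξ ∈ Ξ`, `|η| ≤ 1`. -/
theorem stmt_8 (d N : ℕ) (K : Set (ℝ × EuclideanSpace ℝ (Fin d)))
    (A U : (ℝ × EuclideanSpace ℝ (Fin d)) → EuclideanSpace ℝ (Fin d) →
      Matrix (Fin N) (Fin N) ℂ)
    (lam : Fin N → (ℝ × EuclideanSpace ℝ (Fin d)) → EuclideanSpace ℝ (Fin d) → ℝ)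
    (hA : ContDiffOn ℝ (⊤ : ℕ∞)
      (fun w : (ℝ × EuclideanSpace ℝ (Fin d)) × EuclideanSpace ℝ (Fin d) => A w.1 w.2)
      (K ×ˢ {ξ : EuclideanSpace ℝ (Fin d) | ξ ≠ 0}))
    (hU : ContDiffOn ℝ (⊤ : ℕ∞)
      (fun w : (ℝ × EuclideanSpace ℝ (Fin d)) × EuclideanSpace ℝ (Fin d) => U w.1 w.2)
      (K ×ˢ {ξ : EuclideanSpace ℝ (Fin d) | ξ ≠ 0}))
    (hlam : ∀ l, ContDiffOn ℝ (⊤ : ℕ∞)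
      (fun w : (ℝ × EuclideanSpace ℝ (Fin d)) × EuclideanSpace ℝ (Fin d) => lam l w.1 w.2)
      (K ×ˢ {ξ : EuclideanSpace ℝ (Fin d) | ξ ≠ 0}))
    (hHerm : ∀ p ∈ K, ∀ ξ : EuclideanSpace ℝ (Fin d), ξ ≠ 0 → (A p ξ).IsHermitian)
    (hUnit : ∀ p ∈ K, ∀ ξ : EuclideanSpace ℝ (Fin d), ξ ≠ 0 →
      U p ξ ∈ Matrix.unitaryGroup (Fin N) ℂ)
    (hdiag : ∀ p ∈ K, ∀ ξ : EuclideanSpace ℝ (Fin d), ξ ≠ 0 →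
      U p ξ * A p ξ * (U p ξ)ᴴ = Matrix.diagonal (fun l => (lam l p ξ : ℂ))) :
    ∀ n : ℕ,
    ∀ K₀ : Set (ℝ × EuclideanSpace ℝ (Fin d)), IsCompact K₀ → K₀ ⊆ K →
    ∀ Ξ : Set (EuclideanSpace ℝ (Fin d)), IsCompact Ξ → Ξ ⊆ {ξ | ξ ≠ 0} →
      ∃ C : ℝ, ∀ p ∈ K₀, ∀ ξ ∈ Ξ, ∀ η : EuclideanSpace ℝ (Fin d), ‖η‖ ≤ 1 →
        ‖cext n (U p) ξ η * cext n (fun ζ => (U p ζ)ᴴ) ξ η - 1‖ ≤ C * ‖η‖ ^ (n + 1) ∧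
        ‖cext n (fun ζ => (U p ζ)ᴴ) ξ η * cext n (U p) ξ η - 1‖ ≤ C * ‖η‖ ^ (n + 1) ∧
        ‖cext n (U p) ξ η * cext n (A p) ξ η * cext n (fun ζ => (U p ζ)ᴴ) ξ η -
            Matrix.diagonal (fun l => cext n (fun ζ => (lam l p ζ : ℂ)) ξ η)‖ ≤
          C * ‖η‖ ^ (n + 1) := by
  intro n K₀ hK₀c hK₀K Ξ hΞc hΞΩ
  have hΩ : IsOpen {ξ : EuclideanSpace ℝ (Fin d) | ξ ≠ 0} := isOpen_ne
  have jU : JS K {ξ : EuclideanSpace ℝ (Fin d) | ξ ≠ 0} U := hU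
  have jA : JS K {ξ : EuclideanSpace ℝ (Fin d) | ξ ≠ 0} A := hA
  have jV : JS K {ξ : EuclideanSpace ℝ (Fin d) | ξ ≠ 0} (fun p ζ => (U p ζ)ᴴ) := jU.star
  have jUA : JS K {ξ : EuclideanSpace ℝ (Fin d) | ξ ≠ 0} (fun p ζ => U p ζ * A p ζ) := jU.mul jA
  obtain ⟨MU, hMU0, hMU⟩ := jU.bound hΩ hK₀c hK₀K hΞc hΞΩ n
  obtain ⟨MV, hMV0, hMV⟩ := jV.bound hΩ hK₀c hK₀K hΞc hΞΩ n
  obtain ⟨MA, hMA0, hMA⟩ := jA.bound hΩ hK₀c hK₀K hΞc hΞΩ n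
  obtain ⟨MW, hMW0, hMW⟩ := jUA.bound hΩ hK₀c hK₀K hΞc hΞΩ n
  have hcm : (0:ℝ) ≤ ‖mulL N‖ := (mulL N).opNorm_nonneg
  have hcS : (0:ℝ) ≤ ((S' d n ×ˢ S' d n).card : ℝ) := Nat.cast_nonneg _
  have hcs' : (0:ℝ) ≤ ((S' d n).card : ℝ) := Nat.cast_nonneg _
  refine ⟨((S' d n ×ˢ S' d n).card : ℝ) * (‖mulL N‖ * MU * MV)
      + ((S' d n ×ˢ S' d n).card : ℝ) * (‖mulL N‖ * MV * MU)
      + (‖mulL N‖ * (((S' d n ×ˢ S' d n).card : ℝ) * (‖mulL N‖ * MU * MA)) *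
          (((S' d n).card : ℝ) * MV)
        + ((S' d n ×ˢ S' d n).card : ℝ) * (‖mulL N‖ * MW * MV)), ?_⟩
  intro p hp ξ hξ η hη
  have hpK := hK₀K hp
  have hξΩ : ξ ∈ {ξ : EuclideanSpace ℝ (Fin d) | ξ ≠ 0} := hΞΩ hξ
  have hUs : ContDiffOn ℝ (⊤ : ℕ∞) (U p) {ξ : EuclideanSpace ℝ (Fin d) | ξ ≠ 0} := jU.slice hpK
  have hVs : ContDiffOn ℝ (⊤ : ℕ∞) (fun ζ => (U p ζ)ᴴ) {ξ : EuclideanSpace ℝ (Fin d) | ξ ≠ 0} := jV.slice hpK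
  have hAs : ContDiffOn ℝ (⊤ : ℕ∞) (A p) {ξ : EuclideanSpace ℝ (Fin d) | ξ ≠ 0} := jA.slice hpK
  have hWs : ContDiffOn ℝ (⊤ : ℕ∞) (fun ζ => U p ζ * A p ζ) {ξ : EuclideanSpace ℝ (Fin d) | ξ ≠ 0} := jUA.slice hpK
  have hP0 : (0:ℝ) ≤ ‖η‖ ^ (n + 1) := pow_nonneg (norm_nonneg _) _
  -- the four basic estimates
  have hfg1 : Set.EqOn (fun ζ => U p ζ * (U p ζ)ᴴ)
      (fun _ => (1 : Matrix (Fin N) (Fin N) ℂ)) {ξ : EuclideanSpace ℝ (Fin d) | ξ ≠ 0} := by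
    intro ζ hζ
    have h := (Matrix.mem_unitaryGroup_iff).mp (hUnit p hpK ζ hζ)
    simpa [Matrix.star_eq_conjTranspose] using h
  have h1 := key_est (n := n) hΩ hUs hVs hfg1 hξΩ hη hMU0 hMV0
    (hMU p hp ξ hξ) (hMV p hp ξ hξ)
  rw [cext_const] at h1
  have hfg2 : Set.EqOn (fun ζ => (U p ζ)ᴴ * U p ζ)
      (fun _ => (1 : Matrix (Fin N) (Fin N) ℂ)) {ξ : EuclideanSpace ℝ (Fin d) | ξ ≠ 0} := by
    intro ζ hζ
    have h := (Matrix.mem_unitaryGroup_iff').mp (hUnit p hpK ζ hζ)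
    simpa [Matrix.star_eq_conjTranspose] using h
  have h2 := key_est (n := n) hΩ hVs hUs hfg2 hξΩ hη hMV0 hMU0
    (hMV p hp ξ hξ) (hMU p hp ξ hξ)
  rw [cext_const] at h2
  have hfg3 : Set.EqOn (fun ζ => U p ζ * A p ζ) (fun ζ => U p ζ * A p ζ) {ξ : EuclideanSpace ℝ (Fin d) | ξ ≠ 0} := fun ζ _ => rfl
  have h3 := key_est (n := n) hΩ hUs hAs hfg3 hξΩ hη hMU0 hMA0
    (hMU p hp ξ hξ) (hMA p hp ξ hξ)
  have hfg4 : Set.EqOn (fun ζ => (U p ζ * A p ζ) * (U p ζ)ᴴ)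
      (fun ζ => Matrix.diagonal (fun l => (lam l p ζ : ℂ))) {ξ : EuclideanSpace ℝ (Fin d) | ξ ≠ 0} := fun ζ hζ =>
    hdiag p hpK ζ hζ
  have h4 := key_est (n := n) hΩ hWs hVs hfg4 hξΩ hη hMW0 hMV0
    (hMW p hp ξ hξ) (hMV p hp ξ hξ)
  have hVb : ‖cext n (fun ζ => (U p ζ)ᴴ) ξ η‖ ≤ ((S' d n).card : ℝ) * MV :=
    cext_norm_le hη hMV0 (hMV p hp ξ hξ)
  -- diagonal rewriting
  have hvsm : ContDiffOn ℝ (⊤ : ℕ∞) (fun ζ => fun l : Fin N => (lam l p ζ : ℂ)) {ξ : EuclideanSpace ℝ (Fin d) | ξ ≠ 0} := by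
    apply contDiffOn_pi.mpr
    intro l
    have hsl : ContDiffOn ℝ (⊤ : ℕ∞) (fun ζ => lam l p ζ) {ξ : EuclideanSpace ℝ (Fin d) | ξ ≠ 0} := JS.slice (hlam l) hpK
    exact Complex.ofRealCLM.contDiff.comp_contDiffOn hsl
  have hD : cext n (fun ζ => Matrix.diagonal (fun l => (lam l p ζ : ℂ))) ξ η
      = Matrix.diagonal (fun l => cext n (fun ζ => (lam l p ζ : ℂ)) ξ η) :=
    cext_diag hΩ hvsm hξΩ n η
  -- nonnegativity facts for linarith
  have hq1 : (0:ℝ) ≤ ((S' d n ×ˢ S' d n).card : ℝ) * (‖mulL N‖ * MU * MV) * ‖η‖ ^ (n+1) :=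
    mul_nonneg (mul_nonneg hcS (mul_nonneg (mul_nonneg hcm hMU0) hMV0)) hP0
  have hq2 : (0:ℝ) ≤ ((S' d n ×ˢ S' d n).card : ℝ) * (‖mulL N‖ * MV * MU) * ‖η‖ ^ (n+1) :=
    mul_nonneg (mul_nonneg hcS (mul_nonneg (mul_nonneg hcm hMV0) hMU0)) hP0
  have hq3 : (0:ℝ) ≤ ‖mulL N‖ * (((S' d n ×ˢ S' d n).card : ℝ) * (‖mulL N‖ * MU * MA)) *
      (((S' d n).card : ℝ) * MV) * ‖η‖ ^ (n+1) :=
    mul_nonneg (mul_nonneg (mul_nonneg hcm (mul_nonneg hcS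
      (mul_nonneg (mul_nonneg hcm hMU0) hMA0)))
      (mul_nonneg hcs' hMV0)) hP0
  have hq4 : (0:ℝ) ≤ ((S' d n ×ˢ S' d n).card : ℝ) * (‖mulL N‖ * MW * MV) * ‖η‖ ^ (n+1) :=
    mul_nonneg (mul_nonneg hcS (mul_nonneg (mul_nonneg hcm hMW0) hMV0)) hP0
  refine ⟨?_, ?_, ?_⟩
  · nlinarith [h1]
  · nlinarith [h2]
  · rw [← hD]
    have hsplit : cext n (U p) ξ η * cext n (A p) ξ η * cext n (fun ζ => (U p ζ)ᴴ) ξ η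
          - cext n (fun ζ => Matrix.diagonal (fun l => (lam l p ζ : ℂ))) ξ η
        = (cext n (U p) ξ η * cext n (A p) ξ η - cext n (fun ζ => U p ζ * A p ζ) ξ η) *
              cext n (fun ζ => (U p ζ)ᴴ) ξ η
          + (cext n (fun ζ => U p ζ * A p ζ) ξ η * cext n (fun ζ => (U p ζ)ᴴ) ξ η
              - cext n (fun ζ => Matrix.diagonal (fun l => (lam l p ζ : ℂ))) ξ η) := by
      rw [sub_mul]
      abel
    rw [hsplit]
    have e0 := norm_add_le
      ((cext n (U p) ξ η * cext n (A p) ξ η - cext n (fun ζ => U p ζ * A p ζ) ξ η) *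
        cext n (fun ζ => (U p ζ)ᴴ) ξ η)
      ((cext n (fun ζ => U p ζ * A p ζ) ξ η * cext n (fun ζ => (U p ζ)ᴴ) ξ η
        - cext n (fun ζ => Matrix.diagonal (fun l => (lam l p ζ : ℂ))) ξ η))
    have e1 := norm_matrix_mul_le
      (cext n (U p) ξ η * cext n (A p) ξ η - cext n (fun ζ => U p ζ * A p ζ) ξ η)
      (cext n (fun ζ => (U p ζ)ᴴ) ξ η)
    have e2 : ‖mulL N‖ *
          ‖cext n (U p) ξ η * cext n (A p) ξ η - cext n (fun ζ => U p ζ * A p ζ) ξ η‖ *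
          ‖cext n (fun ζ => (U p ζ)ᴴ) ξ η‖
        ≤ ‖mulL N‖ * (((S' d n ×ˢ S' d n).card : ℝ) * (‖mulL N‖ * MU * MA) * ‖η‖ ^ (n+1)) *
            (((S' d n).card : ℝ) * MV) := by
      apply mul_le_mul (mul_le_mul_of_nonneg_left h3 hcm) hVb (norm_nonneg _)
        (mul_nonneg hcm (mul_nonneg (mul_nonneg hcS (mul_nonneg (mul_nonneg hcm hMU0) hMA0)) hP0))
    nlinarith [e0, e1, e2, h4]
end

section
/- Let δ > 0, t₀ > 0, let f : [0,∞) → ℝ be continuous, and suppose χ : [0,t₀] → [0,∞) is of class C¹ with χ(0) = 0 and with the property that for every t ∈ [0,t₀], if χ(t) ≤ δ then χ'(t) ≤ f(χ(t)) χ(t). Then χ(t) = 0 for all t ∈ [0,t₀]. -/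
/-- **A Gronwall-type lemma.**
Let `δ > 0`, `t₀ > 0`, `f : [0,∞) → ℝ` continuous, and let `χ : [0,t₀] → [0,∞)` be `C¹`
(with derivative `χ'`) such that `χ(0) = 0` and, whenever `χ(t) ≤ δ`,
`χ'(t) ≤ f(χ(t)) χ(t)`.  Then `χ ≡ 0` on `[0,t₀]`. -/
theorem stmt_11 (δ t₀ : ℝ) (hδ : 0 < δ) (ht₀ : 0 < t₀)
    (f : ℝ → ℝ) (hf : ContinuousOn f (Set.Ici 0))
    (χ χ' : ℝ → ℝ)
    (hχnonneg : ∀ t ∈ Set.Icc 0 t₀, 0 ≤ χ t)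
    (hχderiv : ∀ t ∈ Set.Icc 0 t₀, HasDerivWithinAt χ (χ' t) (Set.Icc 0 t₀) t)
    (hχ'cont : ContinuousOn χ' (Set.Icc 0 t₀))
    (hχ0 : χ 0 = 0)
    (hineq : ∀ t ∈ Set.Icc 0 t₀, χ t ≤ δ → χ' t ≤ f (χ t) * χ t) :
    ∀ t ∈ Set.Icc 0 t₀, χ t = 0 := by
  have hχcont : ContinuousOn χ (Set.Icc 0 t₀) :=
    fun t ht => (hχderiv t ht).continuousWithinAt
  -- bound for f on [0, δ]
  obtain ⟨K, hK⟩ := (isCompact_Icc (a := (0:ℝ)) (b := δ)).exists_bound_of_continuousOn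
    (hf.mono (by intro x hx; exact hx.1))
  -- key Gronwall step
  have zero_on : ∀ T, T ∈ Set.Icc 0 t₀ → (∀ s ∈ Set.Icc 0 T, χ s ≤ δ) →
      ∀ s ∈ Set.Icc 0 T, χ s = 0 := by
    intro T hT hle s hs
    have hsub : Set.Icc (0:ℝ) T ⊆ Set.Icc 0 t₀ := Set.Icc_subset_Icc le_rfl hT.2
    set g : ℝ → ℝ := fun t => χ t * Real.exp (-K * t) with hg
    have hgderiv : ∀ t ∈ Set.Ioo (0:ℝ) T,
        HasDerivAt g (χ' t * Real.exp (-K * t) + χ t * (Real.exp (-K * t) * (-K * 1))) t := by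
      intro t ht
      have ht' : t ∈ Set.Icc 0 t₀ := hsub (Set.Ioo_subset_Icc_self ht)
      have hmem : Set.Icc 0 t₀ ∈ nhds t := by
        apply Icc_mem_nhds
        · linarith [ht.1]
        · linarith [ht.2, hT.2]
      exact ((hχderiv t ht').hasDerivAt hmem).mul (((hasDerivAt_id t).const_mul (-K)).exp)
    have hganti : AntitoneOn g (Set.Icc 0 T) := by
      apply antitoneOn_of_deriv_nonpos (convex_Icc 0 T)
      · exact (hχcont.mono hsub).mul (Real.continuous_exp.comp
          (continuous_const.mul continuous_id)).continuousOn
      · rw [interior_Icc]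
        exact fun t ht => (hgderiv t ht).differentiableAt.differentiableWithinAt
      · rw [interior_Icc]
        intro t ht
        rw [(hgderiv t ht).deriv]
        have ht' : t ∈ Set.Icc 0 t₀ := hsub (Set.Ioo_subset_Icc_self ht)
        have hχt : χ t ∈ Set.Icc 0 δ := ⟨hχnonneg t ht', hle t (Set.Ioo_subset_Icc_self ht)⟩
        have h1 : χ' t ≤ f (χ t) * χ t := hineq t ht' hχt.2
        have h2 : f (χ t) ≤ K := le_trans (le_abs_self _) (hK _ hχt)
        have h3 : f (χ t) * χ t ≤ K * χ t := mul_le_mul_of_nonneg_right h2 hχt.1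
        have hexp : (0:ℝ) < Real.exp (-K * t) := Real.exp_pos _
        nlinarith
    have h0 : (0:ℝ) ∈ Set.Icc 0 T := Set.left_mem_Icc.mpr (hs.1.trans hs.2)
    have hgs : g s ≤ g 0 := hganti h0 hs hs.1
    have : g 0 = 0 := by simp [hg, hχ0]
    have hgs0 : χ s * Real.exp (-K * s) ≤ 0 := by rw [this] at hgs; exact hgs
    have hexp : (0:ℝ) < Real.exp (-K * s) := Real.exp_pos _
    have hsn : 0 ≤ χ s := hχnonneg s (hsub hs)
    nlinarith
  -- the set where χ stays ≤ δ
  set A : Set ℝ := {t ∈ Set.Icc 0 t₀ | ∀ s ∈ Set.Icc 0 t, χ s ≤ δ} with hA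
  have h0A : (0:ℝ) ∈ A := by
    refine ⟨Set.left_mem_Icc.mpr ht₀.le, fun s hs => ?_⟩
    have : s = 0 := le_antisymm hs.2 hs.1
    rw [this, hχ0]; exact hδ.le
  have hAne : A.Nonempty := ⟨0, h0A⟩
  have hAbdd : BddAbove A := ⟨t₀, fun x hx => hx.1.2⟩
  set T := sSup A with hT
  have hT0 : 0 ≤ T := le_csSup hAbdd h0A
  have hTt₀ : T ≤ t₀ := csSup_le hAne fun x hx => hx.1.2
  have hTIcc : T ∈ Set.Icc 0 t₀ := ⟨hT0, hTt₀⟩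
  -- χ ≤ δ on [0, T]
  have hTle : ∀ s ∈ Set.Icc 0 T, χ s ≤ δ := by
    intro s hs
    rcases lt_or_eq_of_le hs.2 with h | h
    · obtain ⟨x, hxA, hsx⟩ := exists_lt_of_lt_csSup hAne h
      exact hxA.2 s ⟨hs.1, hsx.le⟩
    · -- s = T; take limit from the left, or T = 0
      rw [h]
      rcases eq_or_lt_of_le hT0 with h0 | h0
      · rw [← h0, hχ0]; exact hδ.le
      · have hlt : ∀ x ∈ Set.Ico 0 T, χ x ≤ δ := by
          intro x hx
          obtain ⟨y, hyA, hxy⟩ := exists_lt_of_lt_csSup hAne hx.2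
          exact hyA.2 x ⟨hx.1, hxy.le⟩
        have hcw : ContinuousWithinAt χ (Set.Ico 0 T) T :=
          (hχcont T hTIcc).mono ((Set.Ico_subset_Icc_self).trans (Set.Icc_subset_Icc le_rfl hTt₀))
        have hne : (nhdsWithin T (Set.Ico 0 T)).NeBot := by
          apply mem_closure_iff_nhdsWithin_neBot.mp
          rw [closure_Ico (by linarith : (0:ℝ) ≠ T)]
          exact ⟨hT0, le_rfl⟩
        exact le_of_tendsto hcw (eventually_mem_nhdsWithin.mono (fun x hx => hlt x hx))
  -- hence χ = 0 on [0, T]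
  have hzeroT : ∀ s ∈ Set.Icc 0 T, χ s = 0 := zero_on T hTIcc hTle
  -- T = t₀
  have hTeq : T = t₀ := by
    by_contra hne
    have hTlt : T < t₀ := lt_of_le_of_ne hTt₀ hne
    have hχT : χ T = 0 := hzeroT T ⟨hT0, le_rfl⟩
    -- continuity: χ < δ near T
    have hcw : ContinuousWithinAt χ (Set.Icc 0 t₀) T := hχcont T hTIcc
    have : ∀ᶠ x in nhdsWithin T (Set.Icc 0 t₀), χ x < δ := by
      apply hcw.eventually_lt_const
      rw [hχT]; exact hδ
    obtain ⟨ε, hε, hball⟩ := Metric.mem_nhdsWithin_iff.mp this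
    set t' := min (T + ε / 2) t₀ with ht'
    have ht'T : T < t' := lt_min (by linarith) hTlt
    have ht'A : t' ∈ A := by
      constructor
      · exact ⟨by linarith [min_le_left (T + ε/2) t₀, hT0], min_le_right _ _⟩
      · intro s hs
        rcases le_or_gt s T with h | h
        · rw [hzeroT s ⟨hs.1, h⟩]; exact hδ.le
        · have hst₀ : s ∈ Set.Icc 0 t₀ := ⟨hs.1, hs.2.trans (min_le_right _ _)⟩
          have hdist : dist s T < ε := by
            rw [Real.dist_eq, abs_lt]
            constructor
            · linarith
            · have hsle : s ≤ T + ε / 2 := le_trans hs.2 (min_le_left _ _)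
              linarith
          exact (hball ⟨hdist, hst₀⟩).le
    have := le_csSup hAbdd ht'A
    linarith
  intro t ht
  exact hzeroT t ⟨ht.1, ht.2.trans_eq hTeq.symm⟩
end
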